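/- arXiv:1701.06050 — 12 statements merged into one kernel-verified Lean document; each statement's English description precedes it below -/
import Mathlib

section
/- For every integer ℓ ≥ 6, the Ramsey number R(F_ℓ, K_6) is at least 10ℓ + 1; specifically, the graph consisting of 5 disjoint copies of K_{2ℓ} contains no F_ℓ and its complement contains no K_6. -/
/-- `F` is contained in `G` as a subgraph: an injective graph homomorphism exists. -/
def Contains {α : Type} {β : Type} (F : SimpleGraph α) (G : SimpleGraph β) : Prop :=
  ∃ f : α → β, Function.Injective f ∧ ∀ a b, F.Adj a b → G.Adj (f a) (f b)

/-- The fan graph `F_ℓ`: the join of `K_1` (the vertex `none`) and `ℓ K_2`. -/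
def fan (ℓ : ℕ) : SimpleGraph (Option (Fin ℓ × Fin 2)) :=
  SimpleGraph.fromRel (fun x y =>
    x = none ∨ y = none ∨ ∃ i a b, x = some (i, a) ∧ y = some (i, b))

/-- The matching `ℓ K_2`: `ℓ` disjoint edges. -/
def matchingGraph (ℓ : ℕ) : SimpleGraph (Fin ℓ × Fin 2) :=
  SimpleGraph.fromRel (fun x y => x.1 = y.1)

/-- Five disjoint copies of `K_{2ℓ}`. -/
def fiveCliques (ℓ : ℕ) : SimpleGraph (Fin 5 × Fin (2 * ℓ)) :=
  SimpleGraph.fromRel (fun x y => x.1 = y.1)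

theorem fan_K6_ramsey_lower (ℓ : ℕ) (hℓ : 6 ≤ ℓ) :
    ¬ Contains (fan ℓ) (fiveCliques ℓ) ∧
    ¬ Contains (⊤ : SimpleGraph (Fin 6)) (fiveCliques ℓ)ᶜ ∧
    ∀ r : ℕ,
      (∀ (V : Type) [Fintype V], Fintype.card V = r →
        ∀ G : SimpleGraph V,
          Contains (fan ℓ) G ∨ Contains (⊤ : SimpleGraph (Fin 6)) Gᶜ) →
      10 * ℓ + 1 ≤ r := by
  have h1 : ¬ Contains (fan ℓ) (fiveCliques ℓ) := by
    rintro ⟨f, hinj, hhom⟩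
    have key : ∀ v, (f v).1 = (f none).1 := by
      intro v
      match v with
      | none => rfl
      | some p =>
        have hadj : (fan ℓ).Adj none (some p) := by
          simp [fan, SimpleGraph.fromRel_adj]
        have h2 := hhom _ _ hadj
        rw [fiveCliques, SimpleGraph.fromRel_adj] at h2
        exact h2.2.elim Eq.symm id
    have hg : Function.Injective (fun v => (f v).2) := by
      intro u v h
      apply hinj
      exact Prod.ext ((key u).trans (key v).symm) h
    have := Fintype.card_le_of_injective _ hg
    simp at this
    omega
  have h2 : ¬ Contains (⊤ : SimpleGraph (Fin 6)) (fiveCliques ℓ)ᶜ := by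
    rintro ⟨f, hinj, hhom⟩
    have hg : Function.Injective (fun a => (f a).1) := by
      intro a b h
      by_contra hab
      have hadj : (⊤ : SimpleGraph (Fin 6)).Adj a b := by simp [hab]
      have h3 := hhom _ _ hadj
      rw [SimpleGraph.compl_adj] at h3
      exact h3.2 (by rw [fiveCliques, SimpleGraph.fromRel_adj]; exact ⟨h3.1, Or.inl h⟩)
    have := Fintype.card_le_of_injective _ hg
    simp at this
  refine ⟨h1, h2, ?_⟩
  intro r hr
  by_contra hlt
  push_neg at hlt
  have hcard : Fintype.card (Fin r) ≤ Fintype.card (Fin 5 × Fin (2 * ℓ)) := by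
    simp; omega
  obtain ⟨e⟩ := Function.Embedding.nonempty_of_card_le hcard
  rcases hr (Fin r) (by simp) (SimpleGraph.comap e (fiveCliques ℓ)) with ⟨g, ginj, ghom⟩ | ⟨g, ginj, ghom⟩
  · exact h1 ⟨e ∘ g, e.injective.comp ginj, fun a b hab => ghom a b hab⟩
  · refine h2 ⟨e ∘ g, e.injective.comp ginj, fun a b hab => ?_⟩
    have h3 := ghom a b hab
    rw [SimpleGraph.compl_adj] at h3 ⊢
    exact ⟨fun h => h3.1 (e.injective h), h3.2⟩
end

section
/- The graph G = 5·K_{2ℓ} (disjoint union of five complete graphs of order 2ℓ), with ℓ ≥ 6, contains no copy of the fan F_ℓ, and its complement contains no K_6. -/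
theorem fiveCliques_no_fan_no_K6 (ℓ : ℕ) (hℓ : 6 ≤ ℓ) :
    ¬ Contains (fan ℓ) (fiveCliques ℓ) ∧
    ¬ Contains (⊤ : SimpleGraph (Fin 6)) (fiveCliques ℓ)ᶜ := by
  constructor
  · rintro ⟨f, hinj, hadj⟩
    have hc : ∀ x : Option (Fin ℓ × Fin 2), (f x).1 = (f none).1 := by
      rintro (_ | v)
      · rfl
      · have h := hadj none (some v) (by simp [fan, SimpleGraph.fromRel_adj])
        rw [fiveCliques, SimpleGraph.fromRel_adj] at h
        rcases h.2 with h | h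
        · exact h.symm
        · exact h
    have hg : Function.Injective (fun x : Option (Fin ℓ × Fin 2) => (f x).2) := by
      intro x y hxy
      apply hinj
      exact Prod.ext ((hc x).trans (hc y).symm) hxy
    have := Fintype.card_le_of_injective _ hg
    simp [Fintype.card_option] at this
    omega
  · rintro ⟨f, hinj, hadj⟩
    have hg : Function.Injective (fun i : Fin 6 => (f i).1) := by
      intro i j hij
      by_contra hne
      have h := hadj i j (by simp [SimpleGraph.top_adj, hne])
      rw [SimpleGraph.compl_adj, fiveCliques, SimpleGraph.fromRel_adj] at h
      exact h.2 ⟨h.1, Or.inl hij⟩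
    have := Fintype.card_le_of_injective _ hg
    simp at this
end

section
/- For every integer ℓ ≥ 1, the Ramsey number R(ℓK_2, K_6) equals 2ℓ + 4; that is, every graph on 2ℓ+4 vertices with independence number at most 5 contains ℓ disjoint edges, and 2ℓ+3 vertices do not suffice. -/
lemma edge_of_no_K6 {V : Type} (G : SimpleGraph V)
    (h : ¬ Contains (⊤ : SimpleGraph (Fin 6)) Gᶜ) :
    ∀ t : Finset V, 6 ≤ t.card → ∃ a ∈ t, ∃ b ∈ t, G.Adj a b := by
  intro t ht
  by_contra hc
  push_neg at hc
  apply h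
  obtain ⟨u, hu, hcard⟩ := Finset.exists_subset_card_eq ht
  refine ⟨fun i => (u.equivFin.symm (Fin.cast hcard.symm i) : V), ?_, ?_⟩
  · intro i j hij
    have := u.equivFin.symm.injective (Subtype.ext hij)
    exact Fin.cast_injective _ this
  · intro a b hab
    have ha : ((u.equivFin.symm (Fin.cast hcard.symm a) : V)) ∈ t :=
      hu (u.equivFin.symm (Fin.cast hcard.symm a)).2
    have hb : ((u.equivFin.symm (Fin.cast hcard.symm b) : V)) ∈ t :=
      hu (u.equivFin.symm (Fin.cast hcard.symm b)).2
    rw [SimpleGraph.compl_adj]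
    constructor
    · intro heq
      exact (SimpleGraph.top_adj a b).mp hab
        (Fin.cast_injective _ (u.equivFin.symm.injective (Subtype.ext heq)))
    · exact hc _ ha _ hb

lemma matching_aux {V : Type} [DecidableEq V] (G : SimpleGraph V)
    (H : ∀ t : Finset V, 6 ≤ t.card → ∃ a ∈ t, ∃ b ∈ t, G.Adj a b) :
    ∀ ℓ : ℕ, ∀ s : Finset V, 2 * ℓ + 4 ≤ s.card →
      ∃ g : Fin ℓ × Fin 2 → V, Function.Injective g ∧ (∀ x, g x ∈ s) ∧
        ∀ i : Fin ℓ, G.Adj (g (i, 0)) (g (i, 1)) := by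
  intro ℓ
  induction ℓ with
  | zero =>
    intro s _
    exact ⟨fun x => x.1.elim0, fun x => x.1.elim0, fun x => x.1.elim0, fun i => i.elim0⟩
  | succ n ih =>
    intro s hs
    obtain ⟨a, ha, b, hb, hab⟩ := H s (by omega)
    have hne : a ≠ b := G.ne_of_adj hab
    set s' := (s.erase a).erase b with hs'
    have hbs : b ∈ s.erase a := Finset.mem_erase.mpr ⟨hne.symm, hb⟩
    have hcard : 2 * n + 4 ≤ s'.card := by
      have h1 : (s.erase a).card = s.card - 1 := Finset.card_erase_of_mem ha
      have h2 : s'.card = (s.erase a).card - 1 := Finset.card_erase_of_mem hbs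
      omega
    obtain ⟨g', hinj', hmem', hadj'⟩ := ih s' hcard
    have has' : a ∉ s' := fun h => (Finset.mem_erase.mp (Finset.mem_of_mem_erase h)).1 rfl
    have hbs' : b ∉ s' := fun h => (Finset.mem_erase.mp h).1 rfl
    have hsub : s' ⊆ s := (Finset.erase_subset _ _).trans (Finset.erase_subset _ _)
    refine ⟨fun x => if h : x.1.val < n then g' (⟨x.1.val, h⟩, x.2)
      else (if x.2 = 0 then a else b), ?_, ?_, ?_⟩
    · rintro ⟨i, c⟩ ⟨j, d⟩ h
      have h' : (if h : i.val < n then g' (⟨i.val, h⟩, c) else if c = 0 then a else b)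
          = (if h : j.val < n then g' (⟨j.val, h⟩, d) else if d = 0 then a else b) := h
      clear h
      by_cases hi : i.val < n <;> by_cases hj : j.val < n
      · rw [dif_pos hi, dif_pos hj] at h'
        have h2 := Prod.ext_iff.mp (hinj' h')
        have h3 : (⟨i.val, hi⟩ : Fin n) = ⟨j.val, hj⟩ := h2.1
        have h4 : i.val = j.val := by simpa using h3
        exact Prod.ext (Fin.ext h4) h2.2
      · rw [dif_pos hi, dif_neg hj] at h'
        exfalso
        have := hmem' (⟨i.val, hi⟩, c)
        rw [h'] at this
        split_ifs at this
        · exact has' this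
        · exact hbs' this
      · rw [dif_neg hi, dif_pos hj] at h'
        exfalso
        have := hmem' (⟨j.val, hj⟩, d)
        rw [← h'] at this
        split_ifs at this
        · exact has' this
        · exact hbs' this
      · rw [dif_neg hi, dif_neg hj] at h'
        have hij : i = j := by
          have := i.isLt; have := j.isLt; exact Fin.ext (by omega)
        have hcd : c = d := by
          by_cases hc0 : c = 0 <;> by_cases hd0 : d = 0
          · rw [hc0, hd0]
          · rw [if_pos hc0, if_neg hd0] at h'; exact absurd h' hne
          · rw [if_neg hc0, if_pos hd0] at h'; exact absurd h'.symm hne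
          · have := c.isLt; have := d.isLt
            have hc1 : c.val ≠ 0 := fun h => hc0 (Fin.ext h)
            have hd1 : d.val ≠ 0 := fun h => hd0 (Fin.ext h)
            exact Fin.ext (by omega)
        rw [hij, hcd]
    · rintro ⟨i, c⟩
      show (if h : i.val < n then g' (⟨i.val, h⟩, c) else if c = 0 then a else b) ∈ s
      by_cases hi : i.val < n
      · rw [dif_pos hi]; exact hsub (hmem' _)
      · rw [dif_neg hi]; split_ifs
        · exact ha
        · exact hb
    · intro i
      show G.Adj (if h : i.val < n then g' (⟨i.val, h⟩, 0) else if (0 : Fin 2) = 0 then a else b)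
        (if h : i.val < n then g' (⟨i.val, h⟩, 1) else if (1 : Fin 2) = 0 then a else b)
      by_cases hi : i.val < n
      · rw [dif_pos hi, dif_pos hi]; exact hadj' _
      · rw [dif_neg hi, dif_neg hi, if_pos rfl, if_neg (by decide : (1 : Fin 2) ≠ 0)]
        exact hab

theorem ramsey_matching_K6 (ℓ : ℕ) (hℓ : 1 ≤ ℓ) :
    (∀ (V : Type) [Fintype V], Fintype.card V = 2 * ℓ + 4 →
      ∀ G : SimpleGraph V,
        Contains (matchingGraph ℓ) G ∨ Contains (⊤ : SimpleGraph (Fin 6)) Gᶜ) ∧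
    ¬ (∀ (V : Type) [Fintype V], Fintype.card V = 2 * ℓ + 3 →
      ∀ G : SimpleGraph V,
        Contains (matchingGraph ℓ) G ∨ Contains (⊤ : SimpleGraph (Fin 6)) Gᶜ) := by
  constructor
  · intro V _ hcard G
    classical
    by_cases hK : Contains (⊤ : SimpleGraph (Fin 6)) Gᶜ
    · exact Or.inr hK
    · left
      obtain ⟨g, hinj, hmem, hadj⟩ := matching_aux G (edge_of_no_K6 G hK) ℓ Finset.univ
        (by rw [Finset.card_univ, hcard])
      refine ⟨g, hinj, ?_⟩
      rintro ⟨i, c⟩ ⟨j, d⟩ h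
      rw [matchingGraph, SimpleGraph.fromRel_adj] at h
      obtain ⟨hne, hor⟩ := h
      have hij : i = j := by
        rcases hor with h | h
        · exact h
        · exact h.symm
      subst hij
      have hcd : c ≠ d := fun h => hne (by rw [h])
      fin_cases c <;> fin_cases d
      · exact absurd rfl hcd
      · exact hadj i
      · exact (hadj i).symm
      · exact absurd rfl hcd
  · intro hfalse
    set G : SimpleGraph (Fin (2 * ℓ + 3)) :=
      SimpleGraph.fromRel (fun x y => x.val + 1 < 2 * ℓ ∧ y.val + 1 < 2 * ℓ) with hG
    have h2 := hfalse (Fin (2 * ℓ + 3)) (by simp) G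
    rcases h2 with ⟨f, hinj, hadj⟩ | ⟨f, hinj, hadj⟩
    · -- matching in G: impossible, all matched vertices lie in a clique of size 2ℓ-1
      have hsmall : ∀ x : Fin ℓ × Fin 2, (f x).val + 1 < 2 * ℓ := by
        intro x
        set y : Fin ℓ × Fin 2 := (x.1, if x.2 = 0 then 1 else 0) with hy
        have hxy : (matchingGraph ℓ).Adj x y := by
          rw [matchingGraph, SimpleGraph.fromRel_adj]
          constructor
          · intro h
            have h2 : x.2 = (if x.2 = 0 then (1 : Fin 2) else 0) := congrArg Prod.snd h
            split_ifs at h2 with hx0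
            · rw [hx0] at h2; exact absurd h2.symm (by decide)
            · exact hx0 h2
          · exact Or.inl rfl
        have := hadj _ _ hxy
        rw [hG, SimpleGraph.fromRel_adj] at this
        rcases this.2 with h | h
        · exact h.1
        · exact h.2
      have hinj2 : Function.Injective (fun x : Fin ℓ × Fin 2 =>
          (⟨(f x).val, by have := hsmall x; omega⟩ : Fin (2 * ℓ - 1))) := by
        intro x y h
        have hv : (f x).val = (f y).val := by simpa [Fin.ext_iff] using h
        exact hinj (Fin.ext hv)
      have := Fintype.card_le_of_injective _ hinj2
      simp [Fintype.card_prod] at this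
      omega
    · -- K6 in complement: impossible
      have key : ∀ a b : Fin 6, a ≠ b →
          ¬((f a).val + 1 < 2 * ℓ ∧ (f b).val + 1 < 2 * ℓ) := by
        intro a b hne hlt
        have := hadj a b ((SimpleGraph.top_adj a b).mpr hne)
        rw [SimpleGraph.compl_adj, hG, SimpleGraph.fromRel_adj] at this
        exact this.2 ⟨this.1, Or.inl hlt⟩
      have hScompl : (Finset.univ.filter (fun a : Fin 6 => ¬ (2 * ℓ ≤ (f a).val + 1))).card ≤ 1 := by
        apply Finset.card_le_one.mpr
        intro a ha b hb
        simp only [Finset.mem_filter] at ha hb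
        by_contra hab
        exact key a b hab ⟨by omega, by omega⟩
      have hStotal := Finset.card_filter_add_card_filter_not
        (s := Finset.univ) (p := fun a : Fin 6 => 2 * ℓ ≤ (f a).val + 1)
      have hS5 : 5 ≤ (Finset.univ.filter (fun a : Fin 6 => 2 * ℓ ≤ (f a).val + 1)).card := by
        have : (Finset.univ : Finset (Fin 6)).card = 6 := by simp
        omega
      have hS4 : (Finset.univ.filter (fun a : Fin 6 => 2 * ℓ ≤ (f a).val + 1)).card ≤ 4 := by
        have := Finset.card_le_card_of_injOn
          (f := fun a => (⟨(f a).val + 1 - 2 * ℓ, by have := (f a).isLt; omega⟩ : Fin 4))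
          (s := Finset.univ.filter (fun a : Fin 6 => 2 * ℓ ≤ (f a).val + 1)) (t := Finset.univ) (fun a _ => Finset.mem_univ _) ?_
        · simpa using this
        · intro a ha b hb h
          simp only [Finset.coe_filter, Set.mem_setOf_eq] at ha hb
          have hval : (f a).val + 1 - 2 * ℓ = (f b).val + 1 - 2 * ℓ := by
            simpa [Fin.ext_iff] using h
          have : (f a) = (f b) := Fin.ext (by omega)
          exact hinj this
      exact absurd (le_trans hS5 hS4) (by norm_num)
end

section
/- Let ℓ ≥ 6 and let G be a graph on 10ℓ+1 vertices containing no F_ℓ and whose complement contains no K_6, and assume R(F_ℓ,K_5) = 8ℓ+1. Then every vertex of G has degree at least 2ℓ and at most 2ℓ+3. -/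
lemma contains_of_comap {α V : Type} {t : Finset V} (F : SimpleGraph α) (G : SimpleGraph V)
    (h : Contains F (G.comap (Subtype.val : ↥t → V))) : Contains F G := by
  obtain ⟨f, hinj, hadj⟩ := h
  exact ⟨fun a => ↑(f a), Subtype.val_injective.comp hinj, fun a b hab => hadj a b hab⟩

theorem degree_bounds {V : Type} [Fintype V] (ℓ : ℕ) (hℓ : 6 ≤ ℓ)
    (G : SimpleGraph V) [DecidableRel G.Adj]
    (hcard : Fintype.card V = 10 * ℓ + 1)
    (hF : ¬ Contains (fan ℓ) G)
    (hK6 : ¬ Contains (⊤ : SimpleGraph (Fin 6)) Gᶜ)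
    (hCZ : ∀ (W : Type) [Fintype W], Fintype.card W = 8 * ℓ + 1 →
      ∀ H : SimpleGraph W,
        Contains (fan ℓ) H ∨ Contains (⊤ : SimpleGraph (Fin 5)) Hᶜ)
    (hStahl : ∀ (W : Type) [Fintype W], Fintype.card W = 2 * ℓ + 4 →
      ∀ H : SimpleGraph W,
        Contains (matchingGraph ℓ) H ∨ Contains (⊤ : SimpleGraph (Fin 6)) Hᶜ) :
    ∀ v : V, 2 * ℓ ≤ G.degree v ∧ G.degree v ≤ 2 * ℓ + 3 := by
  classical
  intro v
  constructor
  · -- lower bound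
    by_contra hlt
    push_neg at hlt
    set s : Finset V := Finset.univ \ insert v (G.neighborFinset v) with hs
    have hscard : 8 * ℓ + 1 ≤ s.card := by
      have h1 : (insert v (G.neighborFinset v)).card = G.degree v + 1 := by
        rw [Finset.card_insert_of_notMem (G.notMem_neighborFinset_self v),
          G.card_neighborFinset_eq_degree]
      have h2 : s.card = Fintype.card V - (G.degree v + 1) := by
        rw [hs, Finset.card_sdiff_of_subset (Finset.subset_univ _), Finset.card_univ, h1]
      omega
    obtain ⟨t, hts, htc⟩ := Finset.exists_subset_card_eq hscard
    have hmem : ∀ x : ↥t, (x : V) ≠ v ∧ ¬ G.Adj v x := by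
      intro x
      have := hts x.2
      rw [hs, Finset.mem_sdiff, Finset.mem_insert] at this
      push_neg at this
      refine ⟨this.2.1, ?_⟩
      intro hadj
      exact this.2.2 ((G.mem_neighborFinset v x).2 hadj)
    rcases hCZ ↥t (by rw [Fintype.card_coe, htc]) (G.comap (Subtype.val : ↥t → V)) with hf | hk
    · exact hF (contains_of_comap _ _ hf)
    · apply hK6
      obtain ⟨f, hinj, hadj⟩ := hk
      refine ⟨Fin.cons v (fun i => ↑(f i)), ?_, ?_⟩
      · rw [Fin.cons_injective_iff]
        constructor
        · rintro ⟨i, hi⟩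
          exact (hmem (f i)).1 hi
        · exact Subtype.val_injective.comp hinj
      · intro a b hab
        have hab' : a ≠ b := hab.ne
        clear hab
        have key : ∀ i j : Fin 5, i ≠ j → Gᶜ.Adj (↑(f i) : V) ↑(f j) := by
          intro i j hij
          have := hadj i j (by simp [hij])
          rw [SimpleGraph.compl_adj] at this ⊢
          exact ⟨fun h => this.1 (Subtype.val_injective h), this.2⟩
        have kv : ∀ i : Fin 5, Gᶜ.Adj v ↑(f i) := by
          intro i
          rw [SimpleGraph.compl_adj]
          exact ⟨fun h => (hmem (f i)).1 h.symm, (hmem (f i)).2⟩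
        revert hab'
        refine Fin.cases ?_ (fun i => ?_) a <;> refine Fin.cases ?_ (fun j => ?_) b
        · intro h; exact absurd rfl h
        · intro _; exact kv j
        · intro _; exact (kv i).symm
        · intro h; exact key i j (fun e => h (by rw [e]))
  · -- upper bound
    by_contra hgt
    push_neg at hgt
    have hdeg : 2 * ℓ + 4 ≤ (G.neighborFinset v).card := by
      rw [G.card_neighborFinset_eq_degree]; omega
    obtain ⟨t, hts, htc⟩ := Finset.exists_subset_card_eq hdeg
    have hmem : ∀ x : ↥t, G.Adj v x := by
      intro x
      exact (G.mem_neighborFinset v x).1 (hts x.2)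
    rcases hStahl ↥t (by rw [Fintype.card_coe, htc]) (G.comap (Subtype.val : ↥t → V))
      with hm | hk
    · apply hF
      obtain ⟨f, hinj, hadj⟩ := hm
      refine ⟨fun x => x.elim v (fun p => ↑(f p)), ?_, ?_⟩
      · intro a b hab
        match a, b with
        | none, none => rfl
        | none, some p =>
          exact absurd hab (G.ne_of_adj (hmem (f p)))
        | some p, none =>
          exact absurd hab.symm (G.ne_of_adj (hmem (f p)))
        | some p, some q =>
          simp only [Option.elim] at hab
          exact congrArg some (hinj (Subtype.val_injective hab))
      · intro a b hab
        rw [fan, SimpleGraph.fromRel_adj] at hab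
        obtain ⟨hne, hrel⟩ := hab
        match a, b with
        | none, none => exact absurd rfl hne
        | none, some p => exact hmem (f p)
        | some p, none => exact (hmem (f p)).symm
        | some (i, x), some (j, y) =>
          have hij : i = j := by
            rcases hrel with (h | h | ⟨i', a', b', h1, h2⟩) | (h | h | ⟨i', a', b', h1, h2⟩) <;>
              first
                | exact absurd h (by simp)
                | (simp only [Option.some_inj, Prod.mk.injEq] at h1 h2; omega)
          subst hij
          have hxy : (i, x) ≠ (i, y) := by
            intro h; exact hne (by rw [h])
          have hm : (matchingGraph ℓ).Adj (i, x) (i, y) := by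
            rw [matchingGraph, SimpleGraph.fromRel_adj]
            exact ⟨hxy, Or.inl rfl⟩
          exact hadj _ _ hm
    · apply hK6
      obtain ⟨f, hinj, hadj⟩ := hk
      refine ⟨fun i => ↑(f i), Subtype.val_injective.comp hinj, ?_⟩
      intro a b hab
      have := hadj a b hab
      rw [SimpleGraph.compl_adj] at this ⊢
      exact ⟨fun h => this.1 (Subtype.val_injective h), this.2⟩
end

section
/- Let G be a graph containing no F_ℓ and with independence number at most 5. If d(v) ≥ 2ℓ+4 for some vertex v, then G contains F_ℓ, a contradiction; hence Δ(G) ≤ 2ℓ+3. -/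
theorem maxDegree_le {V : Type} [Fintype V] (ℓ : ℕ)
    (G : SimpleGraph V) [DecidableRel G.Adj]
    (hF : ¬ Contains (fan ℓ) G)
    (hindep : ∀ s : Finset V, (↑s : Set V).Pairwise (fun a b => ¬ G.Adj a b) → s.card ≤ 5)
    (hStahl : ∀ (W : Type) [Fintype W], Fintype.card W = 2 * ℓ + 4 →
      ∀ H : SimpleGraph W,
        Contains (matchingGraph ℓ) H ∨ Contains (⊤ : SimpleGraph (Fin 6)) Hᶜ) :
    ∀ v : V, G.degree v ≤ 2 * ℓ + 3 := by
  classical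
  intro v
  by_contra hdeg
  push_neg at hdeg
  -- pick a set of 2ℓ+4 neighbors of v
  obtain ⟨s, hs_sub, hs_card⟩ :=
    Finset.exists_subset_card_eq (s := G.neighborFinset v) (n := 2 * ℓ + 4)
      (by rw [← G.card_neighborFinset_eq_degree] at hdeg; omega)
  set W := {x : V // x ∈ s} with hW
  have hcardW : Fintype.card W = 2 * ℓ + 4 := by
    simpa [hW, Fintype.card_coe] using hs_card
  have hvnot : ∀ x : W, (x : V) ≠ v := by
    intro x hx
    have := hs_sub x.2
    rw [SimpleGraph.mem_neighborFinset, hx] at this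
    exact G.irrefl this
  have hadj : ∀ x : W, G.Adj v (x : V) := by
    intro x
    have := hs_sub x.2
    rwa [SimpleGraph.mem_neighborFinset] at this
  set H : SimpleGraph W := SimpleGraph.comap (fun x : W => (x : V)) G with hH
  rcases hStahl W hcardW H with ⟨f, hfi, hfh⟩ | ⟨f, hfi, hfh⟩
  · -- matching embeds: build a fan
    apply hF
    refine ⟨fun o => o.elim v (fun p => (f p : V)), ?_, ?_⟩
    · intro a b hab
      match a, b with
      | none, none => rfl
      | none, some p => exact absurd hab.symm (hvnot (f p))
      | some p, none => exact absurd hab (hvnot (f p))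
      | some p, some q =>
        simp only [Option.elim] at hab
        exact congrArg some (hfi (Subtype.val_injective hab))
    · intro a b hab
      rw [fan, SimpleGraph.fromRel_adj] at hab
      obtain ⟨hne, hrel⟩ := hab
      match a, b with
      | none, none => exact absurd rfl hne
      | none, some p => exact hadj (f p)
      | some p, none => exact (hadj (f p)).symm
      | some p, some q =>
        have hpq : p ≠ q := fun h => hne (by rw [h])
        have hfst : p.1 = q.1 := by
          rcases hrel with (h | h | ⟨i, a, b, h1, h2⟩) | (h | h | ⟨i, a, b, h1, h2⟩)
          · exact absurd h (by simp)
          · exact absurd h (by simp)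
          · simp only [Option.some.injEq] at h1 h2; rw [h1, h2]
          · exact absurd h (by simp)
          · exact absurd h (by simp)
          · simp only [Option.some.injEq] at h1 h2; rw [h1, h2]
        have hm : (matchingGraph ℓ).Adj p q := by
          rw [matchingGraph, SimpleGraph.fromRel_adj]
          exact ⟨hpq, Or.inl hfst⟩
        exact hfh p q hm
  · -- K6 in complement: independent set of size 6
    have hinj : Function.Injective (fun i : Fin 6 => ((f i : V))) :=
      fun a b h => hfi (Subtype.val_injective h)
    have ht := hindep (Finset.univ.image (fun i : Fin 6 => ((f i : V)))) ?_
    · rw [Finset.card_image_of_injective _ hinj, Finset.card_univ,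
        Fintype.card_fin] at ht
      omega
    · intro x hx y hy hxy
      simp only [Finset.coe_image, Set.mem_image] at hx hy
      obtain ⟨a, -, rfl⟩ := hx
      obtain ⟨b, -, rfl⟩ := hy
      have hab : a ≠ b := fun h => hxy (by rw [h])
      have := hfh a b (by simp [hab])
      rw [SimpleGraph.compl_adj] at this
      intro hGadj
      exact this.2 hGadj
end

section
/- Let ℓ ≥ 6 and let G be a graph on 10ℓ+1 vertices with no F_ℓ subgraph and independence number exactly 5, and assume every graph on 8ℓ+1 vertices with independence number ≤ 4 contains F_ℓ. Then the clique number of G is at most 2ℓ−2. -/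
lemma Contains.trans_le {α W V : Type} {F : SimpleGraph α} {H : SimpleGraph W} {G : SimpleGraph V}
    (h : Contains F H) (g : W → V) (hg : Function.Injective g)
    (hhom : ∀ a b, H.Adj a b → G.Adj (g a) (g b)) : Contains F G := by
  obtain ⟨f, hfi, hfa⟩ := h
  exact ⟨g ∘ f, hg.comp hfi, fun a b hab => hhom _ _ (hfa a b hab)⟩


lemma contains_fan_of {V : Type} (G : SimpleGraph V) (ℓ : ℕ) (c : V) (p : Fin ℓ → Fin 2 → V)
    (hinj : ∀ i a j b, p i a = p j b → i = j ∧ a = b)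
    (hnc : ∀ i a, p i a ≠ c)
    (hadjc : ∀ i a, G.Adj c (p i a))
    (hadjm : ∀ i (a b : Fin 2), a ≠ b → G.Adj (p i a) (p i b)) :
    Contains (fan ℓ) G := by
  refine ⟨fun o => o.elim c (fun x => p x.1 x.2), ?_, ?_⟩
  · rintro (_|⟨i,a⟩) (_|⟨j,b⟩) h
    · rfl
    · exact absurd h.symm (hnc j b)
    · exact absurd h (hnc i a)
    · obtain ⟨h1, h2⟩ := hinj i a j b h
      rw [h1, h2]
  · rintro (_|⟨i,a⟩) (_|⟨j,b⟩) h
    · exact absurd h (SimpleGraph.irrefl _)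
    · exact hadjc j b
    · exact (hadjc i a).symm
    · rw [fan, SimpleGraph.fromRel_adj] at h
      obtain ⟨hne, hr⟩ := h
      have hab : ∀ (h1 : i = j), a ≠ b := by
        rintro rfl hab
        exact hne (by rw [hab])
      rcases hr with (h|h|⟨i',a',b',h1,h2⟩)|(h|h|⟨i',a',b',h1,h2⟩)
      · exact (Option.some_ne_none _ h).elim
      · exact (Option.some_ne_none _ h).elim
      · rw [Option.some.injEq, Prod.mk.injEq] at h1 h2
        obtain ⟨hi1, ha1⟩ := h1
        obtain ⟨hj1, hb1⟩ := h2
        have hij : i = j := hi1.trans hj1.symm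
        subst hij
        exact hadjm i a b (hab rfl)
      · exact (Option.some_ne_none _ h).elim
      · exact (Option.some_ne_none _ h).elim
      · rw [Option.some.injEq, Prod.mk.injEq] at h1 h2
        obtain ⟨hi1, ha1⟩ := h1
        obtain ⟨hj1, hb1⟩ := h2
        have hij : i = j := hj1.trans hi1.symm
        subst hij
        exact hadjm i a b (hab rfl)

lemma contains_fan_pair {V : Type} [DecidableEq V] (G : SimpleGraph V) (ℓ : ℕ) (hℓ : 6 ≤ ℓ)
    (C : Finset V) (hclq : G.IsClique (↑C : Set V)) (hcard : C.card = 2 * ℓ - 1)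
    (c c1 c2 u v : V) (hc : c ∈ C) (hc1 : c1 ∈ C) (hc2 : c2 ∈ C)
    (h01 : c ≠ c1) (h02 : c ≠ c2) (h12 : c1 ≠ c2)
    (hu : u ∉ C) (hv : v ∉ C) (huv : u ≠ v)
    (hcu : G.Adj c u) (hcv : G.Adj c v) (huc1 : G.Adj u c1) (hvc2 : G.Adj v c2) :
    Contains (fan ℓ) G := by
  classical
  have adjC : ∀ a b, a ∈ C → b ∈ C → a ≠ b → G.Adj a b := fun a b ha hb hab =>
    hclq (Finset.mem_coe.mpr ha) (Finset.mem_coe.mpr hb) hab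
  set D := ((C.erase c).erase c1).erase c2 with hDdef
  have hc1e : c1 ∈ C.erase c := Finset.mem_erase.mpr ⟨Ne.symm h01, hc1⟩
  have hc2e : c2 ∈ (C.erase c).erase c1 :=
    Finset.mem_erase.mpr ⟨Ne.symm h12, Finset.mem_erase.mpr ⟨Ne.symm h02, hc2⟩⟩
  have hDcard : D.card = 2*ℓ - 4 := by
    rw [hDdef, Finset.card_erase_of_mem hc2e, Finset.card_erase_of_mem hc1e,
      Finset.card_erase_of_mem hc, hcard]
    omega
  have hDC : D ⊆ C := fun z hz =>
    Finset.mem_of_mem_erase (Finset.mem_of_mem_erase (Finset.mem_of_mem_erase hz))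
  have hcD : c ∉ D := fun h =>
    (Finset.mem_erase.mp (Finset.mem_of_mem_erase (Finset.mem_of_mem_erase h))).1 rfl
  have hc1D : c1 ∉ D := fun h => (Finset.mem_erase.mp (Finset.mem_of_mem_erase h)).1 rfl
  have hc2D : c2 ∉ D := Finset.notMem_erase _ _
  obtain ⟨E, hEinj, hEmem⟩ : ∃ E : Fin (2*ℓ-4) → V, Function.Injective E ∧ ∀ i, E i ∈ D := by
    refine ⟨fun i => (D.equivFin.symm (Fin.cast hDcard.symm i) : V), ?_, fun i =>
      (D.equivFin.symm _).2⟩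
    intro i j h
    have h2 := D.equivFin.symm.injective (Subtype.coe_injective h)
    have h3 := congrArg Fin.val h2
    simp only [Fin.coe_cast] at h3
    exact Fin.ext h3
  set E' : ℕ → V := fun m => if h : m < 2*ℓ-4 then E ⟨m, h⟩ else c with hE'def
  have hE'mem : ∀ m, m < 2*ℓ-4 → E' m ∈ D := by
    intro m hm
    simp only [hE'def, dif_pos hm]
    exact hEmem _
  have hE'inj : ∀ m n, m < 2*ℓ-4 → n < 2*ℓ-4 → E' m = E' n → m = n := by
    intro m n hm hn h
    simp only [hE'def, dif_pos hm, dif_pos hn] at h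
    exact congrArg Fin.val (hEinj h)
  set p : Fin ℓ → Fin 2 → V := fun i a =>
    if 2*(i:ℕ)+1 < 2*ℓ-4 then E' (2*(i:ℕ)+(a:ℕ))
    else if (i:ℕ)+2 = ℓ then (if (a:ℕ) = 0 then u else c1)
    else (if (a:ℕ) = 0 then v else c2) with hpdef
  have hp1 : ∀ (i : Fin ℓ) (a : Fin 2), 2*(i:ℕ)+1 < 2*ℓ-4 → p i a = E' (2*(i:ℕ)+(a:ℕ)) := by
    intro i a h
    simp only [hpdef, if_pos h]
  have hp2 : ∀ (i : Fin ℓ) (a : Fin 2), (i:ℕ)+2 = ℓ →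
      p i a = (if (a:ℕ) = 0 then u else c1) := by
    intro i a h
    simp only [hpdef]
    rw [if_neg (by omega), if_pos h]
  have hp3 : ∀ (i : Fin ℓ) (a : Fin 2), (i:ℕ)+1 = ℓ →
      p i a = (if (a:ℕ) = 0 then v else c2) := by
    intro i a h
    simp only [hpdef]
    rw [if_neg (by omega), if_neg (by omega)]
  have hbr : ∀ i : Fin ℓ, 2*(i:ℕ)+1 < 2*ℓ-4 ∨ (i:ℕ)+2 = ℓ ∨ (i:ℕ)+1 = ℓ := by
    intro i
    have := i.isLt
    omega
  have hnc : ∀ i a, p i a ≠ c := by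
    intro i a
    have ha2 := a.isLt
    rcases hbr i with h|h|h
    · rw [hp1 i a h]
      intro he
      exact hcD (he ▸ hE'mem _ (by omega))
    · rw [hp2 i a h]
      by_cases ha : (a:ℕ) = 0
      · rw [if_pos ha]; exact fun he => hu (he ▸ hc)
      · rw [if_neg ha]; exact Ne.symm h01
    · rw [hp3 i a h]
      by_cases ha : (a:ℕ) = 0
      · rw [if_pos ha]; exact fun he => hv (he ▸ hc)
      · rw [if_neg ha]; exact Ne.symm h02
  have hadjc : ∀ i a, G.Adj c (p i a) := by
    intro i a
    have ha2 := a.isLt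
    rcases hbr i with h|h|h
    · rw [hp1 i a h]
      have hm := hE'mem (2*(i:ℕ)+(a:ℕ)) (by omega)
      exact adjC c _ hc (hDC hm) (fun he => hcD (he ▸ hm))
    · rw [hp2 i a h]
      by_cases ha : (a:ℕ) = 0
      · rw [if_pos ha]; exact hcu
      · rw [if_neg ha]; exact adjC c c1 hc hc1 h01
    · rw [hp3 i a h]
      by_cases ha : (a:ℕ) = 0
      · rw [if_pos ha]; exact hcv
      · rw [if_neg ha]; exact adjC c c2 hc hc2 h02
  have hadjm : ∀ i (a b : Fin 2), a ≠ b → G.Adj (p i a) (p i b) := by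
    intro i a b hab
    have hv2 : (a:ℕ) ≠ (b:ℕ) := fun h => hab (Fin.ext h)
    have ha2 := a.isLt
    have hb2 := b.isLt
    rcases hbr i with h|h|h
    · rw [hp1 i a h, hp1 i b h]
      have hma := hE'mem (2*(i:ℕ)+(a:ℕ)) (by omega)
      have hmb := hE'mem (2*(i:ℕ)+(b:ℕ)) (by omega)
      refine adjC _ _ (hDC hma) (hDC hmb) ?_
      intro he
      exact hv2 (by have := hE'inj _ _ (by omega) (by omega) he; omega)
    · rw [hp2 i a h, hp2 i b h]
      by_cases ha : (a:ℕ) = 0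
      · rw [if_pos ha, if_neg (by omega)]; exact huc1
      · rw [if_neg ha, if_pos (by omega)]; exact huc1.symm
    · rw [hp3 i a h, hp3 i b h]
      by_cases ha : (a:ℕ) = 0
      · rw [if_pos ha, if_neg (by omega)]; exact hvc2
      · rw [if_neg ha, if_pos (by omega)]; exact hvc2.symm
  have hinj : ∀ i a j b, p i a = p j b → i = j ∧ a = b := by
    intro i a j b h
    have ha2 := a.isLt
    have hb2 := b.isLt
    have hi2 := i.isLt
    have hj2 := j.isLt
    rcases hbr i with hi|hi|hi <;> rcases hbr j with hj|hj|hj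
    · rw [hp1 i a hi, hp1 j b hj] at h
      have := hE'inj _ _ (by omega) (by omega) h
      exact ⟨Fin.ext (by omega), Fin.ext (by omega)⟩
    · rw [hp1 i a hi, hp2 j b hj] at h
      have hm := hE'mem (2*(i:ℕ)+(a:ℕ)) (by omega)
      rw [h] at hm
      by_cases hb : (b:ℕ) = 0
      · rw [if_pos hb] at hm; exact absurd (hDC hm) hu
      · rw [if_neg hb] at hm; exact absurd hm hc1D
    · rw [hp1 i a hi, hp3 j b hj] at h
      have hm := hE'mem (2*(i:ℕ)+(a:ℕ)) (by omega)
      rw [h] at hm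
      by_cases hb : (b:ℕ) = 0
      · rw [if_pos hb] at hm; exact absurd (hDC hm) hv
      · rw [if_neg hb] at hm; exact absurd hm hc2D
    · rw [hp2 i a hi, hp1 j b hj] at h
      have hm := hE'mem (2*(j:ℕ)+(b:ℕ)) (by omega)
      rw [← h] at hm
      by_cases ha : (a:ℕ) = 0
      · rw [if_pos ha] at hm; exact absurd (hDC hm) hu
      · rw [if_neg ha] at hm; exact absurd hm hc1D
    · rw [hp2 i a hi, hp2 j b hj] at h
      by_cases ha : (a:ℕ) = 0 <;> by_cases hb : (b:ℕ) = 0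
      · exact ⟨Fin.ext (by omega), Fin.ext (by omega)⟩
      · rw [if_pos ha, if_neg hb] at h
        exact absurd (show c1 ∈ C from hc1) (by rw [← h] at hc1 ⊢; exact fun _ => hu (h ▸ hc1))
      · rw [if_neg ha, if_pos hb] at h
        exact absurd (show u ∈ C from by rw [← h]; exact hc1) hu
      · exact ⟨Fin.ext (by omega), Fin.ext (by omega)⟩
    · rw [hp2 i a hi, hp3 j b hj] at h
      by_cases ha : (a:ℕ) = 0 <;> by_cases hb : (b:ℕ) = 0
      · rw [if_pos ha, if_pos hb] at h; exact absurd h huv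
      · rw [if_pos ha, if_neg hb] at h
        exact absurd (show u ∈ C from by rw [h]; exact hc2) hu
      · rw [if_neg ha, if_pos hb] at h
        exact absurd (show v ∈ C from by rw [← h]; exact hc1) hv
      · rw [if_neg ha, if_neg hb] at h; exact absurd h h12
    · rw [hp3 i a hi, hp1 j b hj] at h
      have hm := hE'mem (2*(j:ℕ)+(b:ℕ)) (by omega)
      rw [← h] at hm
      by_cases ha : (a:ℕ) = 0
      · rw [if_pos ha] at hm; exact absurd (hDC hm) hv
      · rw [if_neg ha] at hm; exact absurd hm hc2D
    · rw [hp3 i a hi, hp2 j b hj] at h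
      by_cases ha : (a:ℕ) = 0 <;> by_cases hb : (b:ℕ) = 0
      · rw [if_pos ha, if_pos hb] at h; exact absurd h.symm huv
      · rw [if_pos ha, if_neg hb] at h
        exact absurd (show v ∈ C from by rw [h]; exact hc1) hv
      · rw [if_neg ha, if_pos hb] at h
        exact absurd (show u ∈ C from by rw [← h]; exact hc2) hu
      · rw [if_neg ha, if_neg hb] at h; exact absurd h.symm h12
    · rw [hp3 i a hi, hp3 j b hj] at h
      by_cases ha : (a:ℕ) = 0 <;> by_cases hb : (b:ℕ) = 0
      · exact ⟨Fin.ext (by omega), Fin.ext (by omega)⟩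
      · rw [if_pos ha, if_neg hb] at h
        exact absurd (show v ∈ C from by rw [h]; exact hc2) hv
      · rw [if_neg ha, if_pos hb] at h
        exact absurd (show v ∈ C from by rw [← h]; exact hc2) hv
      · exact ⟨Fin.ext (by omega), Fin.ext (by omega)⟩
  exact contains_fan_of G ℓ c p hinj hnc hadjc hadjm

theorem cliqueNum_le {V : Type} [Fintype V] (ℓ : ℕ) (hℓ : 6 ≤ ℓ)
    (G : SimpleGraph V) (hcard : Fintype.card V = 10 * ℓ + 1)
    (hF : ¬ Contains (fan ℓ) G)
    (hindep5 : ∀ s : Finset V, (↑s : Set V).Pairwise (fun a b => ¬ G.Adj a b) → s.card ≤ 5)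
    (hindepEx : ∃ s : Finset V, (↑s : Set V).Pairwise (fun a b => ¬ G.Adj a b) ∧ s.card = 5)
    (hCZ : ∀ (W : Type) [Fintype W], Fintype.card W = 8 * ℓ + 1 →
      ∀ H : SimpleGraph W,
        (∀ s : Finset W, (↑s : Set W).Pairwise (fun a b => ¬ H.Adj a b) → s.card ≤ 4) →
        Contains (fan ℓ) H) :
    ∀ s : Finset V, G.IsClique (↑s : Set V) → s.card ≤ 2 * ℓ - 2 := by
  classical
  intro s hclqs
  by_contra hgt
  push_neg at hgt
  obtain ⟨C, hCs, hCcard⟩ := Finset.exists_subset_card_eq (s := s) (n := 2*ℓ-1) (by omega)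
  have hclqC : G.IsClique (↑C : Set V) := hclqs.subset (Finset.coe_subset.mpr hCs)
  set N : V → Finset V := fun y => C.filter (fun cc => G.Adj y cc) with hN
  have hNsub : ∀ y, N y ⊆ C := fun y => Finset.filter_subset _ _
  have hNmem : ∀ y cc, cc ∈ N y ↔ cc ∈ C ∧ G.Adj y cc := by
    intro y cc
    simp only [hN, Finset.mem_filter]
  -- Step A: for every x, there is an independent 5-set avoiding C and x
  have stepA : ∀ x : V, ∃ T : Finset V, T.card = 5 ∧
      (↑T : Set V).Pairwise (fun a b => ¬ G.Adj a b) ∧ ∀ t ∈ T, t ∉ C ∧ t ≠ x := by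
    intro x
    by_contra hno
    push_neg at hno
    have hW : (8*ℓ+1 : ℕ) ≤ ((insert x C)ᶜ : Finset V).card := by
      have h1 : (insert x C).card ≤ 2*ℓ := by
        have := Finset.card_insert_le x C
        omega
      have h2 := Finset.card_compl (insert x C) (α := V)
      omega
    obtain ⟨W, hWsub, hWcard⟩ := Finset.exists_subset_card_eq hW
    have h4 : ∀ T : Finset V, T ⊆ W →
        (↑T : Set V).Pairwise (fun a b => ¬ G.Adj a b) → T.card ≤ 4 := by
      intro T hTW hTp
      by_contra hcon
      push_neg at hcon
      obtain ⟨T', hT'T, hT'card⟩ := Finset.exists_subset_card_eq (s := T) (n := 5) (by omega)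
      have hT'p : (↑T' : Set V).Pairwise (fun a b => ¬ G.Adj a b) :=
        hTp.mono (Finset.coe_subset.mpr hT'T)
      obtain ⟨t, htT', himp⟩ := hno T' hT'card hT'p
      have htW : t ∈ (insert x C)ᶜ := hWsub (hTW (hT'T htT'))
      rw [Finset.mem_compl, Finset.mem_insert] at htW
      push_neg at htW
      exact htW.1 (himp htW.2)
    have hHind : ∀ sf : Finset {y // y ∈ W},
        (↑sf : Set {y // y ∈ W}).Pairwise
          (fun a b => ¬ (G.comap (fun z : {y // y ∈ W} => (z : V))).Adj a b) → sf.card ≤ 4 := by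
      intro sf hsf
      have hsub : sf.map ⟨Subtype.val, Subtype.coe_injective⟩ ⊆ W := by
        intro z hz
        obtain ⟨z', hz', rfl⟩ := Finset.mem_map.mp hz
        exact z'.2
      have hpair : (↑(sf.map ⟨Subtype.val, Subtype.coe_injective⟩) : Set V).Pairwise
          (fun a b => ¬ G.Adj a b) := by
        intro a ha b hb hab
        obtain ⟨a', ha', rfl⟩ := Finset.mem_map.mp (Finset.mem_coe.mp ha)
        obtain ⟨b', hb', rfl⟩ := Finset.mem_map.mp (Finset.mem_coe.mp hb)
        have hne : a' ≠ b' := fun hh => hab (by rw [hh])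
        exact hsf (Finset.mem_coe.mpr ha') (Finset.mem_coe.mpr hb') hne
      have := h4 _ hsub hpair
      rwa [Finset.card_map] at this
    have hcont := hCZ {y // y ∈ W} (by rw [Fintype.card_coe]; exact hWcard)
      (G.comap (fun z : {y // y ∈ W} => (z : V))) hHind
    exact hF (hcont.trans_le Subtype.val Subtype.coe_injective (fun a b hab => hab))
  -- Step B: every independent 5-set avoiding C dominates C
  have stepB : ∀ T : Finset V, T.card = 5 →
      (↑T : Set V).Pairwise (fun a b => ¬ G.Adj a b) → (∀ t ∈ T, t ∉ C) →
      ∀ cc ∈ C, ∃ t ∈ T, G.Adj t cc := by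
    intro T h5 hp hTC cc hcc
    by_contra hno
    push_neg at hno
    have hccT : cc ∉ T := fun h => hTC cc h hcc
    have hp' : (↑(insert cc T) : Set V).Pairwise (fun a b => ¬ G.Adj a b) := by
      rw [Finset.coe_insert, Set.pairwise_insert]
      exact ⟨hp, fun b hb _ => ⟨fun h => hno b (Finset.mem_coe.mp hb) h.symm,
        hno b (Finset.mem_coe.mp hb)⟩⟩
    have h6 := hindep5 _ hp'
    rw [Finset.card_insert_of_notMem hccT, h5] at h6
    omega
  -- Step E: structure around a vertex x outside C with ≥ 3 neighbours in C
  have stepE : ∀ x, x ∉ C → 3 ≤ (N x).card → ∀ w, w ∉ C → w ≠ x →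
      ∀ cc ∈ N x, G.Adj w cc → ∀ c' ∈ N w, c' = cc := by
    intro x hx h3 w hw hwx cc hccx hwcc c' hc'w
    by_contra hne
    have hccC : cc ∈ C := hNsub x hccx
    have hc'C : c' ∈ C := hNsub w hc'w
    have hpos : 0 < (((N x).erase cc).erase c').card := by
      have e1 := Finset.card_erase_of_mem hccx
      have e2 : ((N x).erase cc).card - 1 ≤ (((N x).erase cc).erase c').card := by
        by_cases hmem : c' ∈ (N x).erase cc
        · rw [Finset.card_erase_of_mem hmem]
        · rw [Finset.erase_eq_of_notMem hmem]
          omega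
      omega
    obtain ⟨d, hd⟩ := Finset.card_pos.mp hpos
    have hd1 : d ≠ c' := (Finset.mem_erase.mp hd).1
    have hd' := (Finset.mem_erase.mp hd).2
    have hd2 : d ≠ cc := (Finset.mem_erase.mp hd').1
    have hdx : d ∈ N x := (Finset.mem_erase.mp hd').2
    have hdC : d ∈ C := hNsub x hdx
    exact hF (contains_fan_pair G ℓ hℓ C hclqC hCcard cc c' d w x hccC hc'C hdC
      (fun h => hne h.symm) (fun h => hd2 h.symm) (fun h => hd1 h.symm)
      hw hx hwx
      hwcc.symm ((hNmem x cc).mp hccx).2.symm ((hNmem w c').mp hc'w).2 ((hNmem x d).mp hdx).2)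
  -- counting lemma
  have count : ∀ B : ℕ, (∀ y, y ∉ C → (N y).card ≤ B) →
      ∀ x, x ∉ C → 3 ≤ (N x).card →
      ∃ m : ℕ, (N x).card ≤ m ∧ m ≤ 5 ∧ 2*ℓ-1 ≤ (5-m)*B + m := by
    intro B hB x hx h3
    obtain ⟨T, hT5, hTp, hTmem⟩ := stepA x
    have cov := stepB T hT5 hTp (fun t ht => (hTmem t ht).1)
    set I := T.filter (fun t => ∃ cc ∈ N x, G.Adj t cc) with hI
    have hIT : I ⊆ T := Finset.filter_subset _ _
    have hI1 : ∀ t ∈ I, (N t).card = 1 := by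
      intro t ht
      obtain ⟨htT, cc, hccx, hadj⟩ := Finset.mem_filter.mp ht
      have heq : N t = {cc} := by
        apply Finset.eq_singleton_iff_unique_mem.mpr
        refine ⟨(hNmem t cc).mpr ⟨hNsub x hccx, hadj⟩, ?_⟩
        intro c' hc'
        exact stepE x hx h3 t (hTmem t htT).1 (hTmem t htT).2 cc hccx hadj c' hc'
      rw [heq, Finset.card_singleton]
    have hsumI : ∑ t ∈ I, (N t).card = I.card := by
      rw [Finset.sum_congr rfl hI1, Finset.sum_const, smul_eq_mul, mul_one]
    have hkI : (N x).card ≤ I.card := by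
      have hsub : N x ⊆ I.biUnion N := by
        intro cc hcc
        obtain ⟨t, htT, hadj⟩ := cov cc (hNsub x hcc)
        exact Finset.mem_biUnion.mpr ⟨t, Finset.mem_filter.mpr ⟨htT, cc, hcc, hadj⟩,
          (hNmem t cc).mpr ⟨hNsub x hcc, hadj⟩⟩
      calc (N x).card ≤ (I.biUnion N).card := Finset.card_le_card hsub
        _ ≤ ∑ t ∈ I, (N t).card := Finset.card_biUnion_le
        _ = I.card := hsumI
    have hI5 : I.card ≤ 5 := hT5 ▸ Finset.card_le_card hIT
    refine ⟨I.card, hkI, hI5, ?_⟩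
    have hCsub : C ⊆ T.biUnion N := by
      intro cc hcc
      obtain ⟨t, htT, hadj⟩ := cov cc hcc
      exact Finset.mem_biUnion.mpr ⟨t, htT, (hNmem t cc).mpr ⟨hcc, hadj⟩⟩
    have hTI : ∑ t ∈ T \ I, (N t).card ≤ (5 - I.card) * B := by
      have hle := Finset.sum_le_card_nsmul (T \ I) (fun t => (N t).card) B
        (fun t ht => hB t (hTmem t (Finset.mem_sdiff.mp ht).1).1)
      rw [Finset.card_sdiff_of_subset hIT, hT5] at hle
      simpa [smul_eq_mul] using hle
    calc 2*ℓ-1 = C.card := hCcard.symm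
      _ ≤ (T.biUnion N).card := Finset.card_le_card hCsub
      _ ≤ ∑ t ∈ T, (N t).card := Finset.card_biUnion_le
      _ = ∑ t ∈ T \ I, (N t).card + ∑ t ∈ I, (N t).card := (Finset.sum_sdiff hIT).symm
      _ ≤ (5 - I.card)*B + I.card := add_le_add hTI (le_of_eq hsumI)
  -- find a starting vertex with ≥ 3 neighbours in C
  have hCne : C.Nonempty := Finset.card_pos.mp (by omega)
  obtain ⟨c₀, hc₀⟩ := hCne
  obtain ⟨T, hT5, hTp, hTmem⟩ := stepA c₀
  have cov := stepB T hT5 hTp (fun t ht => (hTmem t ht).1)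
  have hCsub : C ⊆ T.biUnion N := by
    intro cc hcc
    obtain ⟨t, htT, hadj⟩ := cov cc hcc
    exact Finset.mem_biUnion.mpr ⟨t, htT, (hNmem t cc).mpr ⟨hcc, hadj⟩⟩
  have hex : ∃ t ∈ T, 3 ≤ (N t).card := by
    by_contra hcon
    push_neg at hcon
    have hsum := Finset.sum_le_card_nsmul T (fun t => (N t).card) 2
      (fun t ht => by show (N t).card ≤ 2; have := hcon t ht; omega)
    rw [hT5] at hsum
    have h1 : C.card ≤ ∑ t ∈ T, (N t).card :=
      le_trans (Finset.card_le_card hCsub) Finset.card_biUnion_le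
    have hsum2 : (∑ t ∈ T, (N t).card) ≤ 10 := by simpa using hsum
    omega
  obtain ⟨t₀, ht₀T, ht₀3⟩ := hex
  have ht₀C : t₀ ∉ C := (hTmem t₀ ht₀T).1
  have glob0 : ∀ y, y ∉ C → (N y).card ≤ 2*ℓ := fun y _ =>
    le_trans (Finset.card_le_card (hNsub y)) (by omega)
  have glob5 : ∀ y, y ∉ C → (N y).card ≤ 5 := by
    intro y hy
    by_cases h3 : 3 ≤ (N y).card
    · obtain ⟨m, h1, h2, _⟩ := count (2*ℓ) glob0 y hy h3
      omega
    · omega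
  have glob3 : ∀ y, y ∉ C → (N y).card ≤ 3 := by
    intro y hy
    by_cases h3 : 3 ≤ (N y).card
    · obtain ⟨m, h1, h2, h4⟩ := count 5 glob5 y hy h3
      omega
    · omega
  obtain ⟨m, h1, h2, h4⟩ := count 3 glob3 t₀ ht₀C ht₀3
  omega
end

section
/- Let G be a graph with no F_ℓ, independence number 5, independent set U = {u_1,…,u_5}, and let X_{1i}, X_{1j}, X_{1k} (i,j,k distinct) each induce complete subgraphs as above. If |X_{1i}| ≥ 2ℓ − 2t for some 2 ≤ t ≤ 6 and v ∈ X_{1i}, then |N(v) ∩ (X_{1j} ∪ X_{1k})| ≤ 2t and |N(v) ∩ X_{1j}| ≤ 2t − 1; moreover if additionally |N(v) ∩ X_{1j}| ≥ 2 then |N(v) ∩ X_{1k}| ≤ 2t − 3. -/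
/-- Vertices outside `U = range u` having exactly `s` neighbours in `U`. -/
def XS {V : Type} [Fintype V] [DecidableEq V] (G : SimpleGraph V) [DecidableRel G.Adj]
    (u : Fin 5 → V) (s : ℕ) : Finset V :=
  Finset.univ.filter fun v =>
    (∀ j, v ≠ u j) ∧ (Finset.univ.filter fun j => G.Adj v (u j)).card = s

/-- Vertices outside `U` with exactly `s` neighbours in `U`, one of which is `u i`. -/
def XSi {V : Type} [Fintype V] [DecidableEq V] (G : SimpleGraph V) [DecidableRel G.Adj]
    (u : Fin 5 → V) (s : ℕ) (i : Fin 5) : Finset V :=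
  (XS G u s).filter fun v => G.Adj v (u i)

/-- From a finset of size at least `2m`, extract an injection `Fin m × Fin 2 ↪ S`. -/
lemma exists_inj_of_card {V : Type} [DecidableEq V] (S : Finset V) (m : ℕ)
    (h : 2 * m ≤ S.card) :
    ∃ g : Fin m × Fin 2 → V, Function.Injective g ∧ ∀ p, g p ∈ S := by
  obtain ⟨T, hTS, hT⟩ := Finset.exists_subset_card_eq h
  have hcard : m * 2 = T.card := by rw [hT]; ring
  refine ⟨fun p => (T.equivFin.symm (finCongr hcard (finProdFinEquiv p)) : V), ?_, ?_⟩
  · intro p q hpq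
    apply finProdFinEquiv.injective
    apply (finCongr hcard).injective
    apply T.equivFin.symm.injective
    exact Subtype.val_injective hpq
  · intro p
    exact hTS (T.equivFin.symm _).2

/-- Master lemma: three pairwise disjoint cliques inside the neighbourhood of `v`,
containing `2mA`, `2mB`, `2mC` vertices respectively with `mA + mB + mC = ℓ`,
yield a copy of the fan `F_ℓ`. -/
lemma master {V : Type} [DecidableEq V] (ℓ : ℕ) (G : SimpleGraph V)
    (v : V) (A B C : Finset V)
    (hA : G.IsClique (A : Set V)) (hB : G.IsClique (B : Set V)) (hC : G.IsClique (C : Set V))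
    (hAB : Disjoint A B) (hAC : Disjoint A C) (hBC : Disjoint B C)
    (hadj : ∀ w ∈ A ∪ B ∪ C, G.Adj v w)
    (mA mB mC : ℕ) (h1 : 2 * mA ≤ A.card) (h2 : 2 * mB ≤ B.card) (h3 : 2 * mC ≤ C.card)
    (hsum : mA + mB + mC = ℓ) : Contains (fan ℓ) G := by
  obtain ⟨gA, gAi, gAm⟩ := exists_inj_of_card A mA h1
  obtain ⟨gB, gBi, gBm⟩ := exists_inj_of_card B mB h2
  obtain ⟨gC, gCi, gCm⟩ := exists_inj_of_card C mC h3
  -- split Fin ℓ into three parts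
  let e : Fin ℓ ≃ (Fin mA ⊕ Fin mB) ⊕ Fin mC :=
    (finCongr hsum.symm).trans finSumFinEquiv.symm |>.trans
      (Equiv.sumCongr finSumFinEquiv.symm (Equiv.refl _))
  let f : Fin ℓ × Fin 2 → V := fun p =>
    match e p.1 with
    | Sum.inl (Sum.inl x) => gA (x, p.2)
    | Sum.inl (Sum.inr y) => gB (y, p.2)
    | Sum.inr z => gC (z, p.2)
  have hmem : ∀ p, f p ∈ A ∪ B ∪ C := by
    intro p
    simp only [f]
    rcases h : e p.1 with (x | y) | z
    · simp [Finset.mem_union, gAm (x, p.2)]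
    · simp [Finset.mem_union, gBm (y, p.2)]
    · simp [Finset.mem_union, gCm (z, p.2)]
  have hinj : Function.Injective f := by
    intro p q hpq
    simp only [f] at hpq
    have h1 : ∀ {x y : V}, x ∈ A → y ∈ B → x ≠ y := fun hx hy h => by
      subst h; exact (Finset.disjoint_left.mp hAB hx) hy
    have h2 : ∀ {x y : V}, x ∈ A → y ∈ C → x ≠ y := fun hx hy h => by
      subst h; exact (Finset.disjoint_left.mp hAC hx) hy
    have h3 : ∀ {x y : V}, x ∈ B → y ∈ C → x ≠ y := fun hx hy h => by
      subst h; exact (Finset.disjoint_left.mp hBC hx) hy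
    have : e p.1 = e q.1 ∧ p.2 = q.2 := by
      rcases hp : e p.1 with (x | y) | z <;> rcases hq : e q.1 with (x' | y') | z' <;>
        rw [hp, hq] at hpq
      · have h' := gAi hpq
        rw [Prod.mk.injEq] at h'
        exact ⟨by rw [h'.1], h'.2⟩
      · exact absurd hpq (h1 (gAm _) (gBm _))
      · exact absurd hpq (h2 (gAm _) (gCm _))
      · exact absurd hpq.symm (h1 (gAm _) (gBm _))
      · have h' := gBi hpq
        rw [Prod.mk.injEq] at h'
        exact ⟨by rw [h'.1], h'.2⟩
      · exact absurd hpq (h3 (gBm _) (gCm _))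
      · exact absurd hpq.symm (h2 (gAm _) (gCm _))
      · exact absurd hpq.symm (h3 (gBm _) (gCm _))
      · have h' := gCi hpq
        rw [Prod.mk.injEq] at h'
        exact ⟨by rw [h'.1], h'.2⟩
    obtain ⟨he, h2'⟩ := this
    exact Prod.ext (e.injective he) h2'
  have hedge : ∀ (i : Fin ℓ) (a b : Fin 2), a ≠ b → G.Adj (f (i, a)) (f (i, b)) := by
    intro i a b hab
    have hne : f (i, a) ≠ f (i, b) := fun h => hab (congrArg Prod.snd (hinj h))
    simp only [f]
    rcases h : e i with (x | y) | z
    · exact hA (gAm _) (gAm _) (by simpa only [f, h] using hne)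
    · exact hB (gBm _) (gBm _) (by simpa only [f, h] using hne)
    · exact hC (gCm _) (gCm _) (by simpa only [f, h] using hne)
  have hvadj : ∀ p, G.Adj v (f p) := fun p => hadj _ (hmem p)
  refine ⟨fun o => o.elim v f, ?_, ?_⟩
  · intro o o' h
    match o, o' with
    | none, none => rfl
    | none, some p => exact absurd h.symm (G.ne_of_adj (hvadj p)).symm
    | some p, none => exact absurd h (G.ne_of_adj (hvadj p)).symm
    | some p, some q => exact congrArg some (hinj h)
  · intro o o' h
    rw [fan, SimpleGraph.fromRel_adj] at h
    obtain ⟨hne, hrel⟩ := h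
    match o, o' with
    | none, none => exact absurd rfl hne
    | none, some p => exact hvadj p
    | some p, none => exact (hvadj p).symm
    | some p, some q =>
      have : p.1 = q.1 ∧ p.2 ≠ q.2 := by
        rcases hrel with (h | h | ⟨i', a', b', hx1, hx2⟩) | (h | h | ⟨i', a', b', hx1, hx2⟩) <;>
          first
          | exact absurd h (Option.some_ne_none _)
          | (rw [Option.some.injEq] at hx1 hx2
             subst hx1; subst hx2
             exact ⟨rfl, fun hc => hne (by simpa using hc)⟩)
      obtain ⟨h1, h2⟩ := this
      obtain ⟨i, a⟩ := p
      obtain ⟨i', b⟩ := q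
      cases h1
      exact hedge i a b h2


/-- Distinct `XSi`-classes (with `s = 1`) are disjoint. -/
lemma XSi_disj {V : Type} [Fintype V] [DecidableEq V] (G : SimpleGraph V) [DecidableRel G.Adj]
    (u : Fin 5 → V) (i j : Fin 5) (hij : i ≠ j) :
    Disjoint (XSi G u 1 i) (XSi G u 1 j) := by
  rw [Finset.disjoint_left]
  intro w hwi hwj
  rw [XSi, Finset.mem_filter] at hwi hwj
  obtain ⟨hwXS, hadji⟩ := hwi
  obtain ⟨-, hadjj⟩ := hwj
  rw [XS, Finset.mem_filter] at hwXS
  have hcard := hwXS.2.2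
  have hsub : ({i, j} : Finset (Fin 5)) ⊆ Finset.univ.filter fun m => G.Adj w (u m) := by
    intro m hm
    simp only [Finset.mem_insert, Finset.mem_singleton] at hm
    rcases hm with rfl | rfl <;> simp [Finset.mem_filter, hadji, hadjj]
  have h2 := Finset.card_le_card hsub
  rw [Finset.card_insert_of_notMem (by simp [hij]), Finset.card_singleton] at h2
  omega

theorem flower_lemma {V : Type} [Fintype V] [DecidableEq V] (ℓ : ℕ)
    (G : SimpleGraph V) [DecidableRel G.Adj]
    (hF : ¬ Contains (fan ℓ) G)
    (u : Fin 5 → V) (hu : Function.Injective u)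
    (huI : (Set.range u).Pairwise fun a b => ¬ G.Adj a b)
    (h6 : ∀ s : Finset V, (↑s : Set V).Pairwise (fun a b => ¬ G.Adj a b) → s.card ≤ 5)
    (hcliq : ∀ m : Fin 5, G.IsClique (↑(insert (u m) (XSi G u 1 m)) : Set V))
    (i j k : Fin 5) (hij : i ≠ j) (hik : i ≠ k) (hjk : j ≠ k)
    (t : ℕ) (ht2 : 2 ≤ t) (ht6 : t ≤ 6)
    (hXi : 2 * ℓ - 2 * t ≤ (XSi G u 1 i).card)
    (v : V) (hv : v ∈ XSi G u 1 i) :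
    (((XSi G u 1 j ∪ XSi G u 1 k).filter fun w => G.Adj v w).card ≤ 2 * t) ∧
    (((XSi G u 1 j).filter fun w => G.Adj v w).card ≤ 2 * t - 1) ∧
    (2 ≤ ((XSi G u 1 j).filter fun w => G.Adj v w).card →
      ((XSi G u 1 k).filter fun w => G.Adj v w).card ≤ 2 * t - 3) := by
  classical
  set Xi := XSi G u 1 i with hXidef
  set Xj := XSi G u 1 j with hXjdef
  set Xk := XSi G u 1 k with hXkdef
  have hvX := hv
  rw [hXidef, XSi, Finset.mem_filter] at hvX
  obtain ⟨hvXS, hvadji⟩ := hvX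
  rw [XS, Finset.mem_filter] at hvXS
  have hvne : ∀ m, v ≠ u m := hvXS.2.1
  -- the three cliques
  set A : Finset V := insert (u i) (Xi.erase v) with hAdef
  set B : Finset V := Xj.filter (fun w => G.Adj v w) with hBdef
  set C : Finset V := Xk.filter (fun w => G.Adj v w) with hCdef
  have hui_notin : ∀ m : Fin 5, (u m) ∉ XS G u 1 := by
    intro m hm
    rw [XS, Finset.mem_filter] at hm
    exact hm.2.1 m rfl
  have hui_notin' : ∀ m n : Fin 5, (u m) ∉ XSi G u 1 n := by
    intro m n hm
    rw [XSi, Finset.mem_filter] at hm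
    exact hui_notin m hm.1
  have hAcard : A.card = Xi.card := by
    rw [hAdef, Finset.card_insert_of_notMem
      (fun h => hui_notin' i i (hXidef ▸ Finset.mem_of_mem_erase h)),
      Finset.card_erase_of_mem hv]
    have : 1 ≤ Xi.card := Finset.card_pos.mpr ⟨v, hv⟩
    omega
  -- cliqueness
  have hAclique : G.IsClique (A : Set V) := by
    apply (hcliq i).subset
    rw [hAdef]
    intro w hw
    simp only [Finset.coe_insert, Set.mem_insert_iff, Finset.mem_coe] at hw ⊢
    rcases hw with rfl | hw
    · exact Or.inl rfl
    · exact Or.inr (Finset.mem_of_mem_erase hw)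
  have hBclique : G.IsClique (B : Set V) := by
    apply (hcliq j).subset
    intro w hw
    simp only [Finset.mem_coe, hBdef, Finset.mem_filter] at hw
    simp only [Finset.coe_insert, Set.mem_insert_iff, Finset.mem_coe]
    exact Or.inr hw.1
  have hCclique : G.IsClique (C : Set V) := by
    apply (hcliq k).subset
    intro w hw
    simp only [Finset.mem_coe, hCdef, Finset.mem_filter] at hw
    simp only [Finset.coe_insert, Set.mem_insert_iff, Finset.mem_coe]
    exact Or.inr hw.1
  -- disjointness
  have hdisjAB : Disjoint A B := by
    rw [Finset.disjoint_left]
    intro w hw hwB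
    rw [hBdef, Finset.mem_filter] at hwB
    rw [hAdef, Finset.mem_insert] at hw
    rcases hw with rfl | hw
    · exact hui_notin' i j hwB.1
    · exact Finset.disjoint_left.mp (XSi_disj G u i j hij)
        (Finset.mem_of_mem_erase hw) hwB.1
  have hdisjAC : Disjoint A C := by
    rw [Finset.disjoint_left]
    intro w hw hwC
    rw [hCdef, Finset.mem_filter] at hwC
    rw [hAdef, Finset.mem_insert] at hw
    rcases hw with rfl | hw
    · exact hui_notin' i k hwC.1
    · exact Finset.disjoint_left.mp (XSi_disj G u i k hik)
        (Finset.mem_of_mem_erase hw) hwC.1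
  have hdisjBC : Disjoint B C := by
    apply Finset.disjoint_filter_filter (XSi_disj G u j k hjk)
  -- adjacency to v
  have hadj : ∀ w ∈ A ∪ B ∪ C, G.Adj v w := by
    intro w hw
    simp only [Finset.mem_union] at hw
    rcases hw with (hw | hw) | hw
    · rw [hAdef, Finset.mem_insert] at hw
      rcases hw with rfl | hw
      · exact hvadji
      · refine hcliq i ?_ ?_ (Finset.ne_of_mem_erase hw).symm
        · exact Finset.mem_coe.mpr (Finset.mem_insert_of_mem hv)
        · exact Finset.mem_coe.mpr (Finset.mem_insert_of_mem (Finset.mem_of_mem_erase hw))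
    · exact (Finset.mem_filter.mp hw).2
    · exact (Finset.mem_filter.mp hw).2
  -- the key bound
  have key : B.card / 2 + C.card / 2 < t := by
    by_contra hk
    push_neg at hk
    set M := min t ℓ with hM
    apply hF
    refine master ℓ G v A B C hAclique hBclique hCclique hdisjAB hdisjAC hdisjBC hadj
      (ℓ - M) (min (B.card / 2) M) (M - min (B.card / 2) M) ?_ ?_ ?_ ?_
    · rw [hAcard]; omega
    · omega
    · omega
    · omega
  -- conclude
  have hBCunion : ((Xj ∪ Xk).filter fun w => G.Adj v w) = B ∪ C := by
    rw [hBdef, hCdef, Finset.filter_union]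
  have hBCcard : ((Xj ∪ Xk).filter fun w => G.Adj v w).card = B.card + C.card := by
    rw [hBCunion, Finset.card_union_of_disjoint hdisjBC]
  refine ⟨by rw [hBCcard]; omega, by omega, fun h2 => by omega⟩
end

section
/- Let G contain no F_ℓ, with independent 5-set U, and let X_{1i} induce a complete graph with G[X_{1i} ∪ {u_i}] complete. Set t = 2ℓ − |X_{1i}|. Then every t-element subset S of N(u_i) \ X_{1i} contains a vertex v with |N(v) ∩ X_{1i}| < t. -/
lemma contains_fan_of_s11 {V : Type} (ℓ : ℕ) (G : SimpleGraph V) (w : V)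
    (p : Fin ℓ × Fin 2 → V) (hinj : Function.Injective p) (hne : ∀ x, p x ≠ w)
    (hadjw : ∀ x, G.Adj w (p x))
    (hedge : ∀ k, G.Adj (p (k, 0)) (p (k, 1))) : Contains (fan ℓ) G := by
  refine ⟨fun o => o.elim w p, ?_, ?_⟩
  · intro a b hab
    match a, b with
    | none, none => rfl
    | none, some x => exact absurd hab.symm (hne x)
    | some x, none => exact absurd hab (hne x)
    | some x, some y => exact congrArg some (hinj hab)
  · intro a b hab
    rw [fan, SimpleGraph.fromRel_adj] at hab
    obtain ⟨hne', hr⟩ := hab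
    have key : ∀ x y : Fin ℓ × Fin 2, x ≠ y → x.1 = y.1 → G.Adj (p x) (p y) := by
      rintro ⟨k, a⟩ ⟨k', b⟩ hxy (h : k = k')
      subst h
      have hab2 : a ≠ b := fun h => hxy (by rw [h])
      have : (a = 0 ∧ b = 1) ∨ (a = 1 ∧ b = 0) := by omega
      rcases this with ⟨h1, h2⟩ | ⟨h1, h2⟩ <;> subst h1 <;> subst h2
      · exact hedge k
      · exact (hedge k).symm
    match a, b with
    | none, none => exact absurd rfl hne'
    | none, some x => exact hadjw x
    | some x, none => exact (hadjw x).symm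
    | some x, some y =>
      have : x.1 = y.1 := by
        rcases hr with (h | h | ⟨j, a, b, h1, h2⟩) | (h | h | ⟨j, a, b, h1, h2⟩) <;>
          simp_all
      exact key x y (fun h => hne' (by rw [h])) this

theorem t_matching_lemma {V : Type} [Fintype V] [DecidableEq V] (ℓ : ℕ)
    (G : SimpleGraph V) [DecidableRel G.Adj]
    (hF : ¬ Contains (fan ℓ) G)
    (u : Fin 5 → V) (hu : Function.Injective u)
    (huI : (Set.range u).Pairwise fun a b => ¬ G.Adj a b)
    (i : Fin 5)
    (hcliq : G.IsClique (↑(insert (u i) (XSi G u 1 i)) : Set V))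
    (t : ℕ) (ht : (XSi G u 1 i).card + t = 2 * ℓ)
    (S : Finset V) (hS : S ⊆ G.neighborFinset (u i) \ XSi G u 1 i)
    (hScard : S.card = t) :
    ∃ v ∈ S, ((XSi G u 1 i).filter fun w => G.Adj v w).card < t := by
  by_contra hcon
  push_neg at hcon
  set X := XSi G u 1 i with hX
  -- basic facts
  have hXne : ∀ v ∈ X, ∀ j, v ≠ u j := by
    intro v hv j
    simp only [hX, XSi, XS, Finset.mem_filter, Finset.mem_univ, true_and] at hv
    exact hv.1.1 j
  have hXadj : ∀ v ∈ X, G.Adj (u i) v := by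
    intro v hv
    exact hcliq (by simp) (by simp [Finset.mem_insert, hv]) (Ne.symm (hXne v hv i))
  have hXcliq : ∀ v ∈ X, ∀ w ∈ X, v ≠ w → G.Adj v w := by
    intro v hv w hw hvw
    exact hcliq (by simp [Finset.mem_insert, hv]) (by simp [Finset.mem_insert, hw]) hvw
  have hSadj : ∀ v ∈ S, G.Adj (u i) v := by
    intro v hv
    have := hS hv
    rw [Finset.mem_sdiff, SimpleGraph.mem_neighborFinset] at this
    exact this.1
  have hSX : ∀ v ∈ S, v ∉ X := by
    intro v hv
    have := hS hv
    rw [Finset.mem_sdiff] at this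
    exact this.2
  -- Hall's theorem: matching from S into X
  have hall : ∃ f : ↥S → V, Function.Injective f ∧
      ∀ x : ↥S, f x ∈ X.filter (fun w => G.Adj ↑x w) := by
    rw [← Finset.all_card_le_biUnion_card_iff_existsInjective']
    intro s
    rcases s.eq_empty_or_nonempty with rfl | ⟨v, hv⟩
    · simp
    · calc s.card ≤ Finset.univ.card := Finset.card_le_card (Finset.subset_univ s)
        _ = S.card := by rw [Finset.card_univ, Fintype.card_coe]
        _ = t := hScard
        _ ≤ (X.filter (fun w => G.Adj ↑v w)).card := hcon ↑v v.2
        _ ≤ (s.biUnion fun x : ↥S => X.filter (fun w => G.Adj ↑x w)).card :=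
          Finset.card_le_card
            (Finset.subset_biUnion_of_mem (fun x : ↥S => X.filter fun w => G.Adj ↑x w) hv)
  obtain ⟨f, hfinj, hfmem⟩ := hall
  have hfX : ∀ x : ↥S, f x ∈ X := fun x => (Finset.mem_filter.mp (hfmem x)).1
  have hfadj : ∀ x : ↥S, G.Adj ↑x (f x) := fun x => (Finset.mem_filter.mp (hfmem x)).2
  set I : Finset V := Finset.univ.image f with hI
  have hIX : I ⊆ X := by
    intro v hv
    simp only [hI, Finset.mem_image] at hv
    obtain ⟨x, _, rfl⟩ := hv
    exact hfX x
  have hIcard : I.card = t := by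
    rw [hI, Finset.card_image_of_injective _ hfinj, Finset.card_univ, Fintype.card_coe,
      hScard]
  have htl : t ≤ ℓ := by
    have := Finset.card_le_card hIX
    omega
  have hXcard : X.card = 2 * ℓ - t := by omega
  set Y : Finset V := X \ I with hY
  have hYcard : Y.card = 2 * (ℓ - t) := by
    rw [hY, Finset.card_sdiff_of_subset hIX, hXcard, hIcard]
    omega
  have hYX : Y ⊆ X := Finset.sdiff_subset
  have hYI : ∀ v ∈ Y, v ∉ I := by
    intro v hv
    exact (Finset.mem_sdiff.mp hv).2
  -- equivs
  let e1 : ↥S ≃ Fin t := S.equivFin.trans (finCongr hScard)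
  let e2 : ↥Y ≃ Fin (2 * (ℓ - t)) := Y.equivFin.trans (finCongr hYcard)
  have hℓ : t + (ℓ - t) = ℓ := by omega
  -- define the fan embedding
  let p : Fin ℓ × Fin 2 → V := fun x =>
    Sum.elim (fun j => if x.2 = 0 then ↑(e1.symm j) else f (e1.symm j))
      (fun j : Fin (ℓ - t) => ↑(e2.symm ⟨2 * j.val + x.2.val, by omega⟩))
      (finSumFinEquiv.symm (Fin.cast hℓ.symm x.1))
  -- membership facts about p
  have hpval : ∀ (x : Fin ℓ × Fin 2), p x ∈ S ∨ p x ∈ X := by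
    intro x
    simp only [p]
    rcases h : finSumFinEquiv.symm (Fin.cast hℓ.symm x.1) with j | j <;>
      simp only [Sum.elim_inl, Sum.elim_inr]
    · rcases eq_or_ne x.2 0 with h2 | h2
      · simp only [h2, if_pos rfl]
        exact Or.inl (e1.symm j).2
      · simp only [if_neg h2]
        exact Or.inr (hfX _)
    · exact Or.inr (hYX (e2.symm _).2)
  have hpne : ∀ x, p x ≠ u i := by
    intro x
    rcases hpval x with h | h
    · exact fun he => G.irrefl (he ▸ hSadj _ h)
    · exact hXne _ h i
  have hpadjw : ∀ x, G.Adj (u i) (p x) := by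
    intro x
    rcases hpval x with h | h
    · exact hSadj _ h
    · exact hXadj _ h
  -- injectivity
  have hpinj : Function.Injective p := by
    intro x y hxy
    simp only [p] at hxy
    rcases h1 : finSumFinEquiv.symm (Fin.cast hℓ.symm x.1) with j1 | j1 <;>
      rcases h2 : finSumFinEquiv.symm (Fin.cast hℓ.symm y.1) with j2 | j2 <;>
      rw [h1, h2] at hxy <;> simp only [Sum.elim_inl, Sum.elim_inr] at hxy
    · -- inl inl
      have hk : x.1 = y.1 → x.2 = y.2 → x = y := fun a b => Prod.ext a b
      have hjj : j1 = j2 ∧ x.2 = y.2 := by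
        rcases eq_or_ne x.2 0 with e | e <;> rcases eq_or_ne y.2 0 with e' | e'
        · rw [e, e', if_pos rfl, if_pos rfl] at hxy
          refine ⟨?_, by rw [e, e']⟩
          exact e1.symm.injective (Subtype.coe_injective hxy)
        · rw [e, if_pos rfl, if_neg e'] at hxy
          exact absurd (hxy ▸ hfX (e1.symm j2)) (hSX _ (e1.symm j1).2)
        · rw [if_neg e, e', if_pos rfl] at hxy
          exact absurd (hxy ▸ hfX (e1.symm j1)) (hSX _ (e1.symm j2).2)
        · rw [if_neg e, if_neg e'] at hxy
          refine ⟨e1.symm.injective (hfinj hxy), ?_⟩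
          omega
      have : Fin.cast hℓ.symm x.1 = Fin.cast hℓ.symm y.1 := by
        apply finSumFinEquiv.symm.injective
        rw [h1, h2, hjj.1]
      exact hk (by simpa [Fin.ext_iff] using this) hjj.2
    · -- inl inr : S-or-I vs Y
      exfalso
      rcases eq_or_ne x.2 0 with e | e
      · rw [e, if_pos rfl] at hxy
        exact hSX _ (e1.symm j1).2 (hxy ▸ hYX (e2.symm _).2)
      · rw [if_neg e] at hxy
        exact hYI _ (e2.symm _).2 (hxy ▸ Finset.mem_image_of_mem f (Finset.mem_univ _))
    · exfalso
      rcases eq_or_ne y.2 0 with e | e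
      · rw [e, if_pos rfl] at hxy
        exact hSX _ (e1.symm j2).2 (hxy ▸ hYX (e2.symm _).2)
      · rw [if_neg e] at hxy
        exact hYI _ (e2.symm _).2 (hxy.symm ▸ Finset.mem_image_of_mem f (Finset.mem_univ _))
    · -- inr inr
      have := e2.symm.injective (Subtype.coe_injective hxy)
      have hnum : 2 * j1.val + x.2.val = 2 * j2.val + y.2.val := by
        simpa [Fin.ext_iff] using this
      have hx2 : x.2.val < 2 := x.2.2
      have hy2 : y.2.val < 2 := y.2.2
      have hj : j1 = j2 := by
        apply Fin.ext; omega
      have h22 : x.2 = y.2 := by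
        apply Fin.ext; omega
      have : Fin.cast hℓ.symm x.1 = Fin.cast hℓ.symm y.1 := by
        apply finSumFinEquiv.symm.injective
        rw [h1, h2, hj]
      exact Prod.ext (by simpa [Fin.ext_iff] using this) h22
  -- edges
  have hpedge : ∀ k, G.Adj (p (k, 0)) (p (k, 1)) := by
    intro k
    simp only [p]
    rcases h : finSumFinEquiv.symm (Fin.cast hℓ.symm k) with j | j <;>
      simp only [Sum.elim_inl, Sum.elim_inr]
    · simp only [if_pos rfl, if_neg (by decide : (1 : Fin 2) ≠ 0)]
      exact hfadj (e1.symm j)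
    · have hne2 : (e2.symm ⟨2 * j.val + (0:Fin 2).val, by omega⟩ : V) ≠
          ↑(e2.symm ⟨2 * j.val + (1:Fin 2).val, by omega⟩) := by
        intro he
        have := e2.symm.injective (Subtype.coe_injective he)
        simp [Fin.ext_iff] at this
      exact hXcliq _ (hYX (e2.symm _).2) _ (hYX (e2.symm _).2) hne2
  exact hF (contains_fan_of_s11 ℓ G (u i) p hpinj hpne hpadjw hpedge)
end

section
/- Let G be a graph on 10ℓ+1 vertices (ℓ ≥ 6) with no F_ℓ and independence number 5, with independent set U = {u_1,…,u_5}. If d(u_i) = 2ℓ+3 for some i, then there exists a 4-element set Q_i ⊆ N(u_i) \ X_{1i} such that Q_i ∪ {w} is an independent 5-set for every w ∈ X_{1i}. -/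
set_option linter.unusedSectionVars false
set_option maxHeartbeats 1000000

/-- A set of edges forming a matching inside vertex set `s`. -/
def IsM {V : Type} [DecidableEq V] (G : SimpleGraph V) (s : Finset V) (t : Finset (V × V)) : Prop :=
  (∀ p ∈ t, G.Adj p.1 p.2 ∧ p.1 ∈ s ∧ p.2 ∈ s) ∧
  ∀ p ∈ t, ∀ q ∈ t, p ≠ q → p.1 ≠ q.1 ∧ p.1 ≠ q.2 ∧ p.2 ≠ q.1 ∧ p.2 ≠ q.2

def Mverts {V : Type} [DecidableEq V] (t : Finset (V × V)) : Finset V :=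
  t.image Prod.fst ∪ t.image Prod.snd

section Aux

variable {V : Type} [DecidableEq V] {G : SimpleGraph V} {s : Finset V} {t : Finset (V × V)}

lemma mem_Mverts {v : V} : v ∈ Mverts t ↔ ∃ p ∈ t, v = p.1 ∨ v = p.2 := by
  simp only [Mverts, Finset.mem_union, Finset.mem_image]
  constructor
  · rintro (⟨p, hp, rfl⟩ | ⟨p, hp, rfl⟩) <;> exact ⟨p, hp, by simp⟩
  · rintro ⟨p, hp, rfl | rfl⟩
    · exact Or.inl ⟨p, hp, rfl⟩
    · exact Or.inr ⟨p, hp, rfl⟩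

lemma Mverts_mono {t' : Finset (V × V)} (h : t ⊆ t') : Mverts t ⊆ Mverts t' := by
  intro v hv
  rw [mem_Mverts] at hv ⊢
  obtain ⟨p, hp, hv⟩ := hv
  exact ⟨p, h hp, hv⟩

lemma IsM_subset {t' : Finset (V × V)} (hsub : t' ⊆ t) (h : IsM G s t) : IsM G s t' :=
  ⟨fun p hp => h.1 p (hsub hp), fun p hp q hq hne => h.2 p (hsub hp) q (hsub hq) hne⟩

lemma Mverts_subset (h : IsM G s t) : Mverts t ⊆ s := by
  intro v hv
  rw [mem_Mverts] at hv
  obtain ⟨p, hp, rfl | rfl⟩ := hv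
  · exact (h.1 p hp).2.1
  · exact (h.1 p hp).2.2

lemma not_mem_Mverts_erase (h : IsM G s t) {p : V × V} (hp : p ∈ t) :
    p.1 ∉ Mverts (t.erase p) ∧ p.2 ∉ Mverts (t.erase p) := by
  constructor <;>
  · intro hmem
    rw [mem_Mverts] at hmem
    obtain ⟨q, hq, hv⟩ := hmem
    have hqt : q ∈ t := Finset.mem_of_mem_erase hq
    have hne : p ≠ q := (Finset.ne_of_mem_erase hq).symm
    have h4 := h.2 p hp q hqt hne
    rcases hv with hv | hv <;> simp_all

lemma not_mem_of_fst_not_mem {a x : V} (ha : a ∉ Mverts t) : (a, x) ∉ t := by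
  intro h
  exact ha (mem_Mverts.2 ⟨(a, x), h, Or.inl rfl⟩)

lemma IsM_insert (h : IsM G s t) {a b : V} (ha : a ∈ s) (hb : b ∈ s) (hadj : G.Adj a b)
    (hav : a ∉ Mverts t) (hbv : b ∉ Mverts t) : IsM G s (insert (a, b) t) := by
  constructor
  · intro p hp
    rcases Finset.mem_insert.1 hp with rfl | hp
    · exact ⟨hadj, ha, hb⟩
    · exact h.1 p hp
  · intro p hp q hq hne
    have key : ∀ r ∈ t, a ≠ r.1 ∧ a ≠ r.2 ∧ b ≠ r.1 ∧ b ≠ r.2 := by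
      intro r hr
      refine ⟨?_, ?_, ?_, ?_⟩ <;> rintro rfl
      · exact hav (mem_Mverts.2 ⟨r, hr, Or.inl rfl⟩)
      · exact hav (mem_Mverts.2 ⟨r, hr, Or.inr rfl⟩)
      · exact hbv (mem_Mverts.2 ⟨r, hr, Or.inl rfl⟩)
      · exact hbv (mem_Mverts.2 ⟨r, hr, Or.inr rfl⟩)
    rcases Finset.mem_insert.1 hp with rfl | hp <;> rcases Finset.mem_insert.1 hq with rfl | hq
    · exact absurd rfl hne
    · exact key q hq
    · have := key p hp
      exact ⟨this.1.symm, this.2.2.1.symm, this.2.1.symm, this.2.2.2.symm⟩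
    · exact h.2 p hp q hq hne

lemma Mverts_insert {p : V × V} {v : V} :
    v ∈ Mverts (insert p t) ↔ v = p.1 ∨ v = p.2 ∨ v ∈ Mverts t := by
  simp only [mem_Mverts, Finset.mem_insert]
  constructor
  · rintro ⟨q, rfl | hq, hv⟩
    · tauto
    · exact Or.inr (Or.inr ⟨q, hq, hv⟩)
  · rintro (rfl | rfl | ⟨q, hq, hv⟩)
    · exact ⟨p, Or.inl rfl, Or.inl rfl⟩
    · exact ⟨p, Or.inl rfl, Or.inr rfl⟩
    · exact ⟨q, Or.inr hq, hv⟩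

lemma Mverts_card : ∀ {t : Finset (V × V)}, IsM G s t → (Mverts t).card = 2 * t.card := by
  intro t
  induction t using Finset.induction_on with
  | empty => intro _; simp [Mverts]
  | @insert p t hp ih =>
    intro h
    have hsub : IsM G s t := IsM_subset (Finset.subset_insert _ _) h
    have hmem : p ∈ insert p t := Finset.mem_insert_self _ _
    have h12 : p.1 ≠ p.2 := (h.1 p hmem).1.ne
    have h1 : p.1 ∉ Mverts t := by
      intro hc
      rw [mem_Mverts] at hc
      obtain ⟨q, hq, hv⟩ := hc
      have hne : p ≠ q := by rintro rfl; exact hp hq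
      have h4 := h.2 p hmem q (Finset.mem_insert_of_mem hq) hne
      rcases hv with hv | hv <;> simp_all
    have h2 : p.2 ∉ Mverts t := by
      intro hc
      rw [mem_Mverts] at hc
      obtain ⟨q, hq, hv⟩ := hc
      have hne : p ≠ q := by rintro rfl; exact hp hq
      have h4 := h.2 p hmem q (Finset.mem_insert_of_mem hq) hne
      rcases hv with hv | hv <;> simp_all
    have hset : Mverts (insert p t) = insert p.1 (insert p.2 (Mverts t)) := by
      ext v
      simp [Mverts_insert, Finset.mem_insert]
    rw [hset, Finset.card_insert_of_notMem (by simp [Finset.mem_insert, h12, h1]),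
      Finset.card_insert_of_notMem h2, ih hsub, Finset.card_insert_of_notMem hp]
    ring

lemma exists_edge (h6 : ∀ s : Finset V, (↑s : Set V).Pairwise (fun a b => ¬ G.Adj a b) → s.card ≤ 5)
    {s : Finset V} (hs : 6 ≤ s.card) : ∃ a ∈ s, ∃ b ∈ s, a ≠ b ∧ G.Adj a b := by
  by_contra h
  push_neg at h
  have := h6 s (fun a ha b hb hne => h a ha b hb hne)
  omega

lemma ramsey5 (h6 : ∀ s : Finset V, (↑s : Set V).Pairwise (fun a b => ¬ G.Adj a b) → s.card ≤ 5) :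
    ∀ (n : ℕ) (s : Finset V), s.card ≤ n → ∃ t, IsM G s t ∧ t.card = s.card / 2 - 2 := by
  intro n
  induction n with
  | zero =>
    intro s hs
    refine ⟨∅, ⟨by simp, by simp⟩, ?_⟩
    simp only [Nat.le_zero] at hs
    simp [hs]
  | succ n ih =>
    intro s hs
    by_cases hle : s.card ≤ 5
    · refine ⟨∅, ⟨by simp, by simp⟩, by simp; omega⟩
    · push_neg at hle
      obtain ⟨a, ha, b, hb, hab, hadj⟩ := exists_edge h6 hle
      have hsub : ({a, b} : Finset V) ⊆ s := by
        intro x hx; rcases Finset.mem_insert.1 hx with rfl | hx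
        · exact ha
        · rw [Finset.mem_singleton] at hx; subst hx; exact hb
      have hcard2 : ({a, b} : Finset V).card = 2 := Finset.card_pair hab
      have hcard' : (s \ {a, b}).card = s.card - 2 := by
        rw [Finset.card_sdiff_of_subset hsub, hcard2]
      obtain ⟨t, hM, hc⟩ := ih (s \ {a, b}) (by omega)
      have hMs : IsM G s t := by
        refine ⟨fun p hp => ?_, hM.2⟩
        obtain ⟨h1, h2, h3⟩ := hM.1 p hp
        exact ⟨h1, (Finset.sdiff_subset) h2, (Finset.sdiff_subset) h3⟩
      have hsubM : Mverts t ⊆ s \ {a, b} := Mverts_subset hM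
      have hav : a ∉ Mverts t := fun h => by
        have := hsubM h; rw [Finset.mem_sdiff] at this; simp at this
      have hbv : b ∉ Mverts t := fun h => by
        have := hsubM h; rw [Finset.mem_sdiff] at this; simp at this
      refine ⟨insert (a, b) t, IsM_insert hMs ha hb hadj hav hbv, ?_⟩
      rw [Finset.card_insert_of_notMem (not_mem_of_fst_not_mem hav), hc, hcard']
      omega

end Aux

lemma matching_to_fan {V : Type} [Fintype V] [DecidableEq V] (G : SimpleGraph V)
    [DecidableRel G.Adj] (ℓ : ℕ) (v : V) (t : Finset (V × V))
    (hM : IsM G (G.neighborFinset v) t) (hc : t.card = ℓ) :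
    Contains (fan ℓ) G := by
  have e : Fin ℓ ≃ {x // x ∈ t} := ((t.equivFin).trans (finCongr hc)).symm
  set g : Fin ℓ → V × V := fun j => (e j : V × V) with hg
  have hginj : Function.Injective g := fun j k h => e.injective (Subtype.ext h)
  have hgmem : ∀ j, g j ∈ t := fun j => (e j).2
  have hadjg : ∀ j, G.Adj (g j).1 (g j).2 := fun j => (hM.1 (g j) (hgmem j)).1
  have hmem1 : ∀ j, (g j).1 ∈ G.neighborFinset v := fun j => (hM.1 (g j) (hgmem j)).2.1
  have hmem2 : ∀ j, (g j).2 ∈ G.neighborFinset v := fun j => (hM.1 (g j) (hgmem j)).2.2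
  have hav1 : ∀ j, G.Adj v (g j).1 := fun j => (SimpleGraph.mem_neighborFinset _ _ _).1 (hmem1 j)
  have hav2 : ∀ j, G.Adj v (g j).2 := fun j => (SimpleGraph.mem_neighborFinset _ _ _).1 (hmem2 j)
  classical
  refine ⟨fun o => o.elim v (fun jc => if jc.2 = 0 then (g jc.1).1 else (g jc.1).2), ?_, ?_⟩
  · rintro (_ | ⟨j, c⟩) (_ | ⟨j', c'⟩) h
    · rfl
    · simp only [Option.elim] at h
      by_cases hc0 : c' = 0 <;> simp [hc0] at h
      · exact absurd h (hav1 j').ne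
      · exact absurd h (hav2 j').ne
    · simp only [Option.elim] at h
      by_cases hc0 : c = 0 <;> simp [hc0] at h
      · exact absurd h.symm (hav1 j).ne
      · exact absurd h.symm (hav2 j).ne
    · simp only [Option.elim] at h
      have hjj : j = j' := by
        by_contra hne
        have hgne : g j ≠ g j' := fun hh => hne (hginj hh)
        obtain ⟨n11, n12, n21, n22⟩ := hM.2 (g j) (hgmem j) (g j') (hgmem j') hgne
        fin_cases c <;> fin_cases c' <;> simp at h <;> tauto
      subst hjj
      have hcc : c = c' := by
        by_contra hne
        have h12 := (hadjg j).ne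
        fin_cases c <;> fin_cases c' <;> simp at h hne ⊢ <;> tauto
      rw [hcc]
  · rintro (_ | ⟨j, c⟩) (_ | ⟨j', c'⟩) hxy <;>
      simp only [fan, SimpleGraph.fromRel_adj] at hxy
    · exact absurd rfl hxy.1
    · simp only [Option.elim]
      by_cases hc0 : c' = 0 <;> simp [hc0]
      · exact hav1 j'
      · exact hav2 j'
    · simp only [Option.elim]
      by_cases hc0 : c = 0 <;> simp [hc0]
      · exact (hav1 j).symm
      · exact (hav2 j).symm
    · obtain ⟨hne, hrel⟩ := hxy
      have hjj : j = j' := by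
        rcases hrel with (h | h | ⟨i', a', b', h1, h2⟩) | (h | h | ⟨i', a', b', h1, h2⟩) <;>
          simp_all
      subst hjj
      have hcc : c ≠ c' := fun h => hne (by rw [h])
      simp only [Option.elim]
      fin_cases c <;> fin_cases c' <;> simp_all
      exact (hadjg j).symm

theorem Q_exists {V : Type} [Fintype V] [DecidableEq V] (ℓ : ℕ) (hℓ : 6 ≤ ℓ)
    (G : SimpleGraph V) [DecidableRel G.Adj]
    (hcard : Fintype.card V = 10 * ℓ + 1)
    (hF : ¬ Contains (fan ℓ) G)
    (u : Fin 5 → V) (hu : Function.Injective u)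
    (huI : (Set.range u).Pairwise fun a b => ¬ G.Adj a b)
    (h6 : ∀ s : Finset V, (↑s : Set V).Pairwise (fun a b => ¬ G.Adj a b) → s.card ≤ 5)
    (i : Fin 5) (hdeg : G.degree (u i) = 2 * ℓ + 3) :
    ∃ Q : Finset V, Q.card = 4 ∧ Q ⊆ G.neighborFinset (u i) \ XSi G u 1 i ∧
      ∀ w ∈ XSi G u 1 i, (insert w Q).card = 5 ∧
        (↑(insert w Q) : Set V).Pairwise (fun a b => ¬ G.Adj a b) := by
  classical
  set N : Finset V := G.neighborFinset (u i) with hNdef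
  set X : Finset V := XSi G u 1 i with hXdef
  have hN : N.card = 2 * ℓ + 3 := by
    rw [hNdef, G.card_neighborFinset_eq_degree]; exact hdeg
  have hXmem : ∀ v ∈ X, (∀ j, v ≠ u j) ∧
      (Finset.univ.filter fun j => G.Adj v (u j)).card = 1 ∧ G.Adj v (u i) := by
    intro v hv
    rw [hXdef, XSi, Finset.mem_filter, XS, Finset.mem_filter] at hv
    exact ⟨hv.1.2.1, hv.1.2.2, hv.2⟩
  have hXN : X ⊆ N := fun v hv =>
    (SimpleGraph.mem_neighborFinset _ _ _).2 ((hXmem v hv).2.2).symm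
  have hX1 : ∀ v ∈ X, ∀ j, j ≠ i → ¬ G.Adj v (u j) := by
    intro v hv j hj hadj
    obtain ⟨_, hcard1, hadji⟩ := hXmem v hv
    have hi : i ∈ Finset.univ.filter fun j => G.Adj v (u j) := by simp [hadji]
    have hjmem : j ∈ Finset.univ.filter fun j => G.Adj v (u j) := by simp [hadj]
    obtain ⟨a, ha⟩ := Finset.card_eq_one.1 hcard1
    rw [ha, Finset.mem_singleton] at hi hjmem
    exact hj (hjmem.trans hi.symm)
  have clique : ∀ a ∈ X, ∀ b ∈ X, a ≠ b → G.Adj a b := by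
    intro a ha b hb hab
    by_contra hnadj
    set T : Finset V := insert a (insert b ((Finset.univ.erase i).image u)) with hT
    have hmemT : ∀ x ∈ T, x = a ∨ x = b ∨ ∃ j, j ≠ i ∧ x = u j := by
      intro x hx
      rw [hT, Finset.mem_insert, Finset.mem_insert] at hx
      rcases hx with rfl | rfl | hx
      · tauto
      · tauto
      · right; right
        obtain ⟨j, hj, rfl⟩ := Finset.mem_image.1 hx
        exact ⟨j, Finset.ne_of_mem_erase hj, rfl⟩
    have hpair : (↑T : Set V).Pairwise fun a b => ¬ G.Adj a b := by
      intro x hx y hy hne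
      rw [Finset.mem_coe] at hx hy
      have nadjaj : ∀ j, j ≠ i → ¬ G.Adj a (u j) := fun j hj => hX1 a ha j hj
      have nadjbj : ∀ j, j ≠ i → ¬ G.Adj b (u j) := fun j hj => hX1 b hb j hj
      rcases hmemT x hx with rfl | rfl | ⟨j, hj, rfl⟩ <;>
        rcases hmemT y hy with rfl | rfl | ⟨k, hk, rfl⟩
      · exact absurd rfl hne
      · exact hnadj
      · exact nadjaj k hk
      · exact fun h => hnadj h.symm
      · exact absurd rfl hne
      · exact nadjbj k hk
      · exact fun h => nadjaj j hj h.symm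
      · exact fun h => nadjbj j hj h.symm
      · exact huI ⟨j, rfl⟩ ⟨k, rfl⟩ hne
    have hTcard : T.card = 6 := by
      have himg : ((Finset.univ.erase i).image u).card = 4 := by
        rw [Finset.card_image_of_injective _ hu, Finset.card_erase_of_mem (Finset.mem_univ i)]
        simp
      have hanotu : ∀ j, a ≠ u j := (hXmem a ha).1
      have hbnotu : ∀ j, b ≠ u j := (hXmem b hb).1
      have hbni : b ∉ (Finset.univ.erase i).image u := by
        intro hbmem
        obtain ⟨j, _, hj⟩ := Finset.mem_image.1 hbmem
        exact hbnotu j hj.symm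
      have hani : a ∉ insert b ((Finset.univ.erase i).image u) := by
        rw [Finset.mem_insert]
        rintro (rfl | hamem)
        · exact hab rfl
        · obtain ⟨j, _, hj⟩ := Finset.mem_image.1 hamem
          exact hanotu j hj.symm
      rw [hT, Finset.card_insert_of_notMem hani, Finset.card_insert_of_notMem hbni, himg]
    have := h6 T hpair
    omega
  have hnoL : ∀ t : Finset (V × V), IsM G N t → t.card ≠ ℓ := by
    intro t ht hc
    exact hF (matching_to_fan G ℓ (u i) t ht hc)
  obtain ⟨M0, hM0, hM0card'⟩ := ramsey5 (G := G) h6 N.card N le_rfl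
  have hM0card : M0.card = ℓ - 1 := by rw [hM0card', hN]; omega
  set W : Finset V := N \ Mverts M0 with hWdef
  have hWsub : ∀ w ∈ W, w ∈ N ∧ w ∉ Mverts M0 := fun w hw => Finset.mem_sdiff.1 hw
  have hW5 : W.card = 5 := by
    rw [hWdef, Finset.card_sdiff_of_subset (Mverts_subset hM0), Mverts_card hM0, hN, hM0card]
    omega
  have unc : ∀ t : Finset (V × V), IsM G N t → t.card = ℓ - 1 →
      ∀ a ∈ N \ Mverts t, ∀ b ∈ N \ Mverts t, a ≠ b → ¬ G.Adj a b := by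
    intro t ht htc a ha b hb hab hadj
    rw [Finset.mem_sdiff] at ha hb
    have h' := IsM_insert ht ha.1 hb.1 hadj ha.2 hb.2
    apply hnoL _ h'
    rw [Finset.card_insert_of_notMem (not_mem_of_fst_not_mem ha.2), htc]
    omega
  have hWindep : ∀ a ∈ W, ∀ b ∈ W, a ≠ b → ¬ G.Adj a b := by
    intro a ha b hb hab
    exact unc M0 hM0 hM0card a (hWdef ▸ ha) b (hWdef ▸ hb) hab
  have exch1 : ∀ (x m : V) (p : V × V), p ∈ M0 → (x = p.1 ∨ x = p.2) → (m = p.1 ∨ m = p.2) →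
      x ≠ m → ∀ a ∈ W, G.Adj a x → ∀ w ∈ W, w ≠ a → ¬ G.Adj m w := by
    intro x m p hp hx hm hxm a ha hax w hw hwa
    obtain ⟨haN, haV⟩ := hWsub a ha
    obtain ⟨hwN, hwV⟩ := hWsub w hw
    have hxM : x ∈ Mverts M0 := mem_Mverts.2 ⟨p, hp, hx⟩
    have hmM : m ∈ Mverts M0 := mem_Mverts.2 ⟨p, hp, hm⟩
    have hxN : x ∈ N := Mverts_subset hM0 hxM
    have herase := not_mem_Mverts_erase hM0 hp
    have hxe : x ∉ Mverts (M0.erase p) := by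
      rcases hx with rfl | rfl
      exacts [herase.1, herase.2]
    have hme : m ∉ Mverts (M0.erase p) := by
      rcases hm with rfl | rfl
      exacts [herase.1, herase.2]
    have hbase : IsM G N (M0.erase p) := IsM_subset (Finset.erase_subset _ _) hM0
    have hae : a ∉ Mverts (M0.erase p) := fun h => haV (Mverts_mono (Finset.erase_subset _ _) h)
    have ht' : IsM G N (insert (a, x) (M0.erase p)) := IsM_insert hbase haN hxN hax hae hxe
    have htc' : (insert (a, x) (M0.erase p)).card = ℓ - 1 := by
      rw [Finset.card_insert_of_notMem (not_mem_of_fst_not_mem hae),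
        Finset.card_erase_of_mem hp, hM0card]
      omega
    have hm' : m ∈ N \ Mverts (insert (a, x) (M0.erase p)) := by
      rw [Finset.mem_sdiff]
      refine ⟨Mverts_subset hM0 hmM, ?_⟩
      rw [Mverts_insert]
      push_neg
      exact ⟨fun (h : m = a) => haV (h ▸ hmM), Ne.symm hxm, hme⟩
    have hw' : w ∈ N \ Mverts (insert (a, x) (M0.erase p)) := by
      rw [Finset.mem_sdiff]
      refine ⟨hwN, ?_⟩
      rw [Mverts_insert]
      push_neg
      exact ⟨hwa, fun (h : w = x) => hwV (h ▸ hxM), fun h => hwV (Mverts_mono (Finset.erase_subset _ _) h)⟩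
    have hmw : m ≠ w := fun h => hwV (h ▸ hmM)
    exact unc _ ht' htc' m hm' w hw' hmw
  have partner : ∀ x ∈ Mverts M0, ∃ p ∈ M0, ∃ m : V, (x = p.1 ∨ x = p.2) ∧
      (m = p.1 ∨ m = p.2) ∧ x ≠ m ∧ m ∈ Mverts M0 := by
    intro x hx
    obtain ⟨p, hp, hv⟩ := mem_Mverts.1 hx
    have hne := (hM0.1 p hp).1.ne
    rcases hv with rfl | rfl
    · exact ⟨p, hp, p.2, Or.inl rfl, Or.inr rfl, hne, mem_Mverts.2 ⟨p, hp, Or.inr rfl⟩⟩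
    · exact ⟨p, hp, p.1, Or.inr rfl, Or.inl rfl, fun h => hne h.symm,
        mem_Mverts.2 ⟨p, hp, Or.inl rfl⟩⟩
  have no6 : ∀ m : V, m ∉ W → (∀ w ∈ W, ¬ G.Adj m w) → False := by
    intro m hm hnadj
    have hsymm : Symmetric (fun a b : V => ¬ G.Adj a b) := fun a b h hadj => h hadj.symm
    have hpair : (↑(insert m W) : Set V).Pairwise fun a b => ¬ G.Adj a b := by
      rw [Finset.coe_insert, (haveI : Std.Symm (fun a b : V => ¬ G.Adj a b) := ⟨fun a b h => hsymm h⟩; Set.pairwise_insert_of_symm)]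
      constructor
      · intro x hx y hy hne
        exact hWindep x (Finset.mem_coe.1 hx) y (Finset.mem_coe.1 hy) hne
      · intro b hb _
        exact hnadj b (Finset.mem_coe.1 hb)
    have := h6 (insert m W) hpair
    rw [Finset.card_insert_of_notMem hm, hW5] at this
    omega
  have Lstar : ∀ x ∈ Mverts M0, ∀ a ∈ W, ∀ c ∈ W, a ≠ c → G.Adj a x → G.Adj c x → False := by
    intro x hx a ha c hc hac hax hcx
    obtain ⟨p, hp, m, hxp, hmp, hxm, hmM⟩ := partner x hx
    apply no6 m (fun h => (hWsub m h).2 hmM)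
    intro w hw
    by_cases hwa : w = a
    · subst hwa
      exact exch1 x m p hp hxp hmp hxm c hc hcx w hw hac
    · exact exch1 x m p hp hxp hmp hxm a ha hax w hw hwa
  obtain ⟨Q, hQW, hQcard, hQX, hQnadj⟩ : ∃ Q : Finset V, Q ⊆ W ∧ Q.card = 4 ∧
      (∀ q ∈ Q, q ∉ X) ∧ (∀ q ∈ Q, ∀ x ∈ X, ¬ G.Adj q x) := by
    by_cases hWX : ∃ c ∈ W, c ∈ X
    · obtain ⟨c, hcW, hcX⟩ := hWX
      have hclean : ∀ w ∈ W, w ≠ c → ∀ x ∈ X, ¬ G.Adj w x := by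
        intro w hw hwc x hx hadj
        have hxc : x ≠ c := fun h => hWindep w hw c hcW hwc (h ▸ hadj)
        have hxW : x ∉ W := fun hxWmem =>
          hWindep c hcW x hxWmem (Ne.symm hxc) (clique c hcX x hx (Ne.symm hxc))
        have hxM : x ∈ Mverts M0 := by
          by_contra hnot
          exact hxW (Finset.mem_sdiff.2 ⟨hXN hx, hnot⟩)
        exact Lstar x hxM w hw c hcW hwc hadj (clique c hcX x hx (Ne.symm hxc))
      refine ⟨W.erase c, Finset.erase_subset _ _, ?_, ?_, ?_⟩
      · rw [Finset.card_erase_of_mem hcW, hW5]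
      · intro q hq hqX
        have hqW := Finset.mem_of_mem_erase hq
        have hqc := Finset.ne_of_mem_erase hq
        exact hWindep q hqW c hcW hqc (clique q hqX c hcX hqc)
      · intro q hq x hx
        exact hclean q (Finset.mem_of_mem_erase hq) (Finset.ne_of_mem_erase hq) x hx
    · push_neg at hWX
      have hbad2 : ∀ a ∈ W, ∀ b ∈ W, a ≠ b → ∀ xa ∈ X, ∀ xb ∈ X,
          G.Adj a xa → G.Adj b xb → False := by
        intro a ha b hb hab xa hxa xb hxb haxa hbxb
        have hxaM : xa ∈ Mverts M0 := by
          by_contra hnot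
          exact hWX xa (Finset.mem_sdiff.2 ⟨hXN hxa, hnot⟩) hxa
        have hxbM : xb ∈ Mverts M0 := by
          by_contra hnot
          exact hWX xb (Finset.mem_sdiff.2 ⟨hXN hxb, hnot⟩) hxb
        have hxab : xa ≠ xb := by
          rintro rfl
          exact Lstar xa hxaM a ha b hb hab haxa hbxb
        obtain ⟨p, hp, ma, hxap, hmap, hxama, hmaM⟩ := partner xa hxaM
        obtain ⟨q, hq, mb, hxbq, hmbq, hxbmb, hmbM⟩ := partner xb hxbM
        have haN := (hWsub a ha).1
        have hbN := (hWsub b hb).1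
        have haV := (hWsub a ha).2
        have hbV := (hWsub b hb).2
        have hxaN : xa ∈ N := Mverts_subset hM0 hxaM
        have hxbN : xb ∈ N := Mverts_subset hM0 hxbM
        have hmaN : ma ∈ N := Mverts_subset hM0 hmaM
        have hmbN : mb ∈ N := Mverts_subset hM0 hmbM
        by_cases hpq : p = q
        · subst hpq
          have hbase : IsM G N (M0.erase p) := IsM_subset (Finset.erase_subset _ _) hM0
          have herase := not_mem_Mverts_erase hM0 hp
          have hxae : xa ∉ Mverts (M0.erase p) := by
            rcases hxap with rfl | rfl
            exacts [herase.1, herase.2]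
          have hxbe : xb ∉ Mverts (M0.erase p) := by
            rcases hxbq with rfl | rfl
            exacts [herase.1, herase.2]
          have hbe : b ∉ Mverts (M0.erase p) :=
            fun h => hbV (Mverts_mono (Finset.erase_subset _ _) h)
          have hae : a ∉ Mverts (M0.erase p) :=
            fun h => haV (Mverts_mono (Finset.erase_subset _ _) h)
          have ht1 : IsM G N (insert (b, xb) (M0.erase p)) :=
            IsM_insert hbase hbN hxbN hbxb hbe hxbe
          have hamem : a ∉ Mverts (insert (b, xb) (M0.erase p)) := by
            rw [Mverts_insert]
            push_neg
            exact ⟨hab, fun (h : a = xb) => haV (h ▸ hxbM), hae⟩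
          have hxamem : xa ∉ Mverts (insert (b, xb) (M0.erase p)) := by
            rw [Mverts_insert]
            push_neg
            exact ⟨fun (h : xa = b) => hbV (h ▸ hxaM), hxab, hxae⟩
          have ht2 : IsM G N (insert (a, xa) (insert (b, xb) (M0.erase p))) :=
            IsM_insert ht1 haN hxaN haxa hamem hxamem
          apply hnoL _ ht2
          rw [Finset.card_insert_of_notMem (not_mem_of_fst_not_mem hamem),
            Finset.card_insert_of_notMem (not_mem_of_fst_not_mem hbe),
            Finset.card_erase_of_mem hp, hM0card]
          omega
        · have hcomp : ∀ y z : V, (y = p.1 ∨ y = p.2) → (z = q.1 ∨ z = q.2) → y ≠ z := by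
            intro y z hy hz
            have h4 := hM0.2 p hp q hq hpq
            rcases hy with rfl | rfl <;> rcases hz with rfl | rfl <;> tauto
          have hama : G.Adj a ma := by
            by_contra hno
            apply no6 ma (fun h => (hWsub ma h).2 hmaM)
            intro w hw
            by_cases hwa : w = a
            · subst hwa
              exact fun h => hno h.symm
            · exact exch1 xa ma p hp hxap hmap hxama a ha haxa w hw hwa
          have hbmb : G.Adj b mb := by
            by_contra hno
            apply no6 mb (fun h => (hWsub mb h).2 hmbM)
            intro w hw
            by_cases hwb : w = b
            · subst hwb
              exact fun h => hno h.symm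
            · exact exch1 xb mb q hq hxbq hmbq hxbmb b hb hbxb w hw hwb
          have hqe : q ∈ M0.erase p := Finset.mem_erase.2 ⟨fun h => hpq h.symm, hq⟩
          have hbaseM : IsM G N ((M0.erase p).erase q) :=
            IsM_subset ((Finset.erase_subset _ _).trans (Finset.erase_subset _ _)) hM0
          have herasep := not_mem_Mverts_erase hM0 hp
          have heraseq := not_mem_Mverts_erase (IsM_subset (Finset.erase_subset _ _) hM0) hqe
          have hsubpq : Mverts ((M0.erase p).erase q) ⊆ Mverts (M0.erase p) :=
            Mverts_mono (Finset.erase_subset _ _)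
          have hsubM0 : Mverts ((M0.erase p).erase q) ⊆ Mverts M0 :=
            hsubpq.trans (Mverts_mono (Finset.erase_subset _ _))
          have hxabase : xa ∉ Mverts ((M0.erase p).erase q) := by
            intro h
            rcases hxap with rfl | rfl
            exacts [herasep.1 (hsubpq h), herasep.2 (hsubpq h)]
          have hmabase : ma ∉ Mverts ((M0.erase p).erase q) := by
            intro h
            rcases hmap with rfl | rfl
            exacts [herasep.1 (hsubpq h), herasep.2 (hsubpq h)]
          have hxbbase : xb ∉ Mverts ((M0.erase p).erase q) := by
            rcases hxbq with rfl | rfl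
            exacts [heraseq.1, heraseq.2]
          have hmbbase : mb ∉ Mverts ((M0.erase p).erase q) := by
            rcases hmbq with rfl | rfl
            exacts [heraseq.1, heraseq.2]
          have habase : a ∉ Mverts ((M0.erase p).erase q) := fun h => haV (hsubM0 h)
          have hbbase : b ∉ Mverts ((M0.erase p).erase q) := fun h => hbV (hsubM0 h)
          have hxamb : xa ≠ mb := hcomp xa mb hxap hmbq
          have hmaxb : ma ≠ xb := hcomp ma xb hmap hxbq
          have hmamb : ma ≠ mb := hcomp ma mb hmap hmbq
          have hadjxab : G.Adj xa xb := clique xa hxa xb hxb hxab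
          have ht1 : IsM G N (insert (xa, xb) ((M0.erase p).erase q)) :=
            IsM_insert hbaseM hxaN hxbN hadjxab hxabase hxbbase
          have hmb1 : mb ∉ Mverts (insert (xa, xb) ((M0.erase p).erase q)) := by
            rw [Mverts_insert]
            push_neg
            exact ⟨Ne.symm hxamb, Ne.symm hxbmb, hmbbase⟩
          have hb1 : b ∉ Mverts (insert (xa, xb) ((M0.erase p).erase q)) := by
            rw [Mverts_insert]
            push_neg
            exact ⟨fun (h : b = xa) => hbV (h ▸ hxaM), fun (h : b = xb) => hbV (h ▸ hxbM), hbbase⟩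
          have ht2 : IsM G N (insert (b, mb) (insert (xa, xb) ((M0.erase p).erase q))) :=
            IsM_insert ht1 hbN hmbN hbmb hb1 hmb1
          have ha2 : a ∉ Mverts (insert (b, mb) (insert (xa, xb) ((M0.erase p).erase q))) := by
            rw [Mverts_insert, Mverts_insert]
            push_neg
            exact ⟨hab, fun (h : a = mb) => haV (h ▸ hmbM), fun (h : a = xa) => haV (h ▸ hxaM),
              fun (h : a = xb) => haV (h ▸ hxbM), habase⟩
          have hma2 : ma ∉ Mverts (insert (b, mb) (insert (xa, xb) ((M0.erase p).erase q))) := by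
            rw [Mverts_insert, Mverts_insert]
            push_neg
            exact ⟨fun (h : ma = b) => hbV (h ▸ hmaM), hmamb, Ne.symm hxama, hmaxb, hmabase⟩
          have ht3 : IsM G N
              (insert (a, ma) (insert (b, mb) (insert (xa, xb) ((M0.erase p).erase q)))) :=
            IsM_insert ht2 haN hmaN hama ha2 hma2
          apply hnoL _ ht3
          rw [Finset.card_insert_of_notMem (not_mem_of_fst_not_mem ha2),
            Finset.card_insert_of_notMem (not_mem_of_fst_not_mem hb1),
            Finset.card_insert_of_notMem (not_mem_of_fst_not_mem hxabase),
            Finset.card_erase_of_mem hqe, Finset.card_erase_of_mem hp, hM0card]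
          omega
      have hgc : 4 ≤ (W.filter (fun w => ∀ x ∈ X, ¬ G.Adj w x)).card := by
        by_contra hlt
        push_neg at hlt
        have hsplit := Finset.card_filter_add_card_filter_not
          (s := W) (p := fun w => ∀ x ∈ X, ¬ G.Adj w x)
        have h2 : 2 ≤ (W.filter (fun w => ¬ ∀ x ∈ X, ¬ G.Adj w x)).card := by omega
        obtain ⟨a, ha, b, hb, hab⟩ := Finset.one_lt_card.1 h2
        rw [Finset.mem_filter] at ha hb
        obtain ⟨haW, ha'⟩ := ha
        obtain ⟨hbW, hb'⟩ := hb
        push_neg at ha' hb'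
        obtain ⟨xa, hxa, hxa'⟩ := ha'
        obtain ⟨xb, hxb, hxb'⟩ := hb'
        exact hbad2 a haW b hbW hab xa hxa xb hxb hxa' hxb'
      obtain ⟨Q, hQg, hQc⟩ := Finset.exists_subset_card_eq hgc
      refine ⟨Q, fun q hq => (Finset.mem_filter.1 (hQg hq)).1, hQc, ?_, ?_⟩
      · intro q hq
        exact hWX q (Finset.mem_filter.1 (hQg hq)).1
      · intro q hq x hx
        exact (Finset.mem_filter.1 (hQg hq)).2 x hx
  refine ⟨Q, hQcard, ?_, ?_⟩
  · intro q hq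
    rw [Finset.mem_sdiff]
    exact ⟨(hWsub q (hQW hq)).1, hQX q hq⟩
  · intro w hw
    have hwQ : w ∉ Q := fun h => hQX w h hw
    constructor
    · rw [Finset.card_insert_of_notMem hwQ, hQcard]
    · have hsymm : Symmetric (fun a b : V => ¬ G.Adj a b) := fun a b h hadj => h hadj.symm
      rw [Finset.coe_insert, (haveI : Std.Symm (fun a b : V => ¬ G.Adj a b) := ⟨fun a b h => hsymm h⟩; Set.pairwise_insert_of_symm)]
      constructor
      · intro x hx y hy hne
        exact hWindep x (hQW (Finset.mem_coe.1 hx)) y (hQW (Finset.mem_coe.1 hy)) hne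
      · intro q hq _
        exact fun hadj => hQnadj q (Finset.mem_coe.1 hq) w hw hadj.symm
end

section
/- Let G have independence number at most 5, with independent 5-set U = {u_1,…,u_5}, and distinct indices i,j,k. (a) If a ∈ X_{1i}, b ∈ X_{1j}, c ∈ X_{2i} ∩ X_{2j}, then {a,b,c} is not an independent set. (b) If a ∈ X_{1i}, b ∈ X_{1j}, c ∈ X_{1k}, d ∈ X_{3i} ∩ X_{3j} ∩ X_{3k}, then {a,b,c,d} is not independent. -/
lemma xsi_spec {V : Type} [Fintype V] [DecidableEq V] (G : SimpleGraph V) [DecidableRel G.Adj]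
    (u : Fin 5 → V) {s : ℕ} {i : Fin 5} {v : V} (hv : v ∈ XSi G u s i) :
    (∀ m, v ≠ u m) ∧ G.Adj v (u i) ∧
      (Finset.univ.filter fun m => G.Adj v (u m)).card = s := by
  simp only [XSi, XS, Finset.mem_filter, Finset.mem_univ, true_and] at hv
  tauto

lemma only_nbrs {V : Type} [Fintype V] [DecidableEq V] (G : SimpleGraph V) [DecidableRel G.Adj]
    (u : Fin 5 → V) {v : V} (T : Finset (Fin 5))
    (hsub : ∀ m ∈ T, G.Adj v (u m))
    (hcard : (Finset.univ.filter fun m => G.Adj v (u m)).card ≤ T.card) :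
    ∀ m, G.Adj v (u m) → m ∈ T := by
  intro m hm
  have h1 : T = Finset.univ.filter fun m => G.Adj v (u m) :=
    Finset.eq_of_subset_of_card_le
      (fun x hx => Finset.mem_filter.2 ⟨Finset.mem_univ x, hsub x hx⟩) hcard
  rw [h1]
  exact Finset.mem_filter.2 ⟨Finset.mem_univ m, hm⟩

theorem bridge_lemma {V : Type} [Fintype V] [DecidableEq V]
    (G : SimpleGraph V) [DecidableRel G.Adj]
    (u : Fin 5 → V) (hu : Function.Injective u)
    (huI : (Set.range u).Pairwise fun a b => ¬ G.Adj a b)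
    (h6 : ∀ s : Finset V, (↑s : Set V).Pairwise (fun a b => ¬ G.Adj a b) → s.card ≤ 5)
    (i j k : Fin 5) (hij : i ≠ j) (hik : i ≠ k) (hjk : j ≠ k) :
    (∀ a ∈ XSi G u 1 i, ∀ b ∈ XSi G u 1 j, ∀ c ∈ XSi G u 2 i ∩ XSi G u 2 j,
      ¬ ({a, b, c} : Set V).Pairwise fun x y => ¬ G.Adj x y) ∧
    (∀ a ∈ XSi G u 1 i, ∀ b ∈ XSi G u 1 j, ∀ c ∈ XSi G u 1 k,
      ∀ d ∈ XSi G u 3 i ∩ XSi G u 3 j ∩ XSi G u 3 k,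
      ¬ ({a, b, c, d} : Set V).Pairwise fun x y => ¬ G.Adj x y) := by
  classical
  have hUU : ∀ m n : Fin 5, u m ≠ u n → ¬ G.Adj (u m) (u n) :=
    fun m n h => huI ⟨m, rfl⟩ ⟨n, rfl⟩ h
  constructor
  · -- part (a)
    intro a ha b hb c hc hpair
    obtain ⟨hc1, hc2⟩ := Finset.mem_inter.1 hc
    obtain ⟨haU, hai, haC⟩ := xsi_spec G u ha
    obtain ⟨hbU, hbj, hbC⟩ := xsi_spec G u hb
    obtain ⟨hcU, hci, hcC⟩ := xsi_spec G u hc1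
    obtain ⟨-, hcj, -⟩ := xsi_spec G u hc2
    have haN : ∀ m, G.Adj a (u m) → m = i := by
      intro m hm
      have := only_nbrs G u {i} (by simpa using hai) (by simp [haC]) m hm
      simpa using this
    have hbN : ∀ m, G.Adj b (u m) → m = j := by
      intro m hm
      have := only_nbrs G u {j} (by simpa using hbj) (by simp [hbC]) m hm
      simpa using this
    have hcN : ∀ m, G.Adj c (u m) → m = i ∨ m = j := by
      intro m hm
      have := only_nbrs G u {i, j}
        (by intro x hx; simp only [Finset.mem_insert, Finset.mem_singleton] at hx
            rcases hx with rfl | rfl <;> assumption)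
        (by rw [hcC, Finset.card_insert_of_notMem (by simp [hij]), Finset.card_singleton])
        m hm
      simpa using this
    have hab : a ≠ b := fun h => hij (haN j (by rw [h]; exact hbj)).symm
    have hac : a ≠ c := fun h => hij (haN j (by rw [h]; exact hcj)).symm
    have hbc : b ≠ c := fun h => hij (hbN i (by rw [h]; exact hci))
    have hAB : ¬ G.Adj a b := hpair (by simp) (by simp) hab
    have hAC : ¬ G.Adj a c := hpair (by simp) (by simp) hac
    have hBC : ¬ G.Adj b c := hpair (by simp) (by simp) hbc
    set S : Finset V := insert a (insert b {c}) ∪ (({i, j} : Finset (Fin 5))ᶜ).image u with hS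
    have hSp : (↑S : Set V).Pairwise fun x y => ¬ G.Adj x y := by
      intro x hx y hy hxy
      simp only [hS, Finset.coe_union, Set.mem_union, Finset.coe_insert, Set.mem_insert_iff,
        Finset.coe_singleton, Set.mem_singleton_iff, Finset.coe_image, Set.mem_image,
        Finset.mem_coe, Finset.mem_compl, Finset.mem_insert, Finset.mem_singleton] at hx hy
      have hAu : ∀ m : Fin 5, m ≠ i → ¬ G.Adj a (u m) := fun m hm h => hm (haN m h)
      have hBu : ∀ m : Fin 5, m ≠ j → ¬ G.Adj b (u m) := fun m hm h => hm (hbN m h)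
      have hCu : ∀ m : Fin 5, m ≠ i → m ≠ j → ¬ G.Adj c (u m) :=
        fun m h1 h2 h => (hcN m h).elim h1 h2
      rcases hx with (rfl | rfl | rfl) | ⟨m, hm, rfl⟩ <;>
        rcases hy with (rfl | rfl | rfl) | ⟨n, hn, rfl⟩ <;>
        (try simp only [not_or] at hm) <;> (try simp only [not_or] at hn) <;>
        first
        | exact absurd rfl hxy
        | exact hAB
        | exact hAC
        | exact hBC
        | exact fun h => hAB h.symm
        | exact fun h => hAC h.symm
        | exact fun h => hBC h.symm
        | exact hAu _ hn.1
        | exact hBu _ hn.2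
        | exact hCu _ hn.1 hn.2
        | exact fun h => hAu _ hm.1 h.symm
        | exact fun h => hBu _ hm.2 h.symm
        | exact fun h => hCu _ hm.1 hm.2 h.symm
        | exact hUU _ _ hxy
    have hdisj : Disjoint (insert a (insert b ({c} : Finset V)))
        ((({i, j} : Finset (Fin 5))ᶜ).image u) := by
      rw [Finset.disjoint_right]
      intro x hx hx'
      obtain ⟨m, -, rfl⟩ := Finset.mem_image.1 hx
      simp only [Finset.mem_insert, Finset.mem_singleton] at hx'
      rcases hx' with h | h | h
      exacts [haU m h.symm, hbU m h.symm, hcU m h.symm]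
    have hcard1 : (insert a (insert b ({c} : Finset V))).card = 3 := by
      rw [Finset.card_insert_of_notMem (by simp [hab, hac]),
        Finset.card_insert_of_notMem (by simp [hbc]), Finset.card_singleton]
    have hcard2 : ((({i, j} : Finset (Fin 5))ᶜ).image u).card = 3 := by
      rw [Finset.card_image_of_injective _ hu, Finset.card_compl,
        Finset.card_insert_of_notMem (by simp [hij]), Finset.card_singleton]
      rfl
    have h5 := h6 S hSp
    rw [hS, Finset.card_union_of_disjoint hdisj, hcard1, hcard2] at h5
    omega
  · -- part (b)
    intro a ha b hb c hc d hd hpair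
    obtain ⟨hd12, hd3⟩ := Finset.mem_inter.1 hd
    obtain ⟨hd1, hd2⟩ := Finset.mem_inter.1 hd12
    obtain ⟨haU, hai, haC⟩ := xsi_spec G u ha
    obtain ⟨hbU, hbj, hbC⟩ := xsi_spec G u hb
    obtain ⟨hcU, hck, hcC⟩ := xsi_spec G u hc
    obtain ⟨hdU, hdi, hdC⟩ := xsi_spec G u hd1
    obtain ⟨-, hdj, -⟩ := xsi_spec G u hd2
    obtain ⟨-, hdk, -⟩ := xsi_spec G u hd3
    have haN : ∀ m, G.Adj a (u m) → m = i := by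
      intro m hm
      have := only_nbrs G u {i} (by simpa using hai) (by simp [haC]) m hm
      simpa using this
    have hbN : ∀ m, G.Adj b (u m) → m = j := by
      intro m hm
      have := only_nbrs G u {j} (by simpa using hbj) (by simp [hbC]) m hm
      simpa using this
    have hcN : ∀ m, G.Adj c (u m) → m = k := by
      intro m hm
      have := only_nbrs G u {k} (by simpa using hck) (by simp [hcC]) m hm
      simpa using this
    have hdN : ∀ m, G.Adj d (u m) → m = i ∨ m = j ∨ m = k := by
      intro m hm
      have := only_nbrs G u {i, j, k}
        (by intro x hx
            simp only [Finset.mem_insert, Finset.mem_singleton] at hx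
            rcases hx with rfl | rfl | rfl <;> assumption)
        (by rw [hdC, Finset.card_insert_of_notMem (by simp [hij, hik]),
              Finset.card_insert_of_notMem (by simp [hjk]), Finset.card_singleton])
        m hm
      simpa using this
    have hab : a ≠ b := fun h => hij (haN j (by rw [h]; exact hbj)).symm
    have hac : a ≠ c := fun h => hik (haN k (by rw [h]; exact hck)).symm
    have hbc : b ≠ c := fun h => hjk (hbN k (by rw [h]; exact hck)).symm
    have had : a ≠ d := fun h => hij (haN j (by rw [h]; exact hdj)).symm
    have hbd : b ≠ d := fun h => hij (hbN i (by rw [h]; exact hdi))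
    have hcd : c ≠ d := fun h => hik (hcN i (by rw [h]; exact hdi))
    have hAB : ¬ G.Adj a b := hpair (by simp) (by simp) hab
    have hAC : ¬ G.Adj a c := hpair (by simp) (by simp) hac
    have hAD : ¬ G.Adj a d := hpair (by simp) (by simp) had
    have hBC : ¬ G.Adj b c := hpair (by simp) (by simp) hbc
    have hBD : ¬ G.Adj b d := hpair (by simp) (by simp) hbd
    have hCD : ¬ G.Adj c d := hpair (by simp) (by simp) hcd
    set S : Finset V := insert a (insert b (insert c {d})) ∪
      (({i, j, k} : Finset (Fin 5))ᶜ).image u with hS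
    have hSp : (↑S : Set V).Pairwise fun x y => ¬ G.Adj x y := by
      intro x hx y hy hxy
      simp only [hS, Finset.coe_union, Set.mem_union, Finset.coe_insert, Set.mem_insert_iff,
        Finset.coe_singleton, Set.mem_singleton_iff, Finset.coe_image, Set.mem_image,
        Finset.mem_coe, Finset.mem_compl, Finset.mem_insert, Finset.mem_singleton] at hx hy
      have hAu : ∀ m : Fin 5, m ≠ i → ¬ G.Adj a (u m) := fun m hm h => hm (haN m h)
      have hBu : ∀ m : Fin 5, m ≠ j → ¬ G.Adj b (u m) := fun m hm h => hm (hbN m h)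
      have hCu : ∀ m : Fin 5, m ≠ k → ¬ G.Adj c (u m) := fun m hm h => hm (hcN m h)
      have hDu : ∀ m : Fin 5, m ≠ i → m ≠ j → m ≠ k → ¬ G.Adj d (u m) :=
        fun m h1 h2 h3 h => (hdN m h).elim h1 (fun h' => h'.elim h2 h3)
      rcases hx with (rfl | rfl | rfl | rfl) | ⟨m, hm, rfl⟩ <;>
        rcases hy with (rfl | rfl | rfl | rfl) | ⟨n, hn, rfl⟩ <;>
        (try simp only [not_or] at hm) <;> (try simp only [not_or] at hn) <;>
        first
        | exact absurd rfl hxy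
        | exact hAB
        | exact hAC
        | exact hAD
        | exact hBC
        | exact hBD
        | exact hCD
        | exact fun h => hAB h.symm
        | exact fun h => hAC h.symm
        | exact fun h => hAD h.symm
        | exact fun h => hBC h.symm
        | exact fun h => hBD h.symm
        | exact fun h => hCD h.symm
        | exact hAu _ hn.1
        | exact hBu _ hn.2.1
        | exact hCu _ hn.2.2
        | exact hDu _ hn.1 hn.2.1 hn.2.2
        | exact fun h => hAu _ hm.1 h.symm
        | exact fun h => hBu _ hm.2.1 h.symm
        | exact fun h => hCu _ hm.2.2 h.symm
        | exact fun h => hDu _ hm.1 hm.2.1 hm.2.2 h.symm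
        | exact hUU _ _ hxy
    have hdisj : Disjoint (insert a (insert b (insert c ({d} : Finset V))))
        ((({i, j, k} : Finset (Fin 5))ᶜ).image u) := by
      rw [Finset.disjoint_right]
      intro x hx hx'
      obtain ⟨m, -, rfl⟩ := Finset.mem_image.1 hx
      simp only [Finset.mem_insert, Finset.mem_singleton] at hx'
      rcases hx' with h | h | h | h
      exacts [haU m h.symm, hbU m h.symm, hcU m h.symm, hdU m h.symm]
    have hcard1 : (insert a (insert b (insert c ({d} : Finset V)))).card = 4 := by
      rw [Finset.card_insert_of_notMem (by simp [hab, hac, had]),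
        Finset.card_insert_of_notMem (by simp [hbc, hbd]),
        Finset.card_insert_of_notMem (by simp [hcd]), Finset.card_singleton]
    have hcard2 : ((({i, j, k} : Finset (Fin 5))ᶜ).image u).card = 2 := by
      rw [Finset.card_image_of_injective _ hu, Finset.card_compl,
        Finset.card_insert_of_notMem (by simp [hij, hik]),
        Finset.card_insert_of_notMem (by simp [hjk]), Finset.card_singleton]
      rfl
    have h5 := h6 S hSp
    rw [hS, Finset.card_union_of_disjoint hdisj, hcard1, hcard2] at h5
    omega
end

section
/- Under the standing hypotheses (G on 10ℓ+1 vertices, ℓ ≥ 6, no F_ℓ, α(G) = 5, ω(G) ≤ 2ℓ−2, each G[X_{1m}∪{u_m}] complete), for distinct i,j: if |X_{1i}| = |X_{1j}| = 2ℓ−3, then X_{2i} ∩ X_{2j} = ∅. -/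
/-! ### Auxiliary lemmas -/

lemma contains_fan_of_cliques {V : Type} [DecidableEq V] {G : SimpleGraph V} {ℓ a b : ℕ}
    (x : V) (S T : Finset V) (hST : Disjoint S T)
    (hxS : x ∉ S) (hxT : x ∉ T)
    (hSc : G.IsClique (S : Set V)) (hTc : G.IsClique (T : Set V))
    (hSx : ∀ v ∈ S, G.Adj x v) (hTx : ∀ v ∈ T, G.Adj x v)
    (hS : S.card = 2*a) (hT : T.card = 2*b) (hab : a + b = ℓ) :
    Contains (fan ℓ) G := by
  classical
  have hidx1 : ∀ (i : Fin ℓ) (r : Fin 2), (i:ℕ) < a → 2*(i:ℕ)+(r:ℕ) < S.card := by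
    intro i r h; have := r.2; omega
  have hidx2 : ∀ (i : Fin ℓ) (r : Fin 2), ¬ (i:ℕ) < a → 2*((i:ℕ)-a)+(r:ℕ) < T.card := by
    intro i r h; have h2 := r.2; have h3 := i.2; omega
  set g : Fin ℓ × Fin 2 → V := fun p =>
    if h : (p.1:ℕ) < a then
      ((S.equivFin.symm ⟨2*(p.1:ℕ)+(p.2:ℕ), hidx1 p.1 p.2 h⟩ : {y // y ∈ S}) : V)
    else ((T.equivFin.symm ⟨2*((p.1:ℕ)-a)+(p.2:ℕ), hidx2 p.1 p.2 h⟩ : {y // y ∈ T}) : V)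
    with hg
  have gmemS : ∀ p, ((p.1:ℕ) < a) → g p ∈ S := by
    intro p h; simp only [hg, dif_pos h]; exact (S.equivFin.symm _).2
  have gmemT : ∀ p, ¬((p.1:ℕ) < a) → g p ∈ T := by
    intro p h; simp only [hg, dif_neg h]; exact (T.equivFin.symm _).2
  have gne : ∀ p, g p ≠ x := by
    intro p h
    by_cases hc : (p.1:ℕ) < a
    · exact hxS (h ▸ gmemS p hc)
    · exact hxT (h ▸ gmemT p hc)
  have ginj : Function.Injective g := by
    intro p q hpq
    by_cases hp : (p.1:ℕ) < a <;> by_cases hq : (q.1:ℕ) < a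
    · simp only [hg, dif_pos hp, dif_pos hq] at hpq
      have := S.equivFin.symm.injective (Subtype.coe_injective hpq)
      have h2 := p.2.2; have h3 := q.2.2
      have : 2*(p.1:ℕ)+(p.2:ℕ) = 2*(q.1:ℕ)+(q.2:ℕ) := congrArg Fin.val this
      have h1 : (p.1:ℕ) = q.1 ∧ (p.2:ℕ) = q.2 := by omega
      exact Prod.ext (Fin.ext h1.1) (Fin.ext h1.2)
    · exact absurd hpq (by
        intro h
        exact (Finset.disjoint_left.mp hST (h ▸ gmemS p hp) (gmemT q hq)))
    · exact absurd hpq (by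
        intro h
        exact (Finset.disjoint_left.mp hST (gmemS q hq) (h ▸ gmemT p hp)).elim)
    · simp only [hg, dif_neg hp, dif_neg hq] at hpq
      have := T.equivFin.symm.injective (Subtype.coe_injective hpq)
      have h2 := p.2.2; have h3 := q.2.2
      have h4 := p.1.2; have h5 := q.1.2
      have : 2*((p.1:ℕ)-a)+(p.2:ℕ) = 2*((q.1:ℕ)-a)+(q.2:ℕ) := congrArg Fin.val this
      have h1 : (p.1:ℕ) = q.1 ∧ (p.2:ℕ) = q.2 := by omega
      exact Prod.ext (Fin.ext h1.1) (Fin.ext h1.2)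
  have gadjx : ∀ p, G.Adj x (g p) := by
    intro p
    by_cases hc : (p.1:ℕ) < a
    · exact hSx _ (gmemS p hc)
    · exact hTx _ (gmemT p hc)
  have gadj : ∀ (i : Fin ℓ) (r s : Fin 2), r ≠ s → G.Adj (g (i,r)) (g (i,s)) := by
    intro i r s hrs
    have hne : g (i,r) ≠ g (i,s) := fun h => hrs (congrArg Prod.snd (ginj h))
    by_cases hc : (i:ℕ) < a
    · exact hSc (gmemS (i,r) hc) (gmemS (i,s) hc) hne
    · exact hTc (gmemT (i,r) hc) (gmemT (i,s) hc) hne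
  refine ⟨fun o => Option.elim o x g, ?_, ?_⟩
  · intro o1 o2 h
    match o1, o2 with
    | none, none => rfl
    | none, some p => exact absurd h.symm (gne p)
    | some p, none => exact absurd h (gne p)
    | some p, some q => exact congrArg some (ginj h)
  · intro o1 o2 hadj
    rw [fan, SimpleGraph.fromRel_adj] at hadj
    obtain ⟨hne, hrel⟩ := hadj
    match o1, o2 with
    | none, none => exact absurd rfl hne
    | none, some p => exact gadjx p
    | some p, none => exact (gadjx p).symm
    | some p, some q =>
      have hfst : p.1 = q.1 := by
        rcases hrel with (h | h | ⟨i', a', b', h1, h2⟩) | (h | h | ⟨i', a', b', h1, h2⟩)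
        · exact absurd h (by simp)
        · exact absurd h (by simp)
        · simp only [Option.some.injEq] at h1 h2; rw [h1, h2]
        · exact absurd h (by simp)
        · exact absurd h (by simp)
        · simp only [Option.some.injEq] at h1 h2; rw [h1, h2]
      have hsnd : p.2 ≠ q.2 := by
        intro h; exact hne (by rw [Prod.ext hfst h])
      have h1 : ((p.1, p.2) : Fin ℓ × Fin 2) = p := rfl
      have h2 : ((p.1, q.2) : Fin ℓ × Fin 2) = q := Prod.ext hfst rfl
      have h3 := gadj p.1 p.2 q.2 hsnd
      rw [h1, h2] at h3
      exact h3

lemma fan_from_cliques {V : Type} [DecidableEq V] {G : SimpleGraph V} {ℓ : ℕ}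
    (hF : ¬ Contains (fan ℓ) G) (x : V) (S T : Finset V)
    (hST : Disjoint S T) (hxS : x ∉ S) (hxT : x ∉ T)
    (hSc : G.IsClique (S : Set V)) (hTc : G.IsClique (T : Set V))
    (hSx : ∀ v ∈ S, G.Adj x v) (hTx : ∀ v ∈ T, G.Adj x v)
    (hsum : ℓ ≤ S.card / 2 + T.card / 2) : False := by
  set a := min (S.card / 2) ℓ with ha
  obtain ⟨S', hS'sub, hS'⟩ := Finset.exists_subset_card_eq (show 2*a ≤ S.card by omega)
  obtain ⟨T', hT'sub, hT'⟩ := Finset.exists_subset_card_eq (show 2*(ℓ-a) ≤ T.card by omega)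
  exact hF (contains_fan_of_cliques x S' T' (hST.mono hS'sub hT'sub)
    (fun h => hxS (hS'sub h)) (fun h => hxT (hT'sub h))
    (hSc.subset (Finset.coe_subset.mpr hS'sub)) (hTc.subset (Finset.coe_subset.mpr hT'sub))
    (fun v hv => hSx v (hS'sub hv)) (fun v hv => hTx v (hT'sub hv))
    hS' hT' (by omega))

section Props

variable {V : Type} [Fintype V] [DecidableEq V] {G : SimpleGraph V} [DecidableRel G.Adj]
  {u : Fin 5 → V} {i j : Fin 5} {v a b c : V}

lemma X1_props (h : v ∈ XSi G u 1 i) :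
    (∀ m, v ≠ u m) ∧ G.Adj v (u i) ∧ ∀ k, k ≠ i → ¬ G.Adj v (u k) := by
  simp only [XSi, XS, Finset.mem_filter, Finset.mem_univ, true_and] at h
  obtain ⟨⟨hne, hcard⟩, hadj⟩ := h
  refine ⟨hne, hadj, fun k hk hadjk => ?_⟩
  have hsub : ({i, k} : Finset (Fin 5)) ⊆ Finset.univ.filter fun m => G.Adj v (u m) := by
    intro m hm
    simp only [Finset.mem_insert, Finset.mem_singleton] at hm
    rcases hm with rfl | rfl <;> simp [hadj, hadjk]
  have h2 : ({i, k} : Finset (Fin 5)).card = 2 := by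
    rw [Finset.card_insert_of_notMem (by simp [hk.symm]), Finset.card_singleton]
  have := Finset.card_le_card hsub
  omega

lemma X2_props (hi : v ∈ XSi G u 2 i) (hj : v ∈ XSi G u 2 j) (hij : i ≠ j) :
    (∀ m, v ≠ u m) ∧ G.Adj v (u i) ∧ G.Adj v (u j) ∧
      ∀ k, k ≠ i → k ≠ j → ¬ G.Adj v (u k) := by
  simp only [XSi, XS, Finset.mem_filter, Finset.mem_univ, true_and] at hi hj
  obtain ⟨⟨hne, hcard⟩, hadji⟩ := hi
  obtain ⟨⟨-, -⟩, hadjj⟩ := hj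
  refine ⟨hne, hadji, hadjj, fun k hki hkj hadjk => ?_⟩
  have hsub : ({i, j, k} : Finset (Fin 5)) ⊆ Finset.univ.filter fun m => G.Adj v (u m) := by
    intro m hm
    simp only [Finset.mem_insert, Finset.mem_singleton] at hm
    rcases hm with rfl | rfl | rfl <;> simp [hadji, hadjj, hadjk]
  have h3 : ({i, j, k} : Finset (Fin 5)).card = 3 := by
    rw [Finset.card_insert_of_notMem (by simp [hij, hki.symm]),
      Finset.card_insert_of_notMem (by simp [hkj.symm]), Finset.card_singleton]
  have := Finset.card_le_card hsub
  omega

lemma X1_X2_disj (h1 : v ∈ XSi G u 1 i) (h2 : v ∈ XSi G u 2 j) : False := by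
  simp only [XSi, XS, Finset.mem_filter, Finset.mem_univ, true_and] at h1 h2
  omega

lemma X1_X1_disj (hij : i ≠ j) (h1 : v ∈ XSi G u 1 i) (h2 : v ∈ XSi G u 1 j) : False :=
  (X1_props h1).2.2 j (fun h => hij h.symm) (X1_props h2).2.1

lemma cross_adj (hu : Function.Injective u)
    (huI : (Set.range u).Pairwise fun a b => ¬ G.Adj a b)
    (h6 : ∀ s : Finset V, (↑s : Set V).Pairwise (fun a b => ¬ G.Adj a b) → s.card ≤ 5)
    (hij : i ≠ j)
    (hc2i : c ∈ XSi G u 2 i) (hc2j : c ∈ XSi G u 2 j)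
    (ha : a ∈ XSi G u 1 i) (hca : ¬ G.Adj c a)
    (hb : b ∈ XSi G u 1 j) (hcb : ¬ G.Adj c b) : G.Adj a b := by
  by_contra hab
  have pa := X1_props ha
  have pb := X1_props hb
  have pc := X2_props hc2i hc2j hij
  set s : Finset V :=
    insert a (insert b (insert c (Finset.image u ({i, j} : Finset (Fin 5))ᶜ))) with hs
  have hmem : ∀ z ∈ s, z = a ∨ z = b ∨ z = c ∨ ∃ k, k ≠ i ∧ k ≠ j ∧ u k = z := by
    intro z hz
    simp only [hs, Finset.mem_insert, Finset.mem_image, Finset.mem_compl,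
      Finset.mem_singleton, not_or] at hz
    rcases hz with rfl | rfl | rfl | ⟨k, ⟨hk1, hk2⟩, rfl⟩
    · exact Or.inl rfl
    · exact Or.inr (Or.inl rfl)
    · exact Or.inr (Or.inr (Or.inl rfl))
    · exact Or.inr (Or.inr (Or.inr ⟨k, hk1, hk2, rfl⟩))
  have hpair : (↑s : Set V).Pairwise fun a b => ¬ G.Adj a b := by
    intro x hx y hy hxy
    rcases hmem x hx with rfl | rfl | rfl | ⟨k, hk1, hk2, rfl⟩ <;>
      rcases hmem y hy with rfl | rfl | rfl | ⟨k', hk1', hk2', rfl⟩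
    · exact absurd rfl hxy
    · exact hab
    · exact fun h => hca h.symm
    · exact pa.2.2 k' hk1'
    · exact fun h => hab h.symm
    · exact absurd rfl hxy
    · exact fun h => hcb h.symm
    · exact pb.2.2 k' hk2'
    · exact hca
    · exact hcb
    · exact absurd rfl hxy
    · exact pc.2.2.2 k' hk1' hk2'
    · exact fun h => pa.2.2 k hk1 h.symm
    · exact fun h => pb.2.2 k hk2 h.symm
    · exact fun h => pc.2.2.2 k hk1 hk2 h.symm
    · exact huI ⟨k, rfl⟩ ⟨k', rfl⟩ hxy
  have hab' : a ≠ b := by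
    intro h; exact pb.2.2 i hij (h ▸ pa.2.1)
  have hac : a ≠ c := by
    intro h; exact pa.2.2 j (fun h' => hij h'.symm) (h ▸ pc.2.2.1)
  have hbc : b ≠ c := by
    intro h; exact pb.2.2 i hij (h ▸ pc.2.1)
  have hcompl : (({i, j} : Finset (Fin 5))ᶜ).card = 3 := by
    rw [Finset.card_compl]
    rw [Finset.card_insert_of_notMem (by simp [hij]), Finset.card_singleton]
    simp
  have hnotim : ∀ z : V, (∀ m, z ≠ u m) → z ∉ Finset.image u ({i, j} : Finset (Fin 5))ᶜ := by
    intro z hz hmem'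
    obtain ⟨k, -, hk⟩ := Finset.mem_image.mp hmem'
    exact hz k hk.symm
  have hcard : s.card = 6 := by
    rw [hs, Finset.card_insert_of_notMem, Finset.card_insert_of_notMem,
      Finset.card_insert_of_notMem (hnotim c pc.1),
      Finset.card_image_of_injective _ hu, hcompl]
    · simp only [Finset.mem_insert, not_or]
      exact ⟨hbc, hnotim b pb.1⟩
    · simp only [Finset.mem_insert, not_or]
      exact ⟨hab', hac, hnotim a pa.1⟩
  have := h6 s hpair
  omega

lemma full_side {ℓ : ℕ} (hℓ : 6 ≤ ℓ)
    (hω : ∀ s : Finset V, G.IsClique (↑s : Set V) → s.card ≤ 2 * ℓ - 2)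
    (hcliqj : G.IsClique (↑(insert (u j) (XSi G u 1 j)) : Set V))
    (hXj : (XSi G u 1 j).card = 2 * ℓ - 3)
    (hcuj : G.Adj c (u j)) (hcne : ∀ m, c ≠ u m) (hcnot : c ∉ XSi G u 1 j)
    (hcall : ∀ v ∈ XSi G u 1 j, G.Adj c v) : False := by
  have hclique : G.IsClique (↑(insert c (insert (u j) (XSi G u 1 j))) : Set V) := by
    rw [Finset.coe_insert]
    refine hcliqj.insert fun b hb _ => ?_
    rw [Finset.coe_insert] at hb
    rcases Set.mem_insert_iff.mp hb with rfl | hb'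
    · exact hcuj
    · exact hcall b hb'
  have h1 : (u j) ∉ XSi G u 1 j := fun h => (X1_props h).1 j rfl
  have h2 : c ∉ insert (u j) (XSi G u 1 j) := by
    simp only [Finset.mem_insert, not_or]; exact ⟨hcne j, hcnot⟩
  have := hω _ hclique
  rw [Finset.card_insert_of_notMem h2, Finset.card_insert_of_notMem h1, hXj] at this
  omega

lemma side_fan {ℓ : ℕ} (hℓ : 6 ≤ ℓ) (hF : ¬ Contains (fan ℓ) G)
    (hu : Function.Injective u)
    (huI : (Set.range u).Pairwise fun a b => ¬ G.Adj a b)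
    (h6 : ∀ s : Finset V, (↑s : Set V).Pairwise (fun a b => ¬ G.Adj a b) → s.card ≤ 5)
    (hij : i ≠ j)
    (hcliqi : G.IsClique (↑(insert (u i) (XSi G u 1 i)) : Set V))
    (hcliqj : G.IsClique (↑(insert (u j) (XSi G u 1 j)) : Set V))
    (hXi : (XSi G u 1 i).card = 2 * ℓ - 3)
    (hc2i : c ∈ XSi G u 2 i) (hc2j : c ∈ XSi G u 2 j)
    (ha : a ∈ XSi G u 1 i) (hca : ¬ G.Adj c a)
    (hB4 : 4 ≤ ((XSi G u 1 j).filter fun v => ¬ G.Adj c v).card) : False := by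
  obtain ⟨T4, hT4sub, hT4⟩ := Finset.exists_subset_card_eq hB4
  have hT4X : T4 ⊆ XSi G u 1 j := hT4sub.trans (Finset.filter_subset _ _)
  have hcliX1i : G.IsClique (↑(XSi G u 1 i) : Set V) :=
    hcliqi.subset (Finset.coe_subset.mpr (Finset.subset_insert _ _))
  apply fan_from_cliques hF a ((XSi G u 1 i).erase a) T4
  · rw [Finset.disjoint_left]
    intro v hv hv'
    exact X1_X1_disj hij (Finset.mem_of_mem_erase hv) (hT4X hv')
  · exact Finset.notMem_erase _ _
  · intro hmem; exact X1_X1_disj hij ha (hT4X hmem)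
  · exact hcliX1i.subset (Finset.coe_subset.mpr (Finset.erase_subset _ _))
  · exact (hcliqj.subset (Finset.coe_subset.mpr (Finset.subset_insert _ _))).subset
      (Finset.coe_subset.mpr hT4X)
  · intro v hv
    exact hcliX1i (Finset.mem_coe.mpr ha)
      (Finset.mem_coe.mpr (Finset.mem_of_mem_erase hv)) (Finset.ne_of_mem_erase hv).symm
  · intro v hv
    obtain ⟨hvX, hvc⟩ := Finset.mem_filter.mp (hT4sub hv)
    exact cross_adj hu huI h6 hij hc2i hc2j ha hca hvX hvc
  · rw [Finset.card_erase_of_mem ha, hXi, hT4]; omega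

end Props

theorem X2_intersection {V : Type} [Fintype V] [DecidableEq V] (ℓ : ℕ) (hℓ : 6 ≤ ℓ)
    (G : SimpleGraph V) [DecidableRel G.Adj]
    (hcard : Fintype.card V = 10 * ℓ + 1)
    (hF : ¬ Contains (fan ℓ) G)
    (u : Fin 5 → V) (hu : Function.Injective u)
    (huI : (Set.range u).Pairwise fun a b => ¬ G.Adj a b)
    (h6 : ∀ s : Finset V, (↑s : Set V).Pairwise (fun a b => ¬ G.Adj a b) → s.card ≤ 5)
    (hΔ : ∀ v : V, G.degree v ≤ 2 * ℓ + 3)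
    (hω : ∀ s : Finset V, G.IsClique (↑s : Set V) → s.card ≤ 2 * ℓ - 2)
    (hcliq : ∀ m : Fin 5, G.IsClique (↑(insert (u m) (XSi G u 1 m)) : Set V))
    (i j : Fin 5) (hij : i ≠ j)
    (hXi : (XSi G u 1 i).card = 2 * ℓ - 3) (hXj : (XSi G u 1 j).card = 2 * ℓ - 3) :
    XSi G u 2 i ∩ XSi G u 2 j = ∅ := by
  classical
  by_contra hne
  obtain ⟨c, hc⟩ := Finset.nonempty_iff_ne_empty.mpr hne
  rw [Finset.mem_inter] at hc
  obtain ⟨hc2i, hc2j⟩ := hc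
  have pc := X2_props hc2i hc2j hij
  set A := (XSi G u 1 i).filter (fun v => G.Adj c v) with hA
  set A' := (XSi G u 1 i).filter (fun v => ¬ G.Adj c v) with hA'
  set B := (XSi G u 1 j).filter (fun v => G.Adj c v) with hB
  set B' := (XSi G u 1 j).filter (fun v => ¬ G.Adj c v) with hB'
  have hAA' : A.card + A'.card = 2 * ℓ - 3 := by
    rw [hA, hA', Finset.card_filter_add_card_filter_not, hXi]
  have hBB' : B.card + B'.card = 2 * ℓ - 3 := by
    rw [hB, hB', Finset.card_filter_add_card_filter_not, hXj]
  -- Step 1: if c has many neighbours in X1i ∪ X1j, build a fan centred at c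
  have hs : A.card + B.card ≤ 2 * ℓ - 2 := by
    by_contra hgt
    push_neg at hgt
    have huiA : u i ∉ A := fun h => (X1_props ((Finset.filter_subset _ _) h)).1 i rfl
    have hujB : u j ∉ B := fun h => (X1_props ((Finset.filter_subset _ _) h)).1 j rfl
    apply fan_from_cliques hF c (insert (u i) A) (insert (u j) B)
    · rw [Finset.disjoint_left]
      intro v hv hv'
      rcases Finset.mem_insert.mp hv with rfl | hvA <;>
        rcases Finset.mem_insert.mp hv' with heq | hvB
      · exact hij (hu heq)
      · exact (X1_props ((Finset.filter_subset _ _) hvB)).1 i rfl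
      · exact (X1_props ((Finset.filter_subset _ _) hvA)).1 j heq
      · exact X1_X1_disj hij ((Finset.filter_subset _ _) hvA)
          ((Finset.filter_subset _ _) hvB)
    · intro hmem
      rcases Finset.mem_insert.mp hmem with heq | hcA
      · exact pc.1 i heq
      · exact X1_X2_disj ((Finset.filter_subset _ _) hcA) hc2i
    · intro hmem
      rcases Finset.mem_insert.mp hmem with heq | hcB
      · exact pc.1 j heq
      · exact X1_X2_disj ((Finset.filter_subset _ _) hcB) hc2j
    · exact (hcliq i).subset (Finset.coe_subset.mpr
        (Finset.insert_subset_insert _ (Finset.filter_subset _ _)))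
    · exact (hcliq j).subset (Finset.coe_subset.mpr
        (Finset.insert_subset_insert _ (Finset.filter_subset _ _)))
    · intro v hv
      rcases Finset.mem_insert.mp hv with rfl | hvA
      · exact pc.2.1
      · exact (Finset.mem_filter.mp hvA).2
    · intro v hv
      rcases Finset.mem_insert.mp hv with rfl | hvB
      · exact pc.2.2.1
      · exact (Finset.mem_filter.mp hvB).2
    · rw [Finset.card_insert_of_notMem huiA, Finset.card_insert_of_notMem hujB]
      omega
  have hsum' : 2 * ℓ - 4 ≤ A'.card + B'.card := by omega
  have hcnotXi : c ∉ XSi G u 1 i := fun h => X1_X2_disj h hc2i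
  have hcnotXj : c ∉ XSi G u 1 j := fun h => X1_X2_disj h hc2j
  by_cases hA0 : A'.card = 0
  · refine full_side hℓ hω (hcliq i) hXi pc.2.1 pc.1 hcnotXi ?_
    intro v hv
    by_contra hnadj
    have hvA' : v ∈ A' := Finset.mem_filter.mpr ⟨hv, hnadj⟩
    rw [Finset.card_eq_zero.mp hA0] at hvA'
    exact absurd hvA' (Finset.notMem_empty v)
  by_cases hB0 : B'.card = 0
  · refine full_side hℓ hω (hcliq j) hXj pc.2.2.1 pc.1 hcnotXj ?_
    intro v hv
    by_contra hnadj
    have hvB' : v ∈ B' := Finset.mem_filter.mpr ⟨hv, hnadj⟩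
    rw [Finset.card_eq_zero.mp hB0] at hvB'
    exact absurd hvB' (Finset.notMem_empty v)
  by_cases hB4 : 4 ≤ B'.card
  · obtain ⟨a, haA'⟩ := Finset.card_pos.mp (by omega : 0 < A'.card)
    obtain ⟨haX, hca⟩ := Finset.mem_filter.mp haA'
    exact side_fan hℓ hF hu huI h6 hij (hcliq i) (hcliq j) hXi hc2i hc2j haX hca hB4
  · have hA4 : 4 ≤ A'.card := by omega
    obtain ⟨b, hbB'⟩ := Finset.card_pos.mp (by omega : 0 < B'.card)
    obtain ⟨hbX, hcb⟩ := Finset.mem_filter.mp hbB'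
    exact side_fan hℓ hF hu huI h6 hij.symm (hcliq j) (hcliq i) hXj hc2j hc2i hbX hcb hA4
end

section
/- Under the standing hypotheses, for distinct i,j,k: if |X_{1i}| = |X_{1j}| = |X_{1k}| = 2ℓ−3, then X_{3i} ∩ X_{3j} ∩ X_{3k} = ∅. -/
set_option linter.unusedSectionVars false

namespace FanAux

open Finset

variable {V : Type}

def Good (G : SimpleGraph V) (x : V) (M : Finset (V × V)) : Prop :=
  (∀ e ∈ M, G.Adj x e.1 ∧ G.Adj x e.2 ∧ G.Adj e.1 e.2) ∧
  (∀ e ∈ M, ∀ f ∈ M, e ≠ f → e.1 ≠ f.1 ∧ e.1 ≠ f.2 ∧ e.2 ≠ f.1 ∧ e.2 ≠ f.2)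

lemma good_subset {G : SimpleGraph V} {x : V} {M N : Finset (V × V)}
    (h : Good G x M) (hs : N ⊆ M) : Good G x N :=
  ⟨fun e he => h.1 e (hs he), fun e he f hf hef => h.2 e (hs he) f (hs hf) hef⟩

lemma good_union [DecidableEq V] {G : SimpleGraph V} {x : V} {M N : Finset (V × V)}
    {S T : Finset V}
    (hM : Good G x M) (hN : Good G x N)
    (hMS : ∀ e ∈ M, e.1 ∈ S ∧ e.2 ∈ S) (hNT : ∀ e ∈ N, e.1 ∈ T ∧ e.2 ∈ T)
    (hST : ∀ w ∈ S, w ∉ T) :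
    Good G x (M ∪ N) ∧ (M ∪ N).card = M.card + N.card := by
  have hmix : ∀ e ∈ M, ∀ f ∈ N, e.1 ≠ f.1 ∧ e.1 ≠ f.2 ∧ e.2 ≠ f.1 ∧ e.2 ≠ f.2 := by
    intro e he f hf
    obtain ⟨he1, he2⟩ := hMS e he
    obtain ⟨hf1, hf2⟩ := hNT f hf
    exact ⟨fun h => hST _ he1 (h ▸ hf1), fun h => hST _ he1 (h ▸ hf2),
      fun h => hST _ he2 (h ▸ hf1), fun h => hST _ he2 (h ▸ hf2)⟩
  have hdisj : Disjoint M N := by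
    rw [Finset.disjoint_left]
    intro e heM heN
    exact (hmix e heM e heN).1 rfl
  refine ⟨⟨?_, ?_⟩, Finset.card_union_of_disjoint hdisj⟩
  · intro e he
    rcases Finset.mem_union.mp he with h | h
    · exact hM.1 e h
    · exact hN.1 e h
  · intro e he f hf hef
    rcases Finset.mem_union.mp he with h1 | h1 <;> rcases Finset.mem_union.mp hf with h2 | h2
    · exact hM.2 e h1 f h2 hef
    · exact hmix e h1 f h2
    · obtain ⟨a, b, c, d⟩ := hmix f h2 e h1
      exact ⟨a.symm, c.symm, b.symm, d.symm⟩
    · exact hN.2 e h1 f h2 hef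

lemma contains_fan_of_good {G : SimpleGraph V} {x : V} {M : Finset (V × V)} {ℓ : ℕ}
    (hM : Good G x M) (hc : ℓ ≤ M.card) : Contains (fan ℓ) G := by
  obtain ⟨N, hNM, hNc⟩ := Finset.exists_subset_card_eq hc
  have hN : Good G x N := good_subset hM hNM
  let σ : Fin ℓ → {y // y ∈ N} := fun t => N.equivFin.symm (Fin.cast hNc.symm t)
  have hσ : ∀ s t : Fin ℓ, s ≠ t → (σ s).1 ≠ (σ t).1 := by
    intro s t hst h
    apply hst
    have h2 : σ s = σ t := Subtype.ext h
    have h3 := N.equivFin.symm.injective h2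
    exact Fin.ext (by simpa using congrArg Fin.val h3)
  have hadj : ∀ t : Fin ℓ, G.Adj x (σ t).1.1 ∧ G.Adj x (σ t).1.2 ∧ G.Adj (σ t).1.1 (σ t).1.2 :=
    fun t => hN.1 (σ t).1 (σ t).2
  have hsep : ∀ s t : Fin ℓ, s ≠ t → (σ s).1.1 ≠ (σ t).1.1 ∧ (σ s).1.1 ≠ (σ t).1.2 ∧
      (σ s).1.2 ≠ (σ t).1.1 ∧ (σ s).1.2 ≠ (σ t).1.2 :=
    fun s t hst => hN.2 (σ s).1 (σ s).2 (σ t).1 (σ t).2 (hσ s t hst)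
  refine ⟨fun o => match o with
    | none => x
    | some (t, c) => if c = 0 then (σ t).1.1 else (σ t).1.2, ?_, ?_⟩
  · intro o1 o2 h
    match o1, o2 with
    | none, none => rfl
    | none, some (t, c) =>
      exfalso
      by_cases hc0 : c = 0 <;> simp [hc0] at h
      · exact (hadj t).1.ne h
      · exact (hadj t).2.1.ne h
    | some (t, c), none =>
      exfalso
      by_cases hc0 : c = 0 <;> simp [hc0] at h
      · exact (hadj t).1.ne h.symm
      · exact (hadj t).2.1.ne h.symm
    | some (t, c), some (s, d) =>
      by_cases hts : t = s
      · subst hts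
        by_cases hcd : c = d
        · rw [hcd]
        · exfalso
          fin_cases c <;> fin_cases d <;> simp_all
          · exact (hadj t).2.2.ne h
          · exact (hadj t).2.2.ne h.symm
      · exfalso
        obtain ⟨n1, n2, n3, n4⟩ := hsep t s hts
        by_cases hc0 : c = 0 <;> by_cases hd0 : d = 0 <;> simp [hc0, hd0] at h <;> tauto
  · intro a b hab
    rw [fan, SimpleGraph.fromRel_adj] at hab
    obtain ⟨hne, hr⟩ := hab
    match a, b with
    | none, none => exact absurd rfl hne
    | none, some (t, c) =>
      by_cases hc0 : c = 0 <;> simp [hc0]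
      · exact (hadj t).1
      · exact (hadj t).2.1
    | some (t, c), none =>
      by_cases hc0 : c = 0 <;> simp [hc0]
      · exact (hadj t).1.symm
      · exact (hadj t).2.1.symm
    | some (t, c), some (s, d) =>
      have hts : t = s := by
        rcases hr with (h | h | h) | (h | h | h)
        · simp at h
        · simp at h
        · obtain ⟨i', a', b', h1, h2⟩ := h
          simp only [Option.some.injEq, Prod.mk.injEq] at h1 h2
          exact h1.1.trans h2.1.symm
        · simp at h
        · simp at h
        · obtain ⟨i', a', b', h1, h2⟩ := h
          simp only [Option.some.injEq, Prod.mk.injEq] at h1 h2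
          exact h2.1.trans h1.1.symm
      subst hts
      have hcd : c ≠ d := fun h => hne (by rw [h])
      fin_cases c <;> fin_cases d <;> simp_all
      exact (hadj t).2.2.symm


lemma clique_matching [DecidableEq V] (G : SimpleGraph V) (S : Finset V)
    (hS : G.IsClique (↑S : Set V)) (x : V) (hx : ∀ a ∈ S, G.Adj x a) :
    ∃ M : Finset (V × V), Good G x M ∧ (∀ e ∈ M, e.1 ∈ S ∧ e.2 ∈ S) ∧ M.card = S.card / 2 := by
  set n := S.card with hn
  have h1 : ∀ t : Fin (n / 2), 2 * t.val < n := fun t => by have := t.2; omega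
  have h2 : ∀ t : Fin (n / 2), 2 * t.val + 1 < n := fun t => by have := t.2; omega
  let e : Fin n → {y // y ∈ S} := S.equivFin.symm
  have heinj : ∀ s t : Fin n, s ≠ t → (e s).1 ≠ (e t).1 := by
    intro s t hst h
    exact hst (S.equivFin.symm.injective (Subtype.ext h))
  let g : Fin (n / 2) → V × V := fun t => ((e ⟨2 * t.val, h1 t⟩).1, (e ⟨2 * t.val + 1, h2 t⟩).1)
  have hginj : Function.Injective g := by
    intro s t h
    have := congrArg Prod.fst h
    by_contra hst
    exact heinj _ _ (by simp [Fin.ext_iff]; omega) this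
  refine ⟨Finset.image g Finset.univ, ⟨?_, ?_⟩, ?_, ?_⟩
  · intro p hp
    obtain ⟨t, _, rfl⟩ := Finset.mem_image.mp hp
    have hm1 := (e ⟨2 * t.val, h1 t⟩).2
    have hm2 := (e ⟨2 * t.val + 1, h2 t⟩).2
    exact ⟨hx _ hm1, hx _ hm2, hS hm1 hm2 (heinj _ _ (by simp [Fin.ext_iff]))⟩
  · intro p hp q hq hpq
    obtain ⟨s, _, rfl⟩ := Finset.mem_image.mp hp
    obtain ⟨t, _, rfl⟩ := Finset.mem_image.mp hq
    have hst : s ≠ t := fun h => hpq (by rw [h])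
    refine ⟨heinj _ _ ?_, heinj _ _ ?_, heinj _ _ ?_, heinj _ _ ?_⟩ <;>
      · simp [Fin.ext_iff]
        omega
  · intro p hp
    obtain ⟨t, _, rfl⟩ := Finset.mem_image.mp hp
    exact ⟨(e ⟨2 * t.val, h1 t⟩).2, (e ⟨2 * t.val + 1, h2 t⟩).2⟩
  · rw [Finset.card_image_of_injective _ hginj]
    simp


variable [Fintype V] [DecidableEq V] {G : SimpleGraph V} [DecidableRel G.Adj]
  {u : Fin 5 → V}

lemma mem_XS {w : V} {s : ℕ} : w ∈ XS G u s ↔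
    (∀ j, w ≠ u j) ∧ (Finset.univ.filter fun j => G.Adj w (u j)).card = s := by
  simp [XS]

lemma mem_XSi {w : V} {s : ℕ} {m : Fin 5} :
    w ∈ XSi G u s m ↔ w ∈ XS G u s ∧ G.Adj w (u m) := Finset.mem_filter

lemma X1_filter_eq {w : V} {m : Fin 5} (hw : w ∈ XSi G u 1 m) :
    (Finset.univ.filter fun j => G.Adj w (u j)) = {m} := by
  obtain ⟨hws, hadj⟩ := mem_XSi.mp hw
  obtain ⟨z, hz⟩ := Finset.card_eq_one.mp (mem_XS.mp hws).2
  have hm : m ∈ (Finset.univ.filter fun j => G.Adj w (u j)) := by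
    simp [hadj]
  rw [hz] at hm ⊢
  simp at hm
  rw [hm]

lemma X1_not_adj {w : V} {m : Fin 5} (hw : w ∈ XSi G u 1 m) {j : Fin 5} (hj : j ≠ m) :
    ¬ G.Adj w (u j) := by
  intro h
  have : j ∈ (Finset.univ.filter fun j => G.Adj w (u j)) := by simp [h]
  rw [X1_filter_eq hw] at this
  simp at this
  exact hj this

lemma X1_ne_u {w : V} {m : Fin 5} (hw : w ∈ XSi G u 1 m) (j : Fin 5) : w ≠ u j :=
  (mem_XS.mp (mem_XSi.mp hw).1).1 j

lemma X1_disj {w : V} {m m' : Fin 5} (hmm : m ≠ m') (hw : w ∈ XSi G u 1 m) :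
    w ∉ XSi G u 1 m' := fun hw' => X1_not_adj hw (Ne.symm hmm) (mem_XSi.mp hw').2

lemma C_disj {m m' : Fin 5} (hu : Function.Injective u) (hmm : m ≠ m') :
    ∀ w ∈ insert (u m) (XSi G u 1 m), w ∉ insert (u m') (XSi G u 1 m') := by
  intro w hw hw'
  rcases Finset.mem_insert.mp hw with rfl | hw <;> rcases Finset.mem_insert.mp hw' with h' | h'
  · exact hmm (hu h')
  · exact X1_ne_u h' m rfl
  · exact X1_ne_u hw m' h'
  · exact X1_disj hmm hw h'

lemma X3_filter_eq {v : V} {p q r : Fin 5} (hpq : p ≠ q) (hpr : p ≠ r) (hqr : q ≠ r)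
    (hvp : v ∈ XSi G u 3 p) (hvq : v ∈ XSi G u 3 q) (hvr : v ∈ XSi G u 3 r) :
    (Finset.univ.filter fun j => G.Adj v (u j)) = {p, q, r} := by
  have hsub : ({p, q, r} : Finset (Fin 5)) ⊆ Finset.univ.filter fun j => G.Adj v (u j) := by
    intro z hz
    simp only [Finset.mem_insert, Finset.mem_singleton] at hz
    rcases hz with rfl | rfl | rfl <;> simp [(mem_XSi.mp hvp).2, (mem_XSi.mp hvq).2, (mem_XSi.mp hvr).2]
  have hc3 : ({p, q, r} : Finset (Fin 5)).card = 3 := by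
    rw [Finset.card_insert_of_notMem (by simp [hpq, hpr]),
      Finset.card_insert_of_notMem (by simp [hqr]), Finset.card_singleton]
  have := (mem_XS.mp (mem_XSi.mp hvp).1).2
  exact (Finset.eq_of_subset_of_card_le hsub (by omega)).symm

lemma X3_not_adj {v : V} {p q r : Fin 5} (hpq : p ≠ q) (hpr : p ≠ r) (hqr : q ≠ r)
    (hvp : v ∈ XSi G u 3 p) (hvq : v ∈ XSi G u 3 q) (hvr : v ∈ XSi G u 3 r)
    {l : Fin 5} (hlp : l ≠ p) (hlq : l ≠ q) (hlr : l ≠ r) : ¬ G.Adj v (u l) := by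
  intro h
  have : l ∈ (Finset.univ.filter fun j => G.Adj v (u j)) := by simp [h]
  rw [X3_filter_eq hpq hpr hqr hvp hvq hvr] at this
  simp at this
  tauto

lemma no_six (h6 : ∀ s : Finset V, (↑s : Set V).Pairwise (fun a b => ¬ G.Adj a b) → s.card ≤ 5)
    {x1 x2 x3 x4 x5 x6 : V}
    (d12 : x1 ≠ x2) (d13 : x1 ≠ x3) (d14 : x1 ≠ x4) (d15 : x1 ≠ x5) (d16 : x1 ≠ x6)
    (d23 : x2 ≠ x3) (d24 : x2 ≠ x4) (d25 : x2 ≠ x5) (d26 : x2 ≠ x6)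
    (d34 : x3 ≠ x4) (d35 : x3 ≠ x5) (d36 : x3 ≠ x6)
    (d45 : x4 ≠ x5) (d46 : x4 ≠ x6) (d56 : x5 ≠ x6)
    (n12 : ¬ G.Adj x1 x2) (n13 : ¬ G.Adj x1 x3) (n14 : ¬ G.Adj x1 x4) (n15 : ¬ G.Adj x1 x5)
    (n16 : ¬ G.Adj x1 x6) (n23 : ¬ G.Adj x2 x3) (n24 : ¬ G.Adj x2 x4) (n25 : ¬ G.Adj x2 x5)
    (n26 : ¬ G.Adj x2 x6) (n34 : ¬ G.Adj x3 x4) (n35 : ¬ G.Adj x3 x5) (n36 : ¬ G.Adj x3 x6)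
    (n45 : ¬ G.Adj x4 x5) (n46 : ¬ G.Adj x4 x6) (n56 : ¬ G.Adj x5 x6) : False := by
  have n21 : ¬ G.Adj x2 x1 := fun h => n12 h.symm
  have n31 : ¬ G.Adj x3 x1 := fun h => n13 h.symm
  have n41 : ¬ G.Adj x4 x1 := fun h => n14 h.symm
  have n51 : ¬ G.Adj x5 x1 := fun h => n15 h.symm
  have n61 : ¬ G.Adj x6 x1 := fun h => n16 h.symm
  have n32 : ¬ G.Adj x3 x2 := fun h => n23 h.symm
  have n42 : ¬ G.Adj x4 x2 := fun h => n24 h.symm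
  have n52 : ¬ G.Adj x5 x2 := fun h => n25 h.symm
  have n62 : ¬ G.Adj x6 x2 := fun h => n26 h.symm
  have n43 : ¬ G.Adj x4 x3 := fun h => n34 h.symm
  have n53 : ¬ G.Adj x5 x3 := fun h => n35 h.symm
  have n63 : ¬ G.Adj x6 x3 := fun h => n36 h.symm
  have n54 : ¬ G.Adj x5 x4 := fun h => n45 h.symm
  have n64 : ¬ G.Adj x6 x4 := fun h => n46 h.symm
  have n65 : ¬ G.Adj x6 x5 := fun h => n56 h.symm
  have hp : (↑({x1, x2, x3, x4, x5, x6} : Finset V) : Set V).Pairwise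
      (fun a b => ¬ G.Adj a b) := by
    intro p hp q hq hpq
    simp only [Finset.coe_insert, Set.mem_insert_iff, Finset.coe_singleton,
      Set.mem_singleton_iff] at hp hq
    rcases hp with rfl | rfl | rfl | rfl | rfl | rfl <;>
      rcases hq with rfl | rfl | rfl | rfl | rfl | rfl <;>
      first | exact absurd rfl hpq | assumption
  have hcard : ({x1, x2, x3, x4, x5, x6} : Finset V).card = 6 := by
    rw [Finset.card_insert_of_notMem (by simp [d12, d13, d14, d15, d16]),
      Finset.card_insert_of_notMem (by simp [d23, d24, d25, d26]),
      Finset.card_insert_of_notMem (by simp [d34, d35, d36]),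
      Finset.card_insert_of_notMem (by simp [d45, d46]),
      Finset.card_insert_of_notMem (by simp [d56]), Finset.card_singleton]
  have := h6 _ hp
  omega


variable {ℓ : ℕ}

lemma cross_le_three (hℓ : 6 ≤ ℓ) (hF : ¬ Contains (fan ℓ) G)
    (hcliq : ∀ m : Fin 5, G.IsClique (↑(insert (u m) (XSi G u 1 m)) : Set V))
    {m m' : Fin 5} (hmm : m ≠ m') (hXm : (XSi G u 1 m).card = 2 * ℓ - 3)
    {b : V} (hb : b ∈ XSi G u 1 m) :
    ((XSi G u 1 m').filter (fun w => G.Adj b w)).card ≤ 3 := by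
  by_contra hcon
  push_neg at hcon
  obtain ⟨T, hTsub, hT4⟩ := Finset.exists_subset_card_eq (show 4 ≤ _ from hcon)
  have hbC : b ∈ insert (u m) (XSi G u 1 m) := Finset.mem_insert_of_mem hb
  have hS1sub : (insert (u m) (XSi G u 1 m)).erase b ⊆ insert (u m) (XSi G u 1 m) :=
    Finset.erase_subset _ _
  have hS1clique : G.IsClique ↑((insert (u m) (XSi G u 1 m)).erase b) :=
    (hcliq m).subset (Finset.coe_subset.mpr hS1sub)
  have hS1adj : ∀ a ∈ (insert (u m) (XSi G u 1 m)).erase b, G.Adj b a := fun a ha =>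
    (hcliq m) (Finset.mem_coe.mpr hbC) (Finset.mem_coe.mpr (hS1sub ha))
      (Finset.ne_of_mem_erase ha).symm
  obtain ⟨M1, hM1g, hM1s, hM1c⟩ := clique_matching G _ hS1clique b hS1adj
  have humX : u m ∉ XSi G u 1 m := fun h => X1_ne_u h m rfl
  have hCmcard : (insert (u m) (XSi G u 1 m)).card = 2 * ℓ - 2 := by
    rw [Finset.card_insert_of_notMem humX, hXm]; omega
  have hS1card : ((insert (u m) (XSi G u 1 m)).erase b).card = 2 * ℓ - 3 := by
    rw [Finset.card_erase_of_mem hbC, hCmcard]; omega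
  have hTX : T ⊆ XSi G u 1 m' := hTsub.trans (Finset.filter_subset _ _)
  have hTclique : G.IsClique ↑T := (hcliq m').subset
    (Finset.coe_subset.mpr (hTX.trans (Finset.subset_insert _ _)))
  have hTadj : ∀ a ∈ T, G.Adj b a := fun a ha => (Finset.mem_filter.mp (hTsub ha)).2
  obtain ⟨M2, hM2g, hM2s, hM2c⟩ := clique_matching G T hTclique b hTadj
  have hdisj : ∀ w ∈ (insert (u m) (XSi G u 1 m)).erase b, w ∉ T := by
    intro w hw hwT
    have hwX' : w ∈ XSi G u 1 m' := hTX hwT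
    rcases Finset.mem_insert.mp (hS1sub hw) with rfl | hwX
    · exact X1_ne_u hwX' m rfl
    · exact X1_disj hmm hwX hwX'
  obtain ⟨hUg, hUc⟩ := good_union hM1g hM2g hM1s hM2s hdisj
  apply hF
  apply contains_fan_of_good hUg
  rw [hUc, hM1c, hM2c, hS1card, hT4]
  omega

lemma final (hℓ : 6 ≤ ℓ) (hF : ¬ Contains (fan ℓ) G) (hu : Function.Injective u)
    (huI : (Set.range u).Pairwise fun a b => ¬ G.Adj a b)
    (h6 : ∀ s : Finset V, (↑s : Set V).Pairwise (fun a b => ¬ G.Adj a b) → s.card ≤ 5)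
    (hcliq : ∀ m : Fin 5, G.IsClique (↑(insert (u m) (XSi G u 1 m)) : Set V))
    (p q r : Fin 5) (hpq : p ≠ q) (hpr : p ≠ r) (hqr : q ≠ r)
    (hXp : (XSi G u 1 p).card = 2 * ℓ - 3) (hXq : (XSi G u 1 q).card = 2 * ℓ - 3)
    (hXr : (XSi G u 1 r).card = 2 * ℓ - 3)
    (v : V) (hvp : v ∈ XSi G u 3 p) (hvq : v ∈ XSi G u 3 q) (hvr : v ∈ XSi G u 3 r)
    (hBp : 1 ≤ ((XSi G u 1 p).filter (fun w => ¬ G.Adj v w)).card)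
    (hBq : 4 ≤ ((XSi G u 1 q).filter (fun w => ¬ G.Adj v w)).card)
    (hBr : 7 ≤ ((XSi G u 1 r).filter (fun w => ¬ G.Adj v w)).card) : False := by
  -- pick a
  obtain ⟨a, ha⟩ := Finset.card_pos.mp (by omega : 0 < ((XSi G u 1 p).filter (fun w => ¬ G.Adj v w)).card)
  have haX : a ∈ XSi G u 1 p := Finset.filter_subset _ _ ha
  have hav : ¬ G.Adj v a := (Finset.mem_filter.mp ha).2
  -- pick b
  have hcross_aq : ((XSi G u 1 q).filter (fun w => G.Adj a w)).card ≤ 3 :=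
    cross_le_three hℓ hF hcliq hpq hXp haX
  have hsplitq := Finset.card_filter_add_card_filter_not
    (s := (XSi G u 1 q).filter (fun w => ¬ G.Adj v w)) (p := fun w => G.Adj a w)
  have hsubq : ((XSi G u 1 q).filter (fun w => ¬ G.Adj v w)).filter (fun w => G.Adj a w) ⊆
      (XSi G u 1 q).filter (fun w => G.Adj a w) :=
    Finset.filter_subset_filter _ (Finset.filter_subset _ _)
  have hle := Finset.card_le_card hsubq
  obtain ⟨b, hbmem⟩ := Finset.card_pos.mp
    (by omega : 0 < (((XSi G u 1 q).filter (fun w => ¬ G.Adj v w)).filter (fun w => ¬ G.Adj a w)).card)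
  have hbB : b ∈ (XSi G u 1 q).filter (fun w => ¬ G.Adj v w) := Finset.filter_subset _ _ hbmem
  have hbX : b ∈ XSi G u 1 q := Finset.filter_subset _ _ hbB
  have hbv : ¬ G.Adj v b := (Finset.mem_filter.mp hbB).2
  have hab : ¬ G.Adj a b := (Finset.mem_filter.mp hbmem).2
  -- pick c
  have hcross_ar : ((XSi G u 1 r).filter (fun w => G.Adj a w)).card ≤ 3 :=
    cross_le_three hℓ hF hcliq hpr hXp haX
  have hcross_br : ((XSi G u 1 r).filter (fun w => G.Adj b w)).card ≤ 3 :=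
    cross_le_three hℓ hF hcliq hqr hXq hbX
  have hsplitr := Finset.card_filter_add_card_filter_not
    (s := (XSi G u 1 r).filter (fun w => ¬ G.Adj v w))
    (p := fun w => G.Adj a w ∨ G.Adj b w)
  have hsubr : ((XSi G u 1 r).filter (fun w => ¬ G.Adj v w)).filter
      (fun w => G.Adj a w ∨ G.Adj b w) ⊆
      ((XSi G u 1 r).filter (fun w => G.Adj a w)) ∪ ((XSi G u 1 r).filter (fun w => G.Adj b w)) := by
    intro w hw
    obtain ⟨hw1, hw2⟩ := Finset.mem_filter.mp hw
    have hwX : w ∈ XSi G u 1 r := Finset.filter_subset _ _ hw1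
    rcases hw2 with h | h
    · exact Finset.mem_union_left _ (Finset.mem_filter.mpr ⟨hwX, h⟩)
    · exact Finset.mem_union_right _ (Finset.mem_filter.mpr ⟨hwX, h⟩)
  have hler : (((XSi G u 1 r).filter (fun w => ¬ G.Adj v w)).filter
      (fun w => G.Adj a w ∨ G.Adj b w)).card ≤ 6 := by
    calc _ ≤ (((XSi G u 1 r).filter (fun w => G.Adj a w)) ∪
        ((XSi G u 1 r).filter (fun w => G.Adj b w))).card := Finset.card_le_card hsubr
    _ ≤ _ := Finset.card_union_le _ _
    _ ≤ 6 := by omega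
  obtain ⟨c, hcmem⟩ := Finset.card_pos.mp
    (by omega : 0 < (((XSi G u 1 r).filter (fun w => ¬ G.Adj v w)).filter
      (fun w => ¬ (G.Adj a w ∨ G.Adj b w))).card)
  have hcB : c ∈ (XSi G u 1 r).filter (fun w => ¬ G.Adj v w) := Finset.filter_subset _ _ hcmem
  have hcX : c ∈ XSi G u 1 r := Finset.filter_subset _ _ hcB
  have hcv : ¬ G.Adj v c := (Finset.mem_filter.mp hcB).2
  have hac : ¬ G.Adj a c := fun h => (Finset.mem_filter.mp hcmem).2 (Or.inl h)
  have hbc : ¬ G.Adj b c := fun h => (Finset.mem_filter.mp hcmem).2 (Or.inr h)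
  -- pick l, l'
  have hTcard : ((Finset.univ : Finset (Fin 5)) \ {p, q, r}).card = 2 := by
    rw [Finset.card_sdiff_of_subset (Finset.subset_univ _)]
    have h3 : ({p, q, r} : Finset (Fin 5)).card = 3 := by
      rw [Finset.card_insert_of_notMem (by simp [hpq, hpr]),
        Finset.card_insert_of_notMem (by simp [hqr]), Finset.card_singleton]
    simp [h3]
  obtain ⟨l, hl, l', hl', hll⟩ := Finset.one_lt_card.mp (by omega :
    1 < ((Finset.univ : Finset (Fin 5)) \ {p, q, r}).card)
  simp only [Finset.mem_sdiff, Finset.mem_univ, true_and, Finset.mem_insert,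
    Finset.mem_singleton, not_or] at hl hl'
  obtain ⟨hlp, hlq, hlr⟩ := hl
  obtain ⟨hlp', hlq', hlr'⟩ := hl'
  -- U-neighbour facts for v
  have hv3 := (mem_XS.mp (mem_XSi.mp hvp).1).2
  have ha1 := (mem_XS.mp (mem_XSi.mp haX).1).2
  have hb1 := (mem_XS.mp (mem_XSi.mp hbX).1).2
  have hc1 := (mem_XS.mp (mem_XSi.mp hcX).1).2
  -- distinctness
  have dva : v ≠ a := fun h => by rw [h] at hv3; omega
  have dvb : v ≠ b := fun h => by rw [h] at hv3; omega
  have dvc : v ≠ c := fun h => by rw [h] at hv3; omega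
  have dab : a ≠ b := fun h => X1_disj hpq haX (h ▸ hbX)
  have dac : a ≠ c := fun h => X1_disj hpr haX (h ▸ hcX)
  have dbc : b ≠ c := fun h => X1_disj hqr hbX (h ▸ hcX)
  have dll : u l ≠ u l' := fun h => hll (hu h)
  -- apply no_six
  exact no_six h6 dva dvb dvc ((mem_XS.mp (mem_XSi.mp hvp).1).1 l)
    ((mem_XS.mp (mem_XSi.mp hvp).1).1 l')
    dab dac (X1_ne_u haX l) (X1_ne_u haX l')
    dbc (X1_ne_u hbX l) (X1_ne_u hbX l')
    (X1_ne_u hcX l) (X1_ne_u hcX l') dll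
    hav hbv hcv
    (X3_not_adj hpq hpr hqr hvp hvq hvr hlp hlq hlr)
    (X3_not_adj hpq hpr hqr hvp hvq hvr hlp' hlq' hlr')
    hab hac
    (X1_not_adj haX hlp) (X1_not_adj haX hlp')
    hbc
    (X1_not_adj hbX hlq) (X1_not_adj hbX hlq')
    (X1_not_adj hcX hlr) (X1_not_adj hcX hlr')
    (huI (Set.mem_range_self l) (Set.mem_range_self l') dll)


lemma key_matching (hℓ : 6 ≤ ℓ)
    (hω : ∀ s : Finset V, G.IsClique (↑s : Set V) → s.card ≤ 2 * ℓ - 2)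
    (hcliq : ∀ m : Fin 5, G.IsClique (↑(insert (u m) (XSi G u 1 m)) : Set V))
    {v : V} (m : Fin 5) (hvm : v ∈ XSi G u 3 m) :
    ∃ M : Finset (V × V), Good G v M ∧
      (∀ e ∈ M, e.1 ∈ insert (u m) (XSi G u 1 m) ∧ e.2 ∈ insert (u m) (XSi G u 1 m)) ∧
      M.card = (((XSi G u 1 m).filter (fun w => G.Adj v w)).card + 1) / 2 ∧
      ((XSi G u 1 m).filter (fun w => G.Adj v w)).card + 2 ≤ 2 * ℓ - 2 := by
  set A := (XSi G u 1 m).filter (fun w => G.Adj v w) with hA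
  have hsub : insert (u m) A ⊆ insert (u m) (XSi G u 1 m) :=
    Finset.insert_subset_insert _ (Finset.filter_subset _ _)
  have hSclique : G.IsClique ↑(insert (u m) A) := (hcliq m).subset (Finset.coe_subset.mpr hsub)
  have hSadj : ∀ a ∈ insert (u m) A, G.Adj v a := by
    intro a ha
    rcases Finset.mem_insert.mp ha with rfl | ha
    · exact (mem_XSi.mp hvm).2
    · exact (Finset.mem_filter.mp ha).2
  obtain ⟨M, hg, hs, hcM⟩ := clique_matching G _ hSclique v hSadj
  have humA : u m ∉ A := fun h => X1_ne_u (Finset.filter_subset _ _ h) m rfl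
  have hScard : (insert (u m) A).card = A.card + 1 := Finset.card_insert_of_notMem humA
  have hvS : v ∉ insert (u m) A := by
    intro hv
    rcases Finset.mem_insert.mp hv with h | h
    · exact (mem_XS.mp (mem_XSi.mp hvm).1).1 m h
    · have h1 := (mem_XS.mp (mem_XSi.mp (Finset.filter_subset _ _ h)).1).2
      have h3 := (mem_XS.mp (mem_XSi.mp hvm).1).2
      omega
  have hclique' : G.IsClique ↑(insert v (insert (u m) A)) := by
    rw [Finset.coe_insert]
    exact SimpleGraph.isClique_insert.mpr ⟨hSclique, fun b hb _ => hSadj b hb⟩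
  have hωA := hω _ hclique'
  rw [Finset.card_insert_of_notMem hvS, hScard] at hωA
  exact ⟨M, hg, fun e he => ⟨hsub (hs e he).1, hsub (hs e he).2⟩, by rw [hcM, hScard], by omega⟩

end FanAux

open FanAux in
theorem X3_intersection {V : Type} [Fintype V] [DecidableEq V] (ℓ : ℕ) (hℓ : 6 ≤ ℓ)
    (G : SimpleGraph V) [DecidableRel G.Adj]
    (hcard : Fintype.card V = 10 * ℓ + 1)
    (hF : ¬ Contains (fan ℓ) G)
    (u : Fin 5 → V) (hu : Function.Injective u)
    (huI : (Set.range u).Pairwise fun a b => ¬ G.Adj a b)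
    (h6 : ∀ s : Finset V, (↑s : Set V).Pairwise (fun a b => ¬ G.Adj a b) → s.card ≤ 5)
    (hΔ : ∀ v : V, G.degree v ≤ 2 * ℓ + 3)
    (hω : ∀ s : Finset V, G.IsClique (↑s : Set V) → s.card ≤ 2 * ℓ - 2)
    (hcliq : ∀ m : Fin 5, G.IsClique (↑(insert (u m) (XSi G u 1 m)) : Set V))
    (i j k : Fin 5) (hij : i ≠ j) (hik : i ≠ k) (hjk : j ≠ k)
    (hXi : (XSi G u 1 i).card = 2 * ℓ - 3) (hXj : (XSi G u 1 j).card = 2 * ℓ - 3)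
    (hXk : (XSi G u 1 k).card = 2 * ℓ - 3) :
    XSi G u 3 i ∩ XSi G u 3 j ∩ XSi G u 3 k = ∅ := by
  rw [Finset.eq_empty_iff_forall_notMem]
  intro v hv
  rw [Finset.mem_inter, Finset.mem_inter] at hv
  obtain ⟨⟨hvi, hvj⟩, hvk⟩ := hv
  obtain ⟨Mi, hgi, hsi, hci, hωi⟩ := key_matching hℓ hω hcliq i hvi
  obtain ⟨Mj, hgj, hsj, hcj, hωj⟩ := key_matching hℓ hω hcliq j hvj
  obtain ⟨Mk, hgk, hsk, hck, hωk⟩ := key_matching hℓ hω hcliq k hvk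
  obtain ⟨hgij, hcij⟩ := good_union hgi hgj hsi hsj (C_disj hu hij)
  have hsij : ∀ e ∈ Mi ∪ Mj,
      (e.1 ∈ insert (u i) (XSi G u 1 i) ∪ insert (u j) (XSi G u 1 j)) ∧
      (e.2 ∈ insert (u i) (XSi G u 1 i) ∪ insert (u j) (XSi G u 1 j)) := by
    intro e he
    rcases Finset.mem_union.mp he with h | h
    · exact ⟨Finset.mem_union_left _ (hsi e h).1, Finset.mem_union_left _ (hsi e h).2⟩
    · exact ⟨Finset.mem_union_right _ (hsj e h).1, Finset.mem_union_right _ (hsj e h).2⟩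
  have hdisjk : ∀ w ∈ insert (u i) (XSi G u 1 i) ∪ insert (u j) (XSi G u 1 j),
      w ∉ insert (u k) (XSi G u 1 k) := by
    intro w hw
    rcases Finset.mem_union.mp hw with h | h
    · exact C_disj hu hik w h
    · exact C_disj hu hjk w h
  obtain ⟨hgijk, hcijk⟩ := good_union hgij hgk hsij hsk hdisjk
  have hfan : ¬ (ℓ ≤ (Mi ∪ Mj ∪ Mk).card) := fun h => hF (contains_fan_of_good hgijk h)
  rw [hcijk, hcij, hci, hcj, hck] at hfan
  have habi := Finset.card_filter_add_card_filter_not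
    (s := XSi G u 1 i) (p := fun w => G.Adj v w)
  have habj := Finset.card_filter_add_card_filter_not
    (s := XSi G u 1 j) (p := fun w => G.Adj v w)
  have habk := Finset.card_filter_add_card_filter_not
    (s := XSi G u 1 k) (p := fun w => G.Adj v w)
  rw [hXi] at habi
  rw [hXj] at habj
  rw [hXk] at habk
  set ai := ((XSi G u 1 i).filter (fun w => G.Adj v w)).card
  set aj := ((XSi G u 1 j).filter (fun w => G.Adj v w)).card
  set ak := ((XSi G u 1 k).filter (fun w => G.Adj v w)).card
  set bi := ((XSi G u 1 i).filter (fun w => ¬ G.Adj v w)).card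
  set bj := ((XSi G u 1 j).filter (fun w => ¬ G.Adj v w)).card
  set bk := ((XSi G u 1 k).filter (fun w => ¬ G.Adj v w)).card
  have h1i : 1 ≤ bi := by omega
  have h1j : 1 ≤ bj := by omega
  have h1k : 1 ≤ bk := by omega
  have hcase : (4 ≤ bi ∧ 7 ≤ bj) ∨ (4 ≤ bi ∧ 7 ≤ bk) ∨ (4 ≤ bj ∧ 7 ≤ bi) ∨
      (4 ≤ bj ∧ 7 ≤ bk) ∨ (4 ≤ bk ∧ 7 ≤ bi) ∨ (4 ≤ bk ∧ 7 ≤ bj) := by omega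
  rcases hcase with ⟨h4, h7⟩ | ⟨h4, h7⟩ | ⟨h4, h7⟩ | ⟨h4, h7⟩ | ⟨h4, h7⟩ | ⟨h4, h7⟩
  · exact final hℓ hF hu huI h6 hcliq k i j hik.symm hjk.symm hij
      hXk hXi hXj v hvk hvi hvj h1k h4 h7
  · exact final hℓ hF hu huI h6 hcliq j i k hij.symm hjk hik
      hXj hXi hXk v hvj hvi hvk h1j h4 h7
  · exact final hℓ hF hu huI h6 hcliq k j i hjk.symm hik.symm hij.symm
      hXk hXj hXi v hvk hvj hvi h1k h4 h7
  · exact final hℓ hF hu huI h6 hcliq i j k hij hik hjk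
      hXi hXj hXk v hvi hvj hvk h1i h4 h7
  · exact final hℓ hF hu huI h6 hcliq j k i hjk hij.symm hik.symm
      hXj hXk hXi v hvj hvk hvi h1j h4 h7
  · exact final hℓ hF hu huI h6 hcliq i k j hik hij hjk.symm
      hXi hXk hXj v hvi hvk hvj h1i h4 h7
end
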